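/- arXiv:2109.01324 — 3 statements merged into one kernel-verified Lean document; each statement's English description precedes it below -/
import Mathlib

section
/- Let Γ be a strongly-connected weighted directed graph on n vertices (nonnegative edge weights, no loops) with combinatorial Laplacian L = D − A, where D is the diagonal matrix of out-degrees d_u = Σ_v ω(u,v) and A is the weighted adjacency matrix, and let 𝐆 denote the Moore–Penrose pseudoinverse of L. Then for all vertices u, v: 𝐆(u,v) = (1/(n·Σ_w τ_w²)) · ( Σ_{T₁∪T₂ ∈ 𝔽₂*, u∈T₁, r(T₁)=v} |T₂|·τ_{r(T₂)}·ω(T₁∪T₂) − Σ_{T₁∪T₂ ∈ 𝔽₂*, u∈T₂, r(T₁)=v} |T₁|·τ_{r(T₂)}·ω(T₁∪T₂) ), where 𝔽₂* is the set of rooted spanning 2-forests of Γ, r(Tᵢ) is the root of component Tᵢ, |Tᵢ| its number of vertices, ω(F) = Π_{e∈E(F)} ω(e), and τ_w = Σ_{T ∈ 𝔽₁*, r(T)=w} ω(T) is the total weight of spanning in-trees rooted at w. -/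
open scoped Classical
open Finset Matrix

namespace Paper

variable {V : Type*} [Fintype V] [DecidableEq V]

/-- Out-degree of `u` in the weighted digraph with weight function `ω`. -/
noncomputable def deg (ω : V → V → ℝ) (u : V) : ℝ := ∑ v, ω u v

/-- A weighted digraph is strongly connected if every vertex can reach every other
vertex along edges of positive weight. -/
def StronglyConnected (ω : V → V → ℝ) : Prop :=
  ∀ u v : V, Relation.ReflTransGen (fun a b => 0 < ω a b) u v

/-- The combinatorial Laplacian `L = D - A` of a weighted digraph. -/
noncomputable def lap (ω : V → V → ℝ) : Matrix V V ℝ :=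
  Matrix.of fun u v => (if u = v then deg ω u else 0) - ω u v

/-- The transition probability matrix `P = D⁻¹ A` of the random walk. -/
noncomputable def trans (ω : V → V → ℝ) : Matrix V V ℝ :=
  Matrix.of fun u v => ω u v / deg ω u

/-- `G` is the Moore–Penrose pseudoinverse of `M` (four Penrose conditions). -/
def IsMoorePenrose (M G : Matrix V V ℝ) : Prop :=
  M * G * M = M ∧ G * M * G = G ∧ (M * G)ᵀ = M * G ∧ (G * M)ᵀ = G * M

/-- `v` reaches `r` under iteration of the parent function `f`. -/
def Reaches (f : V → V) (v r : V) : Prop := ∃ k : ℕ, f^[k] v = r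

/-- `f` encodes a spanning in-tree of the weighted digraph `ω` rooted at `r`:
every non-root vertex has its unique out-edge `(v, f v)` an edge of the digraph,
the root is a fixed point, and every vertex reaches the root. -/
def IsInTree (ω : V → V → ℝ) (r : V) (f : V → V) : Prop :=
  f r = r ∧ (∀ v, v ≠ r → 0 < ω v (f v)) ∧ ∀ v, Reaches f v r

/-- The weight of the spanning in-tree encoded by `f` with root `r`. -/
noncomputable def treeWeight (ω : V → V → ℝ) (r : V) (f : V → V) : ℝ :=
  ∏ v ∈ Finset.univ.erase r, ω v (f v)

/-- `τ_r`: total weight of spanning in-trees rooted at `r`. -/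
noncomputable def tau (ω : V → V → ℝ) (r : V) : ℝ :=
  ∑ f ∈ Finset.univ.filter (fun f : V → V => IsInTree ω r f), treeWeight ω r f

/-- `f` encodes a rooted spanning 2-forest with (distinct) roots `r₁`, `r₂`. -/
def IsForest2 (ω : V → V → ℝ) (r₁ r₂ : V) (f : V → V) : Prop :=
  r₁ ≠ r₂ ∧ f r₁ = r₁ ∧ f r₂ = r₂ ∧ (∀ v, v ≠ r₁ → v ≠ r₂ → 0 < ω v (f v)) ∧
    ∀ v, Reaches f v r₁ ∨ Reaches f v r₂

/-- The weight of the rooted spanning 2-forest encoded by `f` with roots `r₁`, `r₂`. -/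
noncomputable def forestWeight (ω : V → V → ℝ) (r₁ r₂ : V) (f : V → V) : ℝ :=
  ∏ v ∈ (Finset.univ.erase r₁).erase r₂, ω v (f v)

/-- The component of the root `b`: vertices reaching `b` under `f`. -/
noncomputable def comp (f : V → V) (b : V) : Finset V :=
  Finset.univ.filter (fun z => Reaches f z b)

/-! ### Undirected weighted graphs, edges as unordered pairs -/

/-- Weighted degree in an undirected weighted graph given by `ωs : Sym2 V → ℝ`. -/
noncomputable def degS (ωs : Sym2 V → ℝ) (u : V) : ℝ := ∑ v, ωs s(u, v)

/-- The volume of an undirected weighted graph. -/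
noncomputable def volS (ωs : Sym2 V → ℝ) : ℝ := ∑ u, degS ωs u

/-- Connectivity of an undirected weighted graph. -/
def ConnectedW (ωs : Sym2 V → ℝ) : Prop :=
  ∀ u v : V, Relation.ReflTransGen (fun a b => 0 < ωs s(a, b)) u v

/-- An edge set `E` is a spanning tree of the weighted undirected graph `ωs`. -/
def IsWTree (ωs : Sym2 V → ℝ) (E : Finset (Sym2 V)) : Prop :=
  (∀ e ∈ E, 0 < ωs e) ∧ (SimpleGraph.fromEdgeSet (E : Set (Sym2 V))).IsAcyclic ∧
    (SimpleGraph.fromEdgeSet (E : Set (Sym2 V))).Connected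

/-- An edge set `E` is a spanning 2-forest of the weighted undirected graph `ωs`
(acyclic, with exactly two connected components). -/
def IsWTwoForest (ωs : Sym2 V → ℝ) (E : Finset (Sym2 V)) : Prop :=
  (∀ e ∈ E, 0 < ωs e) ∧ (SimpleGraph.fromEdgeSet (E : Set (Sym2 V))).IsAcyclic ∧
    Nat.card (SimpleGraph.fromEdgeSet (E : Set (Sym2 V))).ConnectedComponent = 2

/-- The weight of a subgraph given by an edge set. -/
noncomputable def wgt (ωs : Sym2 V → ℝ) (E : Finset (Sym2 V)) : ℝ := ∏ e ∈ E, ωs e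

/-- Total weight of spanning trees of the weighted undirected graph `ωs`. -/
noncomputable def tauW (ωs : Sym2 V → ℝ) : ℝ :=
  ∑ E ∈ Finset.univ.filter (fun E : Finset (Sym2 V) => IsWTree ωs E), wgt ωs E

/-- The combinatorial Laplacian of a weighted undirected graph. -/
noncomputable def lapW (ωs : Sym2 V → ℝ) : Matrix V V ℝ :=
  Matrix.of fun u v => (if u = v then degS ωs u else 0) - ωs s(u, v)

/-! ### Simple graphs -/

/-- An edge set `E` is a spanning tree of the simple graph `G`. -/
def IsSTree (G : SimpleGraph V) (E : Finset (Sym2 V)) : Prop :=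
  (E : Set (Sym2 V)) ⊆ G.edgeSet ∧ (SimpleGraph.fromEdgeSet (E : Set (Sym2 V))).IsAcyclic ∧
    (SimpleGraph.fromEdgeSet (E : Set (Sym2 V))).Connected

/-- An edge set `E` is a spanning 2-forest of the simple graph `G`. -/
def IsSTwoForest (G : SimpleGraph V) (E : Finset (Sym2 V)) : Prop :=
  (E : Set (Sym2 V)) ⊆ G.edgeSet ∧ (SimpleGraph.fromEdgeSet (E : Set (Sym2 V))).IsAcyclic ∧
    Nat.card (SimpleGraph.fromEdgeSet (E : Set (Sym2 V))).ConnectedComponent = 2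

/-- The number of spanning trees of the simple graph `G`. -/
noncomputable def treeCount (G : SimpleGraph V) : ℕ :=
  (Finset.univ.filter (fun E : Finset (Sym2 V) => IsSTree G E)).card

set_option linter.unusedSectionVars false
section AUX
variable {ω : V → V → ℝ}
variable {V : Type*} [Fintype V] [DecidableEq V]

section Reach
variable {f : V → V} {z r a b v w : V}

lemma reaches_self (f : V → V) (v : V) : Reaches f v v := ⟨0, rfl⟩

lemma reaches_trans (h1 : Reaches f a b) (h2 : Reaches f b c) : Reaches f a c := by
  obtain ⟨k, hk⟩ := h1; obtain ⟨m, hm⟩ := h2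
  exact ⟨m + k, by rw [Function.iterate_add_apply, hk, hm]⟩

lemma reaches_fixed (hb : f b = b) (h : Reaches f b r) : b = r := by
  obtain ⟨k, hk⟩ := h; rwa [Function.iterate_fixed hb] at hk

lemma reaches_unique (ha : f a = a) (hb : f b = b) (h1 : Reaches f z a)
    (h2 : Reaches f z b) : a = b := by
  obtain ⟨k, hk⟩ := h1; obtain ⟨m, hm⟩ := h2
  rcases le_total k m with h | h
  · rw [← Nat.sub_add_cancel h, Function.iterate_add_apply, hk,
      Function.iterate_fixed ha] at hm; exact hm
  · rw [← Nat.sub_add_cancel h, Function.iterate_add_apply, hm,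
      Function.iterate_fixed hb] at hk; exact hk.symm

lemma reaches_head (h : Reaches f (f z) r) : Reaches f z r := by
  obtain ⟨k, hk⟩ := h; exact ⟨k + 1, by rw [Function.iterate_succ_apply]; exact hk⟩

lemma reaches_tail (hr : f r = r) (h : Reaches f z r) : Reaches f (f z) r := by
  obtain ⟨k, hk⟩ := h
  cases k with
  | zero => exact ⟨0, by simp only [Function.iterate_zero, id] at hk ⊢; rw [hk, hr]⟩
  | succ k => exact ⟨k, by rwa [Function.iterate_succ_apply] at hk⟩

lemma reaches_update_of_not (h0 : ¬ Reaches f z v) (h : Reaches f z r) :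
    Reaches (Function.update f v w) z r := by
  obtain ⟨k, hk⟩ := h
  induction k generalizing z with
  | zero => exact ⟨0, hk⟩
  | succ k ih =>
    have hz : z ≠ v := fun h => h0 (h ▸ reaches_self f z)
    have h0' : ¬ Reaches f (f z) v := fun h => h0 (reaches_head h)
    have := ih h0' (by rwa [Function.iterate_succ_apply] at hk)
    have hgz : Function.update f v w z = f z := Function.update_of_ne hz _ _
    exact reaches_head (by rwa [hgz])

lemma reaches_update_target (h : Reaches f z v) :
    Reaches (Function.update f v w) z v := by
  obtain ⟨k, hk⟩ := h
  induction k generalizing z with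
  | zero => exact ⟨0, hk⟩
  | succ k ih =>
    by_cases hz : z = v
    · exact hz ▸ reaches_self _ _
    · have := ih (z := f z) (by rwa [Function.iterate_succ_apply] at hk)
      have hgz : Function.update f v w z = f z := Function.update_of_ne hz _ _
      exact reaches_head (by rwa [hgz])

lemma eq_of_periodic_reaches {p : ℕ} (hp : 0 < p) (hw : f^[p] w = w)
    (hb : f b = b) (h : Reaches f w b) : w = b := by
  obtain ⟨m, hm⟩ := h
  rcases Nat.eq_zero_or_pos m with rfl | hm0
  · exact hm
  have h1 : f^[p * m] w = w := by
    rw [Function.iterate_mul]; exact Function.iterate_fixed hw m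
  have h2 : f^[p * m] w = b := by
    have : p * m = (p * m - m) + m := (Nat.sub_add_cancel (Nat.le_mul_of_pos_left m hp)).symm
    rw [this, Function.iterate_add_apply, hm, Function.iterate_fixed hb]
  rw [h1] at h2; exact h2

end Reach

section Forest
variable {ω : V → V → ℝ} {v b u w z : V} {f : V → V}

lemma forest2_symm (h : IsForest2 ω v b f) : IsForest2 ω b v f :=
  ⟨h.1.symm, h.2.2.1, h.2.1, fun z h1 h2 => h.2.2.2.1 z h2 h1,
    fun z => (h.2.2.2.2 z).symm⟩

lemma forestWeight_symm (ω : V → V → ℝ) (v b : V) (f : V → V) :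
    forestWeight ω v b f = forestWeight ω b v f := by
  unfold forestWeight; rw [Finset.erase_right_comm]

lemma F2set_symm (ω : V → V → ℝ) (v b : V) :
    Finset.univ.filter (fun f : V → V => IsForest2 ω v b f)
      = Finset.univ.filter (fun f : V → V => IsForest2 ω b v f) := by
  ext f; simp only [Finset.mem_filter, Finset.mem_univ, true_and]
  exact ⟨forest2_symm, forest2_symm⟩

lemma not_reaches_root (h : IsForest2 ω v b f) : ¬ Reaches f v b :=
  fun hr => h.1 (reaches_fixed h.2.1 hr)

lemma forest2_reach_iff (h : IsForest2 ω v b f) (z : V) :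
    Reaches f z b ↔ ¬ Reaches f z v := by
  constructor
  · intro hb hv
    exact h.1 (reaches_unique h.2.1 h.2.2.1 hv hb)
  · intro hv
    rcases h.2.2.2.2 z with h1 | h1
    · exact absurd h1 hv
    · exact h1

/-- Cut/add-edge bijection: adding an edge from the root `v` into the `b`-component of
a rooted 2-forest with roots `v`, `b` yields a spanning in-tree rooted at `b`. -/
lemma C1 (hnn : ∀ u v, 0 ≤ ω u v) (hvb : v ≠ b) :
    ∑ f ∈ Finset.univ.filter (fun f : V → V => IsForest2 ω v b f),
      ∑ w, (if Reaches f w b then ω v w * forestWeight ω v b f else 0) = tau ω b := by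
  have hstep : ∀ f ∈ Finset.univ.filter (fun f : V → V => IsForest2 ω v b f),
      (∑ w, if Reaches f w b then ω v w * forestWeight ω v b f else 0)
      = ∑ w ∈ Finset.univ.filter (fun w => Reaches f w b ∧ 0 < ω v w),
          ω v w * forestWeight ω v b f := by
    intro f _
    rw [Finset.sum_filter]
    refine Finset.sum_congr rfl fun w _ => ?_
    by_cases h1 : Reaches f w b
    · by_cases h2 : 0 < ω v w
      · simp [h1, h2]
      · have : ω v w = 0 := le_antisymm (not_lt.mp h2) (hnn v w)
        simp [h1, h2, this]
    · simp [h1]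
  rw [Finset.sum_congr rfl hstep,
    Finset.sum_sigma (Finset.univ.filter (fun f : V → V => IsForest2 ω v b f))
      (fun f => Finset.univ.filter (fun w => Reaches f w b ∧ 0 < ω v w))
      (fun p => ω v p.2 * forestWeight ω v b p.1) |>.symm]
  unfold tau
  refine Finset.sum_nbij' (fun p => Function.update p.1 v p.2)
    (fun g => ⟨Function.update g v v, g v⟩) ?_ ?_ ?_ ?_ ?_
  · rintro ⟨f, w⟩ hp
    rw [Finset.mem_sigma, Finset.mem_filter, Finset.mem_filter] at hp
    obtain ⟨⟨-, hf⟩, -, hwb, hvw⟩ := hp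
    dsimp only at hf hwb hvw ⊢
    rw [Finset.mem_filter]
    refine ⟨Finset.mem_univ _, ?_, ?_, ?_⟩
    · rw [Function.update_of_ne (Ne.symm hvb)]; exact hf.2.2.1
    · intro z hz
      by_cases hzv : z = v
      · subst hzv; rw [Function.update_self]; exact hvw
      · rw [Function.update_of_ne hzv]; exact hf.2.2.2.1 z hzv hz
    · -- every vertex reaches b in the new tree
      have hwv : ¬ Reaches f w v := fun h =>
        hf.1 (reaches_unique hf.2.1 hf.2.2.1 h hwb)
      have hwb' : Reaches (Function.update f v w) w b := reaches_update_of_not hwv hwb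
      have hvb' : Reaches (Function.update f v w) v b := by
        refine reaches_head ?_
        rwa [Function.update_self]
      intro z
      rcases hf.2.2.2.2 z with h1 | h1
      · exact reaches_trans (reaches_update_target h1) hvb'
      · have : ¬ Reaches f z v := (forest2_reach_iff hf z).mp h1
        exact reaches_update_of_not this h1
  · intro g hg
    rw [Finset.mem_filter] at hg
    obtain ⟨-, hg⟩ := hg
    have hbv : b ≠ v := Ne.symm hvb
    have hfv : Function.update g v v v = v := Function.update_self _ _ _
    have hgv : ¬ Reaches g (g v) v := by
      rintro ⟨k, hk⟩
      have hper : g^[k+1] v = v := by rw [Function.iterate_succ_apply]; exact hk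
      have : v = b := eq_of_periodic_reaches (Nat.succ_pos k) hper hg.1 (hg.2.2 v)
      exact hvb this
    rw [Finset.mem_sigma, Finset.mem_filter, Finset.mem_filter]
    refine ⟨⟨Finset.mem_univ _, hvb, hfv, ?_, ?_, ?_⟩, Finset.mem_univ _, ?_, ?_⟩
    · show Function.update g v v b = b
      rw [Function.update_of_ne hbv]; exact hg.1
    · intro z hzv hzb
      show 0 < ω z (Function.update g v v z)
      rw [Function.update_of_ne hzv]; exact hg.2.1 z hzb
    · intro z
      by_cases hz : Reaches g z v
      · exact Or.inl (reaches_update_target hz)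
      · exact Or.inr (reaches_update_of_not hz (hg.2.2 z))
    · exact reaches_update_of_not hgv (hg.2.2 (g v))
    · exact hg.2.1 v hvb
  · rintro ⟨f, w⟩ hp
    rw [Finset.mem_sigma, Finset.mem_filter, Finset.mem_filter] at hp
    obtain ⟨⟨-, hf⟩, -, -, -⟩ := hp
    have h1 : Function.update (Function.update f v w) v v = f := by
      rw [Function.update_idem, Function.update_eq_self_iff]; exact hf.2.1.symm
    have h2 : Function.update f v w v = w := Function.update_self _ _ _
    dsimp only
    rw [h1, h2]
  · intro g hg
    show Function.update (Function.update g v v) v (g v) = g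
    rw [Function.update_idem]
    exact Function.update_eq_self v g
  · rintro ⟨f, w⟩ hp
    rw [Finset.mem_sigma, Finset.mem_filter, Finset.mem_filter] at hp
    obtain ⟨⟨-, hf⟩, -, -, -⟩ := hp
    dsimp only at hf ⊢
    unfold treeWeight forestWeight
    have hv : v ∈ Finset.univ.erase b := Finset.mem_erase.mpr ⟨hvb, Finset.mem_univ _⟩
    rw [← Finset.mul_prod_erase _ _ hv, Function.update_self, Finset.erase_right_comm]
    congr 1
    refine Finset.prod_congr rfl fun z hz => ?_
    rw [Finset.mem_erase] at hz
    rw [Function.update_of_ne hz.1]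
/-- Edge-swap data: redirecting the extra edge at a non-root vertex `u`. -/
lemma C2aux {ω : V → V → ℝ} {v b u w : V} {f : V → V}
    (hf : IsForest2 ω v b f) (huv : u ≠ v) (hub : u ≠ b)
    (hru : Reaches f u b) (hrw : Reaches f w v) (hw : 0 < ω u w) :
    IsForest2 ω v b (Function.update f u w) ∧ Reaches (Function.update f u w) u v ∧
      Reaches (Function.update f u w) (f u) b ∧ 0 < ω u (f u) := by
  have hfu_pos : 0 < ω u (f u) := hf.2.2.2.1 u huv hub
  have hgu : Function.update f u w u = w := Function.update_self _ _ _
  have hwu : ¬ Reaches f w u := fun h =>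
    hf.1 (reaches_unique hf.2.1 hf.2.2.1 hrw (reaches_trans h hru))
  have hgw : Reaches (Function.update f u w) w v := reaches_update_of_not hwu hrw
  have hguv : Reaches (Function.update f u w) u v := reaches_head (by rwa [hgu])
  have hfub : Reaches f (f u) b := reaches_tail hf.2.2.1 hru
  have hfuu : ¬ Reaches f (f u) u := by
    rintro ⟨k, hk⟩
    have hper : f^[k+1] u = u := by rw [Function.iterate_succ_apply]; exact hk
    exact hub (eq_of_periodic_reaches (Nat.succ_pos k) hper hf.2.2.1 hru)
  refine ⟨⟨hf.1, ?_, ?_, ?_, ?_⟩, hguv, reaches_update_of_not hfuu hfub, hfu_pos⟩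
  · rw [Function.update_of_ne (Ne.symm huv)]; exact hf.2.1
  · rw [Function.update_of_ne (Ne.symm hub)]; exact hf.2.2.1
  · intro z hzv hzb
    by_cases hzu : z = u
    · subst hzu; rw [hgu]; exact hw
    · rw [Function.update_of_ne hzu]; exact hf.2.2.2.1 z hzv hzb
  · intro z
    by_cases hz : Reaches f z u
    · exact Or.inl (reaches_trans (reaches_update_target hz) hguv)
    · rcases hf.2.2.2.2 z with h1 | h1
      · exact Or.inl (reaches_update_of_not hz h1)
      · exact Or.inr (reaches_update_of_not hz h1)

/-- Edge-swap involution identity. -/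
lemma C2 {ω : V → V → ℝ} (hnn : ∀ u v, 0 ≤ ω u v) {v b u : V}
    (huv : u ≠ v) (hub : u ≠ b) :
    ∑ f ∈ Finset.univ.filter (fun f : V → V => IsForest2 ω v b f ∧ Reaches f u b),
      ∑ w, (if Reaches f w v then ω u w * forestWeight ω v b f else 0)
    = ∑ f ∈ Finset.univ.filter (fun f : V → V => IsForest2 ω v b f ∧ Reaches f u v),
      ∑ w, (if Reaches f w b then ω u w * forestWeight ω v b f else 0) := by
  have hstep : ∀ (r : V) (f : V → V),
      (∑ w, if Reaches f w r then ω u w * forestWeight ω v b f else 0)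
      = ∑ w ∈ Finset.univ.filter (fun w => Reaches f w r ∧ 0 < ω u w),
          ω u w * forestWeight ω v b f := by
    intro r f
    rw [Finset.sum_filter]
    refine Finset.sum_congr rfl fun w _ => ?_
    by_cases h1 : Reaches f w r
    · by_cases h2 : 0 < ω u w
      · simp [h1, h2]
      · have : ω u w = 0 := le_antisymm (not_lt.mp h2) (hnn u w)
        simp [h1, h2, this]
    · simp [h1]
  rw [Finset.sum_congr rfl fun f _ => hstep v f, Finset.sum_congr rfl fun f _ => hstep b f,
    Finset.sum_sigma (Finset.univ.filter (fun f : V → V => IsForest2 ω v b f ∧ Reaches f u b))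
      (fun f => Finset.univ.filter (fun w => Reaches f w v ∧ 0 < ω u w))
      (fun p => ω u p.2 * forestWeight ω v b p.1) |>.symm,
    Finset.sum_sigma (Finset.univ.filter (fun f : V → V => IsForest2 ω v b f ∧ Reaches f u v))
      (fun f => Finset.univ.filter (fun w => Reaches f w b ∧ 0 < ω u w))
      (fun p => ω u p.2 * forestWeight ω v b p.1) |>.symm]
  have hmem : ∀ (w : V) (f : V → V), u ∈ (Finset.univ.erase v).erase b →
      ω u w * forestWeight ω v b f
        = ω u (f u) * forestWeight ω v b (Function.update f u w) := by
    intro w f hu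
    unfold forestWeight
    rw [← Finset.mul_prod_erase _ _ hu, ← Finset.mul_prod_erase _ (fun z => ω z (Function.update f u w z)) hu,
      Function.update_self]
    have : ∏ z ∈ ((Finset.univ.erase v).erase b).erase u, ω z (Function.update f u w z)
        = ∏ z ∈ ((Finset.univ.erase v).erase b).erase u, ω z (f z) := by
      refine Finset.prod_congr rfl fun z hz => ?_
      rw [Finset.mem_erase] at hz
      rw [Function.update_of_ne hz.1]
    rw [this]; ring
  have huvb : u ∈ (Finset.univ.erase v).erase b :=
    Finset.mem_erase.mpr ⟨hub, Finset.mem_erase.mpr ⟨huv, Finset.mem_univ _⟩⟩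
  refine Finset.sum_nbij' (fun p => ⟨Function.update p.1 u p.2, p.1 u⟩)
    (fun p => ⟨Function.update p.1 u p.2, p.1 u⟩) ?_ ?_ ?_ ?_ ?_
  · rintro ⟨f, w⟩ hp
    rw [Finset.mem_sigma, Finset.mem_filter, Finset.mem_filter] at hp
    obtain ⟨⟨-, hf, hru⟩, -, hrw, hpos⟩ := hp
    dsimp only at hf hru hrw hpos ⊢
    obtain ⟨h1, h2, h3, h4⟩ := C2aux hf huv hub hru hrw hpos
    rw [Finset.mem_sigma, Finset.mem_filter, Finset.mem_filter]
    exact ⟨⟨Finset.mem_univ _, h1, h2⟩, Finset.mem_univ _, h3, h4⟩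
  · rintro ⟨f, w⟩ hp
    rw [Finset.mem_sigma, Finset.mem_filter, Finset.mem_filter] at hp
    obtain ⟨⟨-, hf, hru⟩, -, hrw, hpos⟩ := hp
    dsimp only at hf hru hrw hpos ⊢
    obtain ⟨h1, h2, h3, h4⟩ := C2aux (forest2_symm hf) hub huv hru hrw hpos
    rw [Finset.mem_sigma, Finset.mem_filter, Finset.mem_filter]
    exact ⟨⟨Finset.mem_univ _, forest2_symm h1, h2⟩, Finset.mem_univ _, h3, h4⟩
  · rintro ⟨f, w⟩ hp
    rw [Finset.mem_sigma, Finset.mem_filter, Finset.mem_filter] at hp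
    dsimp only
    have h1 : Function.update (Function.update f u w) u (f u) = f := by
      rw [Function.update_idem]; exact Function.update_eq_self u f
    rw [Function.update_self, h1]
  · rintro ⟨f, w⟩ hp
    rw [Finset.mem_sigma, Finset.mem_filter, Finset.mem_filter] at hp
    dsimp only
    have h1 : Function.update (Function.update f u w) u (f u) = f := by
      rw [Function.update_idem]; exact Function.update_eq_self u f
    rw [Function.update_self, h1]
  · rintro ⟨f, w⟩ hp
    dsimp only
    exact hmem w f huvb

end Forest

section Existence
variable {ω : V → V → ℝ}

lemma orbit_mem {f : V → V} {S : Finset V} (hS : ∀ x ∈ S, f x ∈ S) {y : V}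
    (hy : y ∈ S) (k : ℕ) : f^[k] y ∈ S := by
  induction k generalizing y with
  | zero => exact hy
  | succ k ih => rw [Function.iterate_succ_apply]; exact ih (hS y hy)

lemma exists_edge_into {S : Finset V} {a w : V}
    (h : Relation.ReflTransGen (fun x y => 0 < ω x y) a w)
    (ha : a ∉ S) (hw : w ∈ S) : ∃ z x, z ∉ S ∧ x ∈ S ∧ 0 < ω z x := by
  induction h using Relation.ReflTransGen.head_induction_on with
  | refl => exact absurd hw ha
  | @head a' c' hac hcw ih =>
    by_cases hc : c' ∈ S
    · exact ⟨a', c', ha, hc, hac⟩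
    · exact ih hc

lemma exists_intree (hsc : StronglyConnected ω) (w : V) : ∃ f, IsInTree ω w f := by
  have key : ∀ (k : ℕ) (S : Finset V), Sᶜ.card ≤ k → w ∈ S →
      (∃ f : V → V, f w = w ∧ ∀ z ∈ S, f z ∈ S ∧ Reaches f z w ∧ (z ≠ w → 0 < ω z (f z))) →
      ∃ f, IsInTree ω w f := by
    intro k
    induction k with
    | zero =>
      intro S hcard hwS ⟨f, hfw, hf⟩
      have hSuniv : S = Finset.univ := by
        have : Sᶜ = ∅ := Finset.card_eq_zero.mp (Nat.le_zero.mp hcard)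
        rwa [Finset.compl_eq_empty_iff] at this
      exact ⟨f, hfw, fun z hz => ((hf z (hSuniv ▸ Finset.mem_univ z)).2.2 hz),
        fun z => (hf z (hSuniv ▸ Finset.mem_univ z)).2.1⟩
    | succ k ih =>
      intro S hcard hwS ⟨f, hfw, hf⟩
      by_cases hS : Sᶜ = ∅
      · exact ih S (by rw [hS]; simp) hwS ⟨f, hfw, hf⟩
      · obtain ⟨a, ha⟩ := Finset.nonempty_of_ne_empty hS
        rw [Finset.mem_compl] at ha
        obtain ⟨z, x, hz, hx, hzx⟩ := exists_edge_into (hsc a w) ha hwS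
        set g := Function.update f z x with hg
        have hclosed : ∀ y ∈ S, f y ∈ S := fun y hy => (hf y hy).1
        have hnotreach : ∀ y ∈ S, ¬ Reaches f y z := by
          rintro y hy ⟨m, hm⟩
          exact hz (hm ▸ orbit_mem hclosed hy m)
        have hgS : ∀ y ∈ S, Reaches g y w := fun y hy =>
          reaches_update_of_not (hnotreach y hy) (hf y hy).2.1
        have hgx : Reaches g z w := by
          refine reaches_head ?_
          rw [hg, Function.update_self]
          exact hgS x hx
        refine ih (insert z S) ?_ (Finset.mem_insert_of_mem hwS) ⟨g, ?_, ?_⟩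
        · have : (insert z S)ᶜ = Sᶜ.erase z := by
            ext y; simp [Finset.mem_compl, Finset.mem_erase, and_comm, not_or]
          rw [this, Finset.card_erase_of_mem (Finset.mem_compl.mpr hz)]
          omega
        · rw [hg, Function.update_of_ne (by rintro rfl; exact hz hwS)]; exact hfw
        · intro y hy
          rcases Finset.mem_insert.mp hy with rfl | hyS
          · refine ⟨?_, hgx, fun _ => ?_⟩
            · rw [hg, Function.update_self]; exact Finset.mem_insert_of_mem hx
            · rw [hg, Function.update_self]; exact hzx
          · have hyz : y ≠ z := fun h => hz (h ▸ hyS)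
            refine ⟨?_, hgS y hyS, fun hyw => ?_⟩
            · rw [hg, Function.update_of_ne hyz]
              exact Finset.mem_insert_of_mem (hclosed y hyS)
            · rw [hg, Function.update_of_ne hyz]; exact (hf y hyS).2.2 hyw
  refine key (Finset.card ({w} : Finset V)ᶜ) {w} le_rfl (Finset.mem_singleton_self w) ⟨id, rfl, ?_⟩
  intro z hz
  rw [Finset.mem_singleton] at hz
  exact ⟨by rw [hz]; exact Finset.mem_singleton_self w, ⟨0, hz⟩, fun h => absurd hz h⟩

lemma tau_pos (hsc : StronglyConnected ω) (w : V) : 0 < tau ω w := by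
  unfold tau
  refine Finset.sum_pos (fun f hf => ?_) ?_
  · rw [Finset.mem_filter] at hf
    refine Finset.prod_pos fun z hz => ?_
    rw [Finset.mem_erase] at hz
    exact hf.2.2.1 z hz.1
  · obtain ⟨f, hf⟩ := exists_intree hsc w
    exact ⟨f, Finset.mem_filter.mpr ⟨Finset.mem_univ _, hf⟩⟩

lemma kernel_const [Nonempty V] (hnn : ∀ u v, 0 ≤ ω u v) (hsc : StronglyConnected ω)
    (x : V → ℝ) (hx : ∀ u, ∑ w, lap ω u w * x w = 0) :
    ∀ u u' : V, x u = x u' := by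
  obtain ⟨u₀, -, hmax⟩ := Finset.exists_max_image Finset.univ x ⟨Classical.arbitrary V, Finset.mem_univ _⟩
  have hexp : ∀ a, deg ω a * x a = ∑ w, ω a w * x w := by
    intro a
    have h0 := hx a
    simp only [lap, Matrix.of_apply, sub_mul, Finset.sum_sub_distrib] at h0
    rw [sub_eq_zero] at h0
    have h1 : ∑ w, (if a = w then deg ω a else 0) * x w = deg ω a * x a := by
      rw [Finset.sum_congr rfl (fun w _ => by rw [ite_mul, zero_mul] :
        ∀ w ∈ Finset.univ, (if a = w then deg ω a else 0) * x w
          = if a = w then deg ω a * x w else 0), Finset.sum_ite_eq]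
      simp
    rw [← h1, h0]
  have key : ∀ a, x a = x u₀ → ∀ c, 0 < ω a c → x c = x u₀ := by
    intro a ha c hac
    have hsum : ∑ w, ω a w * (x u₀ - x w) = 0 := by
      simp only [mul_sub, Finset.sum_sub_distrib, ← Finset.sum_mul]
      rw [← hexp a, ha]
      unfold deg
      ring
    have hterm := (Finset.sum_eq_zero_iff_of_nonneg (fun w _ =>
      mul_nonneg (hnn a w) (sub_nonneg.mpr (hmax w (Finset.mem_univ w))))).mp hsum
        c (Finset.mem_univ c)
    have : x u₀ - x c = 0 := by
      rcases mul_eq_zero.mp hterm with h | h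
      · exact absurd h (ne_of_gt hac)
      · exact h
    linarith
  have hall : ∀ c, x c = x u₀ := by
    intro c
    have := hsc u₀ c
    induction this with
    | refl => rfl
    | tail h1 h2 ih => exact key _ ih _ h2
  intro u u'
  rw [hall u, hall u']

end Existence

section Star
variable {ω : V → V → ℝ}

/-- The key 2-forest sum: `Qm ω v x = ∑_b τ_b · (weight of 2-forests rooted at v,b with
`x` in the `b`-component)`. -/
noncomputable def Qm (ω : V → V → ℝ) (v x : V) : ℝ :=
  ∑ b, ∑ f ∈ Finset.univ.filter (fun f : V → V => IsForest2 ω v b f),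
    (if Reaches f x b then tau ω b * forestWeight ω v b f else 0)

/-- Per-root-`b` master identity. -/
lemma main_b (hnn : ∀ u v, 0 ≤ ω u v) (u v b : V) :
    (∑ f ∈ Finset.univ.filter (fun f : V → V => IsForest2 ω v b f),
      (if Reaches f u b then deg ω u * forestWeight ω v b f else 0))
    - (∑ f ∈ Finset.univ.filter (fun f : V → V => IsForest2 ω v b f),
        ∑ w, (if Reaches f w b then ω u w * forestWeight ω v b f else 0))
    = (if u = v then (if b = v then 0 else -(tau ω b)) else (if b = u then tau ω v else 0)) := by
  by_cases hbv : b = v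
  · subst hbv
    have hempty : Finset.univ.filter (fun f : V → V => IsForest2 ω b b f) = ∅ := by
      ext f; simp [IsForest2]
    rw [hempty]
    simp only [Finset.sum_empty, sub_zero, if_pos rfl]
    by_cases hub : u = b
    · simp [hub]
    · simp [hub, Ne.symm hub]
  · have hvb : v ≠ b := fun h => hbv h.symm
    by_cases huv : u = v
    · subst huv
      have h1 : ∑ f ∈ Finset.univ.filter (fun f : V → V => IsForest2 ω u b f),
          (if Reaches f u b then deg ω u * forestWeight ω u b f else 0) = 0 := by
        refine Finset.sum_eq_zero fun f hf => ?_
        rw [Finset.mem_filter] at hf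
        rw [if_neg (not_reaches_root hf.2)]
      rw [h1, C1 hnn hvb, zero_sub, if_pos rfl, if_neg hbv]
    · -- u ≠ v, b ≠ v
      have hsplit1 : ∀ f ∈ Finset.univ.filter (fun f : V → V => IsForest2 ω v b f),
          (if Reaches f u b then deg ω u * forestWeight ω v b f else 0)
          = (if Reaches f u b then (∑ x, if Reaches f x b then ω u x * forestWeight ω v b f else 0) else 0)
            + (if Reaches f u b then (∑ x, if Reaches f x v then ω u x * forestWeight ω v b f else 0) else 0) := by
        intro f hf
        rw [Finset.mem_filter] at hf
        by_cases hu : Reaches f u b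
        · simp only [hu, if_true]
          rw [← Finset.sum_add_distrib]
          unfold deg
          rw [Finset.sum_mul]
          refine Finset.sum_congr rfl fun x _ => ?_
          by_cases hx : Reaches f x b
          · have : ¬ Reaches f x v := (forest2_reach_iff hf.2 x).mp hx
            simp [hx, this]
          · have : Reaches f x v := (hf.2.2.2.2.2 x).resolve_right hx
            simp [hx, this]
        · simp [hu]
      have hsplit2 : ∀ f ∈ Finset.univ.filter (fun f : V → V => IsForest2 ω v b f),
          (∑ w, if Reaches f w b then ω u w * forestWeight ω v b f else 0)
          = (if Reaches f u b then (∑ x, if Reaches f x b then ω u x * forestWeight ω v b f else 0) else 0)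
            + (if Reaches f u v then (∑ x, if Reaches f x b then ω u x * forestWeight ω v b f else 0) else 0) := by
        intro f hf
        rw [Finset.mem_filter] at hf
        by_cases hu : Reaches f u b
        · have : ¬ Reaches f u v := (forest2_reach_iff hf.2 u).mp hu
          simp [hu, this]
        · have : Reaches f u v := (hf.2.2.2.2.2 u).resolve_right hu
          simp [hu, this]
      rw [Finset.sum_congr rfl hsplit1, Finset.sum_congr rfl hsplit2,
        Finset.sum_add_distrib, Finset.sum_add_distrib]
      have hfilter : ∀ (p : (V → V) → Prop) (g : (V → V) → ℝ),
          ∑ f ∈ Finset.univ.filter (fun f : V → V => IsForest2 ω v b f),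
            (if p f then g f else 0)
          = ∑ f ∈ Finset.univ.filter (fun f : V → V => IsForest2 ω v b f ∧ p f), g f := by
        intro p g
        rw [← Finset.sum_filter, Finset.filter_filter]
      rw [hfilter (fun f => Reaches f u b), hfilter (fun f => Reaches f u b)]
      have h4 := hfilter (fun f => Reaches f u v)
        (fun f => ∑ x, if Reaches f x b then ω u x * forestWeight ω v b f else 0)
      rw [h4]
      rw [add_sub_add_left_eq_sub]
      rw [if_neg huv]
      by_cases hbu : b = u
      · subst hbu
        have h3 : ∑ f ∈ Finset.univ.filter (fun f : V → V => IsForest2 ω v b f ∧ Reaches f b v),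
            (∑ x, if Reaches f x b then ω b x * forestWeight ω v b f else 0) = 0 := by
          refine Finset.sum_eq_zero fun f hf => ?_
          rw [Finset.mem_filter] at hf
          exact absurd (reaches_fixed hf.2.1.2.2.1 hf.2.2) huv
        have h5 : Finset.univ.filter (fun f : V → V => IsForest2 ω v b f ∧ Reaches f b b)
            = Finset.univ.filter (fun f : V → V => IsForest2 ω b v f) := by
          ext f
          simp only [Finset.mem_filter, Finset.mem_univ, true_and]
          exact ⟨fun h => forest2_symm h.1, fun h => ⟨forest2_symm h, reaches_self f b⟩⟩
        rw [h3, h5, sub_zero, if_pos rfl]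
        rw [← C1 hnn (huv : b ≠ v)]
        refine Finset.sum_congr rfl fun f hf => ?_
        refine Finset.sum_congr rfl fun x _ => ?_
        rw [forestWeight_symm ω v b]
      · have hub : u ≠ b := fun h => hbu h.symm
        rw [if_neg hbu, ← C2 hnn huv hub, sub_eq_zero]
/-- The master identity: `L · Qm = τ τᵀ - (∑ τ²) I` entrywise. -/
lemma star (hnn : ∀ u v, 0 ≤ ω u v) (u v : V) :
    ∑ w, lap ω u w * Qm ω v w
      = tau ω u * tau ω v - (if u = v then ∑ b, tau ω b ^ 2 else 0) := by
  have h1 : ∑ w, lap ω u w * Qm ω v w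
      = deg ω u * Qm ω v u - ∑ w, ω u w * Qm ω v w := by
    simp only [lap, Matrix.of_apply, sub_mul, Finset.sum_sub_distrib]
    congr 1
    rw [Finset.sum_congr rfl (fun w _ => by rw [ite_mul, zero_mul] :
      ∀ w ∈ Finset.univ, (if u = w then deg ω u else 0) * Qm ω v w
        = if u = w then deg ω u * Qm ω v w else 0), Finset.sum_ite_eq]
    simp
  have hA : deg ω u * Qm ω v u = ∑ b, tau ω b *
      ∑ f ∈ Finset.univ.filter (fun f : V → V => IsForest2 ω v b f),
        (if Reaches f u b then deg ω u * forestWeight ω v b f else 0) := by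
    unfold Qm
    rw [Finset.mul_sum]
    refine Finset.sum_congr rfl fun b _ => ?_
    rw [Finset.mul_sum, Finset.mul_sum]
    refine Finset.sum_congr rfl fun f _ => ?_
    by_cases h : Reaches f u b <;> simp [h] <;> ring
  have hB : ∑ w, ω u w * Qm ω v w = ∑ b, tau ω b *
      ∑ f ∈ Finset.univ.filter (fun f : V → V => IsForest2 ω v b f),
        ∑ w, (if Reaches f w b then ω u w * forestWeight ω v b f else 0) := by
    unfold Qm
    simp only [Finset.mul_sum]
    rw [Finset.sum_comm]
    refine Finset.sum_congr rfl fun b _ => ?_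
    rw [Finset.sum_comm]
    refine Finset.sum_congr rfl fun f _ => ?_
    refine Finset.sum_congr rfl fun w _ => ?_
    by_cases h : Reaches f w b <;> simp [h] <;> ring
  rw [h1, hA, hB, ← Finset.sum_sub_distrib]
  have h2 : ∀ b : V, tau ω b *
      (∑ f ∈ Finset.univ.filter (fun f : V → V => IsForest2 ω v b f),
        (if Reaches f u b then deg ω u * forestWeight ω v b f else 0))
      - tau ω b * (∑ f ∈ Finset.univ.filter (fun f : V → V => IsForest2 ω v b f),
        ∑ w, (if Reaches f w b then ω u w * forestWeight ω v b f else 0))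
      = tau ω b * (if u = v then (if b = v then 0 else -(tau ω b))
          else (if b = u then tau ω v else 0)) := by
    intro b
    rw [← mul_sub, main_b hnn u v b]
  rw [Finset.sum_congr rfl fun b _ => h2 b]
  by_cases huv : u = v
  · subst huv
    simp only [eq_self_iff_true, if_true]
    have h3 : ∀ b : V, tau ω b * (if b = u then 0 else -(tau ω b))
        = (if b = u then tau ω b ^ 2 else 0) - tau ω b ^ 2 := by
      intro b; by_cases h : b = u <;> simp [h] <;> ring
    rw [Finset.sum_congr rfl fun b _ => h3 b, Finset.sum_sub_distrib,
      Finset.sum_ite_eq' Finset.univ u (fun b => tau ω b ^ 2)]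
    simp [sq]
  · simp only [if_neg huv]
    have h3 : ∀ b : V, tau ω b * (if b = u then tau ω v else 0)
        = (if b = u then tau ω u * tau ω v else 0) := by
      intro b; by_cases h : b = u <;> simp [h]
    rw [Finset.sum_congr rfl fun b _ => h3 b,
      Finset.sum_ite_eq' Finset.univ u (fun _ => tau ω u * tau ω v)]
    simp

end Star

section LinAlg
variable {ω : V → V → ℝ}

lemma lap_row_sum (ω : V → V → ℝ) (u : V) : ∑ w, lap ω u w = 0 := by
  simp only [lap, Matrix.of_apply, Finset.sum_sub_distrib]
  rw [Finset.sum_ite_eq Finset.univ u (fun _ => deg ω u)]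
  simp [deg]

lemma GL_entry [Nonempty V] (hnn : ∀ u v, 0 ≤ ω u v) (hsc : StronglyConnected ω)
    (G : Matrix V V ℝ) (hG : IsMoorePenrose (lap ω) G) (u v : V) :
    (G * lap ω) u v = (if u = v then 1 else 0) - 1 / (Fintype.card V : ℝ) := by
  set N : Matrix V V ℝ := 1 - G * lap ω with hNdef
  have hN : lap ω * N = 0 := by
    rw [hNdef, Matrix.mul_sub, Matrix.mul_one, ← Matrix.mul_assoc, hG.1, sub_self]
  have hcol : ∀ j u u', N u j = N u' j := by
    intro j u u'
    refine kernel_const hnn hsc (fun w => N w j) (fun a => ?_) u u'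
    have h0 : (lap ω * N) a j = 0 := by rw [hN]; simp
    rwa [Matrix.mul_apply] at h0
  have hsymm : ∀ u j, N u j = N j u := by
    intro u j
    have h0 := congrFun (congrFun hG.2.2.2 j) u
    rw [Matrix.transpose_apply] at h0
    simp only [hNdef, Matrix.sub_apply, Matrix.one_apply, h0]
    by_cases h : u = j
    · subst h; rfl
    · rw [if_neg h, if_neg (Ne.symm h)]
  have hrow : ∀ u, ∑ j, N u j = 1 := by
    intro u
    simp only [hNdef, Matrix.sub_apply, Finset.sum_sub_distrib]
    have h1 : ∑ j, (1 : Matrix V V ℝ) u j = 1 := by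
      simp only [Matrix.one_apply]
      rw [Finset.sum_ite_eq Finset.univ u (fun _ => (1:ℝ))]
      simp
    have h2 : ∑ j, (G * lap ω) u j = 0 := by
      have e : ∀ j, (G * lap ω) u j = ∑ w, G u w * lap ω w j :=
        fun j => Matrix.mul_apply
      rw [Finset.sum_congr rfl fun j _ => e j, Finset.sum_comm]
      have e2 : ∀ w, ∑ j, G u w * lap ω w j = 0 := by
        intro w; rw [← Finset.mul_sum, lap_row_sum ω w, mul_zero]
      rw [Finset.sum_congr rfl fun w _ => e2 w]
      simp
    rw [h1, h2, sub_zero]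
  obtain ⟨u₀⟩ := ‹Nonempty V›
  have hconst : ∀ a j, N a j = N u₀ u₀ := fun a j =>
    (hcol j a u₀).trans ((hsymm u₀ j).trans (hcol u₀ j u₀))
  have hcard : (0:ℝ) < (Fintype.card V : ℝ) := by exact_mod_cast Fintype.card_pos
  have hval : N u₀ u₀ = 1 / (Fintype.card V : ℝ) := by
    have hsum := hrow u₀
    rw [Finset.sum_congr rfl fun j _ => hconst u₀ j, Finset.sum_const,
      nsmul_eq_mul, Finset.card_univ] at hsum
    rw [eq_div_iff (ne_of_gt hcard), mul_comm]
    exact hsum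
  have hNv : N u v = 1 / (Fintype.card V : ℝ) := (hconst u v).trans hval
  have h3 : (G * lap ω) u v = (1 : Matrix V V ℝ) u v - N u v := by
    simp [hNdef]
  rw [h3, hNv, Matrix.one_apply]

lemma lap_tau [Nonempty V] (hnn : ∀ u v, 0 ≤ ω u v) (hsc : StronglyConnected ω) (c : V) :
    ∑ w, tau ω w * lap ω w c = 0 := by
  have hdet : (lap ω).det = 0 := by
    rw [← Matrix.exists_mulVec_eq_zero_iff]
    refine ⟨fun _ => 1, ?_, ?_⟩
    · intro h
      have := congrFun h (Classical.arbitrary V)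
      simp at this
    · funext a
      simp only [Matrix.mulVec, dotProduct, mul_one]
      exact lap_row_sum ω a
  have hdetT : (lap ω)ᵀ.det = 0 := by rw [Matrix.det_transpose]; exact hdet
  obtain ⟨y, hy0, hyL⟩ := Matrix.exists_mulVec_eq_zero_iff.mpr hdetT
  have hy : ∀ c, ∑ u, y u * lap ω u c = 0 := by
    intro c
    have h0 := congrFun hyL c
    simp only [Matrix.mulVec, dotProduct, Matrix.transpose_apply, Pi.zero_apply] at h0
    rw [← h0]
    exact Finset.sum_congr rfl fun u _ => mul_comm _ _
  have hts : (0:ℝ) < ∑ b, tau ω b ^ 2 := by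
    refine Finset.sum_pos (fun b _ => ?_) ⟨Classical.arbitrary V, Finset.mem_univ _⟩
    exact pow_pos (tau_pos hsc b) 2
  have key : ∀ v, (∑ a, y a * tau ω a) * tau ω v = (∑ b, tau ω b ^ 2) * y v := by
    intro v
    have h1 : ∑ a, y a * (∑ w, lap ω a w * Qm ω v w) = 0 := by
      have e1 : ∀ a, y a * (∑ w, lap ω a w * Qm ω v w)
          = ∑ w, y a * lap ω a w * Qm ω v w := by
        intro a; rw [Finset.mul_sum]; exact Finset.sum_congr rfl fun w _ => by ring
      rw [Finset.sum_congr rfl fun a _ => e1 a, Finset.sum_comm]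
      have e2 : ∀ w, ∑ a, y a * lap ω a w * Qm ω v w = 0 := by
        intro w; rw [← Finset.sum_mul, hy w, zero_mul]
      rw [Finset.sum_congr rfl fun w _ => e2 w]
      simp
    rw [Finset.sum_congr rfl fun a _ => by rw [star hnn a v]] at h1
    have e4 : ∀ a, y a * (tau ω a * tau ω v - (if a = v then ∑ b, tau ω b ^ 2 else 0))
        = y a * (tau ω a * tau ω v) - y a * (if a = v then ∑ b, tau ω b ^ 2 else 0) :=
      fun a => by ring
    rw [Finset.sum_congr rfl fun a _ => e4 a, Finset.sum_sub_distrib] at h1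
    have h2 : ∑ a, y a * (tau ω a * tau ω v) = (∑ a, y a * tau ω a) * tau ω v := by
      rw [Finset.sum_mul]
      exact Finset.sum_congr rfl fun a _ => by ring
    have h3 : ∑ a, y a * (if a = v then ∑ b, tau ω b ^ 2 else 0)
        = (∑ b, tau ω b ^ 2) * y v := by
      have e : ∀ a, y a * (if a = v then ∑ b, tau ω b ^ 2 else 0)
          = (if a = v then y a * ∑ b, tau ω b ^ 2 else 0) := by
        intro a; by_cases h : a = v <;> simp [h]
      rw [Finset.sum_congr rfl fun a _ => e a,
        Finset.sum_ite_eq' Finset.univ v (fun a => y a * ∑ b, tau ω b ^ 2)]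
      simp [mul_comm]
    rw [h2, h3, sub_eq_zero] at h1
    exact h1
  have hyt : (∑ a, y a * tau ω a) ≠ 0 := by
    intro h0
    apply hy0
    funext a
    have hk := key a
    rw [h0, zero_mul] at hk
    rcases mul_eq_zero.mp hk.symm with h | h
    · exact absurd h (ne_of_gt hts)
    · exact h
  have htau : ∀ a, tau ω a
      = ((∑ b, tau ω b ^ 2) / (∑ a, y a * tau ω a)) * y a := by
    intro a
    rw [div_mul_eq_mul_div, eq_comm, div_eq_iff hyt, mul_comm (tau ω a)]
    exact (key a).symm
  have e3 : ∀ w, tau ω w * lap ω w c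
      = ((∑ b, tau ω b ^ 2) / (∑ a, y a * tau ω a)) * (y w * lap ω w c) := by
    intro w; rw [htau w]; ring
  rw [Finset.sum_congr rfl fun w _ => e3 w, ← Finset.mul_sum, hy c, mul_zero]

lemma G_tau [Nonempty V] (hnn : ∀ u v, 0 ≤ ω u v) (hsc : StronglyConnected ω)
    (G : Matrix V V ℝ) (hG : IsMoorePenrose (lap ω) G) (u : V) :
    ∑ w, G u w * tau ω w = 0 := by
  have hsym : ∀ x w, (lap ω * G) x w = (lap ω * G) w x := by
    intro x w
    have h0 := congrFun (congrFun hG.2.2.1 w) x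
    rw [Matrix.transpose_apply] at h0
    exact h0
  have key2 : ∀ x, ∑ w, (lap ω * G) x w * tau ω w = 0 := by
    intro x
    have e1 : ∀ w, (lap ω * G) x w * tau ω w
        = ∑ c, G c x * (tau ω w * lap ω w c) := by
      intro w
      rw [hsym x w, Matrix.mul_apply, Finset.sum_mul]
      exact Finset.sum_congr rfl fun c _ => by ring
    rw [Finset.sum_congr rfl fun w _ => e1 w, Finset.sum_comm]
    have e2 : ∀ c, ∑ w, G c x * (tau ω w * lap ω w c) = 0 := by
      intro c
      rw [← Finset.mul_sum, lap_tau hnn hsc c, mul_zero]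
    rw [Finset.sum_congr rfl fun c _ => e2 c]
    simp
  have hGe : G = G * (lap ω * G) := by rw [← Matrix.mul_assoc, hG.2.1]
  have e3 : ∀ w, G u w * tau ω w = ∑ x, G u x * ((lap ω * G) x w * tau ω w) := by
    intro w
    conv_lhs => rw [hGe]
    rw [Matrix.mul_apply, Finset.sum_mul]
    exact Finset.sum_congr rfl fun x _ => by ring
  rw [Finset.sum_congr rfl fun w _ => e3 w, Finset.sum_comm]
  have e4 : ∀ x, ∑ w, G u x * ((lap ω * G) x w * tau ω w) = 0 := by
    intro x
    rw [← Finset.mul_sum, key2 x, mul_zero]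
  rw [Finset.sum_congr rfl fun x _ => e4 x]
  simp

end LinAlg

end AUX

/-- **Forest formula for the combinatorial Green's function of a digraph.**
For a strongly-connected weighted digraph, the Moore–Penrose pseudoinverse `G` of the
combinatorial Laplacian `L = D - A` is given by an enumeration of rooted spanning
2-forests.  Here a rooted spanning 2-forest is encoded by its two roots `v`, `b`
(with `r(T₁) = v`, `r(T₂) = b`) together with the parent function `f`. -/
theorem combinatorial_green_forest_formula
    {V : Type*} [Fintype V] [DecidableEq V]
    (ω : V → V → ℝ) (hnn : ∀ u v, 0 ≤ ω u v) (hloop : ∀ v, ω v v = 0)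
    (hsc : StronglyConnected ω)
    (G : Matrix V V ℝ) (hG : IsMoorePenrose (lap ω) G)
    (u v : V) :
    G u v = (1 / ((Fintype.card V : ℝ) * ∑ w, tau ω w ^ 2)) *
      ((∑ b : V, ∑ f ∈ Finset.univ.filter
          (fun f : V → V => IsForest2 ω v b f ∧ Reaches f u v),
          ((comp f b).card : ℝ) * tau ω b * forestWeight ω v b f)
       - (∑ b : V, ∑ f ∈ Finset.univ.filter
          (fun f : V → V => IsForest2 ω v b f ∧ Reaches f u b),
          ((comp f v).card : ℝ) * tau ω b * forestWeight ω v b f)) := by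
  haveI : Nonempty V := ⟨u⟩
  have hts : (0:ℝ) < ∑ b, tau ω b ^ 2 := by
    refine Finset.sum_pos (fun b _ => ?_) ⟨u, Finset.mem_univ _⟩
    exact pow_pos (tau_pos hsc b) 2
  have hcard : (0:ℝ) < (Fintype.card V : ℝ) := by exact_mod_cast Fintype.card_pos
  -- Step 1: express `G u v` through `Qm`.
  have e1 : ∑ w, (G * lap ω) u w * Qm ω v w
      = Qm ω v u - (1 / (Fintype.card V : ℝ)) * ∑ z : V, Qm ω v z := by
    rw [Finset.sum_congr rfl fun w _ => by rw [GL_entry hnn hsc G hG u w]]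
    have e : ∀ w, ((if u = w then (1:ℝ) else 0) - 1 / (Fintype.card V : ℝ)) * Qm ω v w
        = (if u = w then Qm ω v w else 0) - (1 / (Fintype.card V:ℝ)) * Qm ω v w := by
      intro w
      by_cases h : u = w
      · rw [if_pos h, if_pos h]; ring
      · rw [if_neg h, if_neg h]; ring
    rw [Finset.sum_congr rfl fun w _ => e w, Finset.sum_sub_distrib,
      Finset.sum_ite_eq Finset.univ u (fun w => Qm ω v w), ← Finset.mul_sum]
    simp
  have e2 : ∑ w, (G * lap ω) u w * Qm ω v w = -(∑ b, tau ω b ^ 2) * G u v := by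
    have ea : ∀ w, (G * lap ω) u w * Qm ω v w
        = ∑ a, G u a * (lap ω a w * Qm ω v w) := by
      intro w
      rw [Matrix.mul_apply, Finset.sum_mul]
      exact Finset.sum_congr rfl fun a _ => by ring
    rw [Finset.sum_congr rfl fun w _ => ea w, Finset.sum_comm]
    have eb : ∀ a, ∑ w, G u a * (lap ω a w * Qm ω v w)
        = G u a * (tau ω a * tau ω v)
          - G u a * (if a = v then ∑ b, tau ω b ^ 2 else 0) := by
      intro a
      rw [← Finset.mul_sum, star hnn a v]
      ring
    rw [Finset.sum_congr rfl fun a _ => eb a, Finset.sum_sub_distrib]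
    have ec : ∑ a, G u a * (tau ω a * tau ω v)
        = (∑ a, G u a * tau ω a) * tau ω v := by
      rw [Finset.sum_mul]
      exact Finset.sum_congr rfl fun a _ => by ring
    have ed : ∑ a, G u a * (if a = v then ∑ b, tau ω b ^ 2 else 0)
        = G u v * ∑ b, tau ω b ^ 2 := by
      have e : ∀ a, G u a * (if a = v then ∑ b, tau ω b ^ 2 else 0)
          = (if a = v then G u a * ∑ b, tau ω b ^ 2 else 0) := by
        intro a
        by_cases h : a = v
        · simp [h]
        · simp [h]
      rw [Finset.sum_congr rfl fun a _ => e a,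
        Finset.sum_ite_eq' Finset.univ v (fun a => G u a * ∑ b, tau ω b ^ 2)]
      simp
    rw [ec, ed, G_tau hnn hsc G hG u, zero_mul, zero_sub]
    ring
  have h1 : (∑ b, tau ω b ^ 2) * G u v
      = (1 / (Fintype.card V:ℝ)) * (∑ z : V, Qm ω v z) - Qm ω v u := by
    have h0 := e2.symm.trans e1
    linarith [h0]
  have hGuv : G u v = (1 / (∑ b, tau ω b ^ 2)) *
      ((1 / (Fintype.card V:ℝ)) * (∑ z : V, Qm ω v z) - Qm ω v u) := by
    rw [one_div]
    conv_lhs => rw [(inv_mul_cancel_left₀ (ne_of_gt hts) (G u v)).symm]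
    rw [h1]
  -- Step 2: convert the forest sums to `Qm`.
  have hcard_sum : ∀ (f : V → V) (r : V) (c : ℝ), ((comp f r).card : ℝ) * c
      = ∑ z : V, (if Reaches f z r then c else 0) := by
    intro f r c
    rw [← Finset.sum_filter, Finset.sum_const, nsmul_eq_mul]
    rfl
  have conv1 : ∀ b, (∑ f ∈ Finset.univ.filter
        (fun f : V → V => IsForest2 ω v b f ∧ Reaches f u v),
        ((comp f b).card : ℝ) * tau ω b * forestWeight ω v b f)
      = ∑ f ∈ Finset.univ.filter (fun f : V → V => IsForest2 ω v b f), ∑ z : V,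
          (if Reaches f u v ∧ Reaches f z b
            then tau ω b * forestWeight ω v b f else 0) := by
    intro b
    rw [← Finset.filter_filter, Finset.sum_filter]
    refine Finset.sum_congr rfl fun f _ => ?_
    by_cases hp : Reaches f u v
    · rw [if_pos hp, mul_assoc, hcard_sum f b (tau ω b * forestWeight ω v b f)]
      refine Finset.sum_congr rfl fun z _ => ?_
      by_cases hz : Reaches f z b
      · simp [hz, hp]
      · simp [hz, hp]
    · rw [if_neg hp]
      symm
      refine Finset.sum_eq_zero fun z _ => ?_
      simp [hp]
  have conv2 : ∀ b, (∑ f ∈ Finset.univ.filter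
        (fun f : V → V => IsForest2 ω v b f ∧ Reaches f u b),
        ((comp f v).card : ℝ) * tau ω b * forestWeight ω v b f)
      = ∑ f ∈ Finset.univ.filter (fun f : V → V => IsForest2 ω v b f), ∑ z : V,
          (if Reaches f u b ∧ Reaches f z v
            then tau ω b * forestWeight ω v b f else 0) := by
    intro b
    rw [← Finset.filter_filter, Finset.sum_filter]
    refine Finset.sum_congr rfl fun f _ => ?_
    by_cases hp : Reaches f u b
    · rw [if_pos hp, mul_assoc, hcard_sum f v (tau ω b * forestWeight ω v b f)]
      refine Finset.sum_congr rfl fun z _ => ?_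
      by_cases hz : Reaches f z v
      · simp [hz, hp]
      · simp [hz, hp]
    · rw [if_neg hp]
      symm
      refine Finset.sum_eq_zero fun z _ => ?_
      simp [hp]
  have per_b : ∀ b, (∑ f ∈ Finset.univ.filter (fun f : V → V => IsForest2 ω v b f), ∑ z : V,
          (if Reaches f u v ∧ Reaches f z b
            then tau ω b * forestWeight ω v b f else 0))
      - (∑ f ∈ Finset.univ.filter (fun f : V → V => IsForest2 ω v b f), ∑ z : V,
          (if Reaches f u b ∧ Reaches f z v
            then tau ω b * forestWeight ω v b f else 0))
      = (∑ f ∈ Finset.univ.filter (fun f : V → V => IsForest2 ω v b f), ∑ z : V,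
          (if Reaches f z b then tau ω b * forestWeight ω v b f else 0))
        - (∑ f ∈ Finset.univ.filter (fun f : V → V => IsForest2 ω v b f), ∑ z : V,
          (if Reaches f u b then tau ω b * forestWeight ω v b f else 0)) := by
    intro b
    simp only [← Finset.sum_sub_distrib]
    refine Finset.sum_congr rfl fun f hf => ?_
    rw [Finset.mem_filter] at hf
    refine Finset.sum_congr rfl fun z _ => ?_
    by_cases hub : Reaches f u b
    · have huvf : ¬ Reaches f u v := (forest2_reach_iff hf.2 u).mp hub
      by_cases hzb : Reaches f z b
      · have : ¬ Reaches f z v := (forest2_reach_iff hf.2 z).mp hzb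
        simp [hub, huvf, hzb, this]
      · have : Reaches f z v := (hf.2.2.2.2.2 z).resolve_right hzb
        simp [hub, huvf, hzb, this]
    · have huvf : Reaches f u v := (hf.2.2.2.2.2 u).resolve_right hub
      by_cases hzb : Reaches f z b
      · have : ¬ Reaches f z v := (forest2_reach_iff hf.2 z).mp hzb
        simp [hub, huvf, hzb, this]
      · have : Reaches f z v := (hf.2.2.2.2.2 z).resolve_right hzb
        simp [hub, huvf, hzb, this]
  have hApart : ∑ b, (∑ f ∈ Finset.univ.filter (fun f : V → V => IsForest2 ω v b f), ∑ z : V,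
        (if Reaches f z b then tau ω b * forestWeight ω v b f else 0))
      = ∑ z : V, Qm ω v z := by
    unfold Qm
    rw [Finset.sum_comm]
    exact Finset.sum_congr rfl fun b _ => Finset.sum_comm
  have hBpart : ∑ b, (∑ f ∈ Finset.univ.filter (fun f : V → V => IsForest2 ω v b f), ∑ z : V,
        (if Reaches f u b then tau ω b * forestWeight ω v b f else 0))
      = (Fintype.card V : ℝ) * Qm ω v u := by
    unfold Qm
    rw [Finset.mul_sum]
    refine Finset.sum_congr rfl fun b _ => ?_
    rw [Finset.mul_sum]
    refine Finset.sum_congr rfl fun f _ => ?_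
    rw [Finset.sum_const, nsmul_eq_mul, Finset.card_univ]
  have hRHS : (∑ b, ∑ f ∈ Finset.univ.filter
        (fun f : V → V => IsForest2 ω v b f ∧ Reaches f u v),
        ((comp f b).card : ℝ) * tau ω b * forestWeight ω v b f)
      - (∑ b, ∑ f ∈ Finset.univ.filter
        (fun f : V → V => IsForest2 ω v b f ∧ Reaches f u b),
        ((comp f v).card : ℝ) * tau ω b * forestWeight ω v b f)
      = (∑ z : V, Qm ω v z) - (Fintype.card V : ℝ) * Qm ω v u := by
    rw [Finset.sum_congr rfl fun b _ => conv1 b, Finset.sum_congr rfl fun b _ => conv2 b,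
      ← Finset.sum_sub_distrib, Finset.sum_congr rfl fun b _ => per_b b,
      Finset.sum_sub_distrib, hApart, hBpart]
  rw [hRHS, hGuv]
  have hn : (Fintype.card V : ℝ) ≠ 0 := ne_of_gt hcard
  have hS : (∑ b, tau ω b ^ 2) ≠ 0 := ne_of_gt hts
  apply mul_left_cancel₀ (mul_ne_zero hn hS)
  field_simp

end Paper
end

section
/- Let Γ be a connected simple (undirected, unweighted, loopless) graph on n vertices with combinatorial Laplacian L = D − A, and let 𝐆 denote the Moore–Penrose pseudoinverse of L. Then for all vertices u, v: 𝐆(u,v) = (1/(n²τ)) · ( Σ_{T₁∪T₂ ∈ 𝔽₂, u,v ∈ T₁} |T₂|² − Σ_{T₁∪T₂ ∈ 𝔽₂, u ∈ T₁, v ∈ T₂} |T₁|·|T₂| ), where τ is the number of spanning trees of Γ and 𝔽₂ is the set of (unrooted) spanning 2-forests of Γ, with |Tᵢ| the number of vertices of component Tᵢ. -/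
/-!
Let `n = |V|` and let `N` be the bracketed forest sum. A spanning 2-forest with components `A, B`
contributes `x(u) x(v)` with `x = |B| • 𝟙_A - |A| • 𝟙_B` (up to a sign that cancels), so `N` is
symmetric with zero column sums. For `u ∈ A`, `(L x)(u)` is `n` times the number of edges of `Γ`
from `u` to `B`. A 2-forest together with such an edge `uw` is the same as a spanning tree
together with one of its edges `uw` at `u`, and deleting the edges at `u` of a fixed tree one at a
time separates each `z ≠ u` from `u` exactly once; this gives `(L N)(u, v) = n τ (n δ_{uv} - 1)`.
Hence `N / (n² τ)` satisfies the four Penrose equations, and the Moore–Penrose inverse is unique.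
-/

open scoped Classical
open Finset Matrix

namespace Paper

variable {V : Type*} [Fintype V] [DecidableEq V]

open SimpleGraph

local notation "graphOf " E:max => SimpleGraph.fromEdgeSet ((E : Finset (Sym2 _)) : Set (Sym2 _))

section Matrices

variable {V : Type*} [Fintype V]

theorem IsMoorePenrose.unique {M A B : Matrix V V ℝ} (hA : IsMoorePenrose M A)
    (hB : IsMoorePenrose M B) : A = B := by
  obtain ⟨hA₁, hA₂, hA₃, hA₄⟩ := hA
  obtain ⟨hB₁, hB₂, hB₃, hB₄⟩ := hB
  have hMA : M * A = M * B := calc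
    M * A = (M * B * M * A)ᵀ := by rw [hB₁, hA₃]
    _ = M * A * (M * B) := by rw [Matrix.mul_assoc (M * B), transpose_mul, hA₃, hB₃]
    _ = M * B := by rw [← Matrix.mul_assoc, hA₁]
  have hAM : A * M = B * M := calc
    A * M = (A * (M * B * M))ᵀ := by rw [hB₁, hA₄]
    _ = B * M * (A * M) := by
      rw [← Matrix.mul_assoc, ← Matrix.mul_assoc, Matrix.mul_assoc, transpose_mul, hA₄, hB₄]
    _ = B * M := by rw [Matrix.mul_assoc, ← Matrix.mul_assoc M, hA₁]
  calc A = B * M * A := by rw [← hAM, hA₂]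
    _ = B := by rw [Matrix.mul_assoc, hMA, ← Matrix.mul_assoc, hB₂]

variable [DecidableEq V]

variable (V) in
noncomputable def centering : Matrix V V ℝ :=
  1 - (Fintype.card V : ℝ)⁻¹ • Matrix.of fun _ _ => 1

lemma centering_transpose : (centering V)ᵀ = centering V := by
  simp [centering, transpose_sub, ← Matrix.ext_iff]

lemma centering_mul_of_sum_col_eq_zero {M : Matrix V V ℝ} (hM : ∀ j, ∑ i, M i j = 0) :
    centering V * M = M := by
  have hJM : (Matrix.of fun _ _ => (1 : ℝ)) * M = 0 := by
    ext i j
    simp [Matrix.mul_apply, hM]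
  rw [centering, Matrix.sub_mul, Matrix.one_mul, Matrix.smul_mul, hJM, smul_zero, sub_zero]

lemma isMoorePenrose_of_mul_eq_centering {L F : Matrix V V ℝ} (hL : Lᵀ = L) (hF : Fᵀ = F)
    (hL₀ : ∀ j, ∑ i, L i j = 0) (hF₀ : ∀ j, ∑ i, F i j = 0)
    (hLF : L * F = centering V) : IsMoorePenrose L F := by
  have hFL : F * L = centering V := by
    rw [← centering_transpose, ← hLF, transpose_mul, hL, hF]
  refine ⟨?_, ?_, ?_, ?_⟩
  · rw [hLF, centering_mul_of_sum_col_eq_zero hL₀]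
  · rw [hFL, centering_mul_of_sum_col_eq_zero hF₀]
  · rw [hLF, centering_transpose]
  · rw [hFL, centering_transpose]

noncomputable def centeredIndicator (A : Finset V) (z : V) : ℝ :=
  (if z ∈ A then (Fintype.card V : ℝ) else 0) - #A

lemma sum_centeredIndicator (A : Finset V) : ∑ z, centeredIndicator A z = 0 := by
  simp [centeredIndicator, Finset.sum_sub_distrib, Finset.sum_ite_mem, mul_comm]

lemma centeredIndicator_of_mem {A : Finset V} {z : V} (h : z ∈ A) :
    centeredIndicator A z = #Aᶜ := by
  rw [centeredIndicator, if_pos h, ← card_compl_add_card A]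
  push_cast
  ring

lemma centeredIndicator_of_notMem {A : Finset V} {z : V} (h : z ∉ A) :
    centeredIndicator A z = -#A := by
  rw [centeredIndicator, if_neg h, zero_sub]

lemma centeredIndicator_compl (A : Finset V) :
    centeredIndicator Aᶜ = -centeredIndicator A := by
  ext z
  by_cases hz : z ∈ A
  · rw [Pi.neg_apply, centeredIndicator_of_notMem (notMem_compl.mpr hz),
      centeredIndicator_of_mem hz]
  · rw [Pi.neg_apply, centeredIndicator_of_mem (mem_compl.mpr hz), compl_compl,
      centeredIndicator_of_notMem hz, neg_neg]

lemma centeredIndicator_eq_sum (A : Finset V) (v : V) :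
    centeredIndicator A v =
      ∑ z, ((if z ∈ Aᶜ then 1 else 0) - (if v ∈ Aᶜ then 1 else 0) : ℝ) := by
  rw [sum_sub_distrib, sum_boole, sum_const, card_univ, filter_univ_mem, nsmul_eq_mul]
  by_cases hv : v ∈ A
  · simp [centeredIndicator_of_mem hv, hv]
  · rw [centeredIndicator_of_notMem hv, if_pos (mem_compl.mpr hv), ← card_compl_add_card A]
    push_cast
    ring

lemma centeredIndicator_singleton (u v : V) :
    centeredIndicator {u} v = Fintype.card V * (if u = v then 1 else 0) - 1 := by
  by_cases h : u = v <;> simp [centeredIndicator, h, eq_comm]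

end Matrices

section Graphs

variable {V : Type*} {H : SimpleGraph V} {E : Finset (Sym2 V)} {u w : V}

lemma card_connectedComponent_eq_two_iff {a b : V} (hab : ¬ H.Reachable a b) :
    Nat.card H.ConnectedComponent = 2 ↔ ∀ z, H.Reachable z a ∨ H.Reachable z b := by
  have hba : H.connectedComponentMk b ≠ H.connectedComponentMk a := by
    simpa [reachable_comm] using hab
  rw [Nat.card_eq_two_iff' (H.connectedComponentMk a)]
  constructor
  · rintro ⟨y, -, hy⟩ z
    by_contra! h
    have hz := hy (H.connectedComponentMk z) (by simpa using h.1)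
    exact h.2 (ConnectedComponent.exact (hz.trans (hy _ hba).symm))
  · refine fun hcov => ⟨_, hba, fun y hy => ?_⟩
    induction y using ConnectedComponent.ind with | h z => ?_
    rcases hcov z with h | h
    · exact absurd (ConnectedComponent.sound h) hy
    · exact ConnectedComponent.sound h

lemma _root_.SimpleGraph.Walk.reachable_deleteEdges_or {a b x y : V} (p : H.Walk x y) :
    (H.deleteEdges {s(a, b)}).Reachable x y ∨ (H.deleteEdges {s(a, b)}).Reachable x a ∨
      (H.deleteEdges {s(a, b)}).Reachable x b := by
  induction p with
  | nil => exact Or.inl (Reachable.refl _)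
  | @cons x z y h q ih =>
    by_cases hxz : s(x, z) = s(a, b)
    · rcases Sym2.eq_iff.mp hxz with ⟨rfl, -⟩ | ⟨rfl, -⟩
      · exact Or.inr (Or.inl (Reachable.refl _))
      · exact Or.inr (Or.inr (Reachable.refl _))
    · have hadj : (H.deleteEdges {s(a, b)}).Adj x z := by simp [h, hxz]
      exact ih.imp hadj.reachable.trans (Or.imp hadj.reachable.trans hadj.reachable.trans)

lemma reachable_of_mem (he : s(u, w) ∈ E) : (graphOf E).Reachable u w := by
  by_cases huw : u = w
  · rw [huw]
  · exact Adj.reachable ((fromEdgeSet_adj _).mpr ⟨he, huw⟩)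

variable [DecidableEq V]

lemma fromEdgeSet_erase (E : Finset (Sym2 V)) (e : Sym2 V) :
    graphOf (E.erase e) = (graphOf E).deleteEdges {e} := by
  rw [coe_erase, fromEdgeSet_sdiff, deleteEdges]

lemma fromEdgeSet_insert (E : Finset (Sym2 V)) (u w : V) :
    graphOf (insert s(u, w) E) = graphOf E ⊔ edge u w := by
  rw [coe_insert, Set.insert_eq, fromEdgeSet_union, sup_comm, edge]

end Graphs

section Components

variable {V : Type*} [Fintype V] [DecidableEq V] {H : SimpleGraph V}

noncomputable def compFinset (H : SimpleGraph V) (a : V) : Finset V :=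
  univ.filter (H.Reachable · a)

@[simp]
lemma mem_compFinset {a z : V} : z ∈ compFinset H a ↔ H.Reachable z a := by
  simp [compFinset]

lemma compFinset_eq_of_reachable {a b : V} (h : H.Reachable a b) :
    compFinset H a = compFinset H b := by
  ext z
  simp only [mem_compFinset]
  exact ⟨fun hz => hz.trans h, fun hz => hz.trans h.symm⟩

lemma compFinset_eq_compl_of_card_eq_two (h2 : Nat.card H.ConnectedComponent = 2) {a b : V}
    (hab : ¬ H.Reachable a b) : compFinset H b = (compFinset H a)ᶜ := by
  ext z
  simp only [mem_compFinset, mem_compl]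
  refine ⟨fun hzb hza => hab (hza.symm.trans hzb), fun hza => ?_⟩
  exact ((card_connectedComponent_eq_two_iff hab).mp h2 z).resolve_left hza

/-- For a graph with two components `A` and `B`, this is `x a * x b` with
`x = |B| • 𝟙_A - |A| • 𝟙_B`, whichever component is called `A` (`forestTerm_eq`). -/
noncomputable def forestTerm (H : SimpleGraph V) (a b : V) : ℝ :=
  centeredIndicator (compFinset H a) a * centeredIndicator (compFinset H a) b

lemma forestTerm_eq (h2 : Nat.card H.ConnectedComponent = 2) (c a b : V) :
    forestTerm H a b =
      centeredIndicator (compFinset H c) a * centeredIndicator (compFinset H c) b := by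
  by_cases hac : H.Reachable a c
  · rw [forestTerm, compFinset_eq_of_reachable hac]
  · rw [forestTerm, compFinset_eq_compl_of_card_eq_two h2 hac, centeredIndicator_compl,
      Pi.neg_apply, Pi.neg_apply, neg_mul_neg]

lemma forestTerm_comm (h2 : Nat.card H.ConnectedComponent = 2) (a b : V) :
    forestTerm H a b = forestTerm H b a := by
  rw [forestTerm_eq h2 b, forestTerm, mul_comm]

lemma sum_forestTerm_left (h2 : Nat.card H.ConnectedComponent = 2) (b : V) :
    ∑ a, forestTerm H a b = 0 := by
  simp_rw [forestTerm_eq h2 b, ← sum_mul, sum_centeredIndicator, zero_mul]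

lemma forestTerm_of_reachable {a b : V} (h : H.Reachable a b) :
    forestTerm H a b = (#(compFinset H a)ᶜ : ℝ) ^ 2 := by
  rw [forestTerm, centeredIndicator_of_mem (mem_compFinset.mpr (Reachable.refl a)),
    centeredIndicator_of_mem (mem_compFinset.mpr h.symm), sq]

lemma forestTerm_of_not_reachable (h2 : Nat.card H.ConnectedComponent = 2) {a b : V}
    (h : ¬ H.Reachable a b) :
    forestTerm H a b = -((#(compFinset H a) : ℝ) * #(compFinset H b)) := by
  rw [forestTerm, centeredIndicator_of_mem (mem_compFinset.mpr (Reachable.refl a)),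
    centeredIndicator_of_notMem (fun hb => h (mem_compFinset.mp hb).symm),
    ← compFinset_eq_compl_of_card_eq_two h2 h]
  ring

lemma lapMatrix_mulVec_apply_eq_sum_sub {R : Type*} [NonAssocRing R] (G : SimpleGraph V)
    [DecidableRel G.Adj] (x : V → R) (u : V) :
    (G.lapMatrix R *ᵥ x) u = ∑ w ∈ G.neighborFinset u, (x u - x w) := by
  rw [lapMatrix_mulVec_apply, sum_sub_distrib, sum_const, card_neighborFinset_eq_degree,
    nsmul_eq_mul]

lemma lapMatrix_mulVec_centeredIndicator_compFinset (G : SimpleGraph V) [DecidableRel G.Adj]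
    (u : V) :
    (G.lapMatrix ℝ *ᵥ centeredIndicator (compFinset H u)) u =
      Fintype.card V * #((G.neighborFinset u).filter (¬ H.Reachable · u)) := by
  rw [lapMatrix_mulVec_apply_eq_sum_sub, card_filter, Nat.cast_sum, mul_sum]
  refine sum_congr rfl fun w _ => ?_
  by_cases hw : H.Reachable w u <;> simp [centeredIndicator, hw]

end Components

section EdgeSets

variable {V : Type*} [DecidableEq V] {G : SimpleGraph V} {T E : Finset (Sym2 V)} {u w : V}

lemma IsSTree.not_reachable_erase (hT : IsSTree G T) (he : s(u, w) ∈ T) :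
    ¬ (graphOf (T.erase s(u, w))).Reachable u w := by
  have hadj : (graphOf T).Adj u w := (fromEdgeSet_adj _).mpr ⟨he, (hT.1 he).ne⟩
  rw [fromEdgeSet_erase, ← isBridge_iff]
  exact isAcyclic_iff_forall_adj_isBridge.mp hT.2.1 hadj

lemma IsSTree.isSTwoForest_erase (hT : IsSTree G T) (he : s(u, w) ∈ T) :
    IsSTwoForest G (T.erase s(u, w)) := by
  refine ⟨fun e he => hT.1 (mem_of_mem_erase he),
    hT.2.1.anti (fromEdgeSet_mono (by simp)), ?_⟩
  refine (card_connectedComponent_eq_two_iff (hT.not_reachable_erase he)).mpr fun z => ?_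
  obtain ⟨p⟩ := hT.2.2.preconnected z u
  rw [fromEdgeSet_erase]
  exact (p.reachable_deleteEdges_or (a := u) (b := w)).elim Or.inl id

lemma IsSTwoForest.isSTree_insert (hE : IsSTwoForest G E) (hadj : G.Adj u w)
    (hnr : ¬ (graphOf E).Reachable u w) : IsSTree G (insert s(u, w) E) := by
  have hcov := (card_connectedComponent_eq_two_iff hnr).mp hE.2.2
  rw [IsSTree, fromEdgeSet_insert, coe_insert]
  refine ⟨Set.insert_subset hadj hE.1, hE.2.1.sup_edge_of_not_reachable hnr,
    (connected_iff_exists_forall_reachable _).mpr ⟨u, fun z => ?_⟩⟩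
  have huw : (graphOf E ⊔ edge u w).Reachable w u :=
    Adj.reachable (Or.inr (by simp [edge_adj, hadj.ne.symm]))
  rcases hcov z with h | h
  · exact (h.mono le_sup_left).symm
  · exact ((h.mono le_sup_left).trans huw).symm

variable [Fintype V]

-- The separating edge is the first edge of the path from `u` to `z`.
lemma IsSTree.filter_separating_eq_singleton (hT : IsSTree G T) {z : V} (hz : z ≠ u) :
    ∃ w, univ.filter
      (fun w' => s(u, w') ∈ T ∧ ¬ (graphOf (T.erase s(u, w'))).Reachable z u) = {w} := by
  obtain ⟨p, hp⟩ := (hT.2.2.preconnected u z).some.toPath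
  cases p with
  | nil => exact absurd rfl hz
  | @cons _ w _ h q =>
    rw [Walk.cons_isPath_iff] at hp
    have huw : s(u, w) ∈ T := ((fromEdgeSet_adj _).mp h).1
    -- `q` avoids `u`, so it survives the deletion of any edge at `u`
    have hwz : ∀ w', (graphOf (T.erase s(u, w'))).Reachable w z := fun w' => by
      rw [fromEdgeSet_erase, reachable_deleteEdges_iff_exists_walk]
      exact ⟨q, fun hq => hp.2 (q.fst_mem_support_of_mem_edges hq)⟩
    refine ⟨w, Finset.ext fun w' => ?_⟩
    simp only [mem_filter, mem_univ, true_and, mem_singleton]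
    refine ⟨fun ⟨_, hsep⟩ => ?_, ?_⟩
    · by_contra hne
      have hwu : s(w, u) ∈ T.erase s(u, w') := by
        refine mem_erase.mpr ⟨fun h' => ?_, Sym2.eq_swap ▸ huw⟩
        rcases Sym2.eq_iff.mp h' with ⟨rfl, -⟩ | ⟨rfl, -⟩
        · exact h.ne rfl
        · exact hne rfl
      exact hsep ((hwz w').symm.trans (reachable_of_mem hwu))
    · rintro rfl
      exact ⟨huw, fun hzu => hT.not_reachable_erase huw ((hwz _).trans hzu).symm⟩

lemma IsSTree.card_filter_separating (hT : IsSTree G T) (u z : V) :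
    #(univ.filter fun w => s(u, w) ∈ T ∧ ¬ (graphOf (T.erase s(u, w))).Reachable z u) =
      if z = u then 0 else 1 := by
  split_ifs with hz
  · simp [hz]
  · obtain ⟨w, hw⟩ := hT.filter_separating_eq_singleton hz
    rw [hw, card_singleton]

end EdgeSets

section SpanningTrees

variable {V : Type*} [Fintype V] {G : SimpleGraph V}

lemma exists_isSTree (hG : G.Connected) : ∃ T, IsSTree G T := by
  obtain ⟨H, hHG, hH⟩ := hG.exists_isTree_le
  refine ⟨(Set.toFinite H.edgeSet).toFinset, ?_⟩
  rw [IsSTree, Set.Finite.coe_toFinset, fromEdgeSet_edgeSet]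
  exact ⟨edgeSet_mono hHG, hH.isAcyclic, hH.connected⟩

lemma treeCount_pos (hG : G.Connected) : 0 < treeCount G := by
  obtain ⟨T, hT⟩ := exists_isSTree hG
  exact card_pos.mpr ⟨T, mem_filter.mpr ⟨mem_univ _, hT⟩⟩

end SpanningTrees

section ForestSum

variable {V : Type*} [Fintype V] [DecidableEq V] {G : SimpleGraph V}

lemma sum_isSTwoForest_sum_crossing [DecidableRel G.Adj] (u : V) (g : Finset (Sym2 V) → ℝ) :
    ∑ E ∈ univ.filter (IsSTwoForest G),
        ∑ _w ∈ (G.neighborFinset u).filter (¬ (graphOf E).Reachable · u), g E =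
      ∑ T ∈ univ.filter (IsSTree G),
        ∑ w ∈ univ.filter (s(u, ·) ∈ T), g (T.erase s(u, w)) := by
  rw [sum_sigma', sum_sigma']
  refine sum_nbij' (fun p => ⟨insert s(u, p.2) p.1, p.2⟩)
    (fun p => ⟨p.1.erase s(u, p.2), p.2⟩) ?_ ?_ ?_ ?_ ?_
  · rintro ⟨E, w⟩ hp
    simp only [mem_sigma, mem_filter, mem_univ, true_and, mem_neighborFinset] at hp ⊢
    exact ⟨hp.1.isSTree_insert hp.2.1 fun h => hp.2.2 h.symm, mem_insert_self _ _⟩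
  · rintro ⟨T, w⟩ hp
    simp only [mem_sigma, mem_filter, mem_univ, true_and, mem_neighborFinset] at hp ⊢
    exact ⟨hp.1.isSTwoForest_erase hp.2, hp.1.1 hp.2,
      fun h => hp.1.not_reachable_erase hp.2 h.symm⟩
  · rintro ⟨E, w⟩ hp
    simp only [mem_sigma, mem_filter, mem_univ, true_and, mem_neighborFinset] at hp
    simp only [erase_insert fun h => hp.2.2 (reachable_of_mem h).symm]
  · rintro ⟨T, w⟩ hp
    simp only [mem_sigma, mem_filter, mem_univ, true_and] at hp
    simp only [insert_erase hp.2]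
  · rintro ⟨E, w⟩ hp
    simp only [mem_sigma, mem_filter, mem_univ, true_and, mem_neighborFinset] at hp
    simp only [erase_insert fun h => hp.2.2 (reachable_of_mem h).symm]

lemma IsSTree.sum_centeredIndicator_erase {T : Finset (Sym2 V)} (hT : IsSTree G T) (u v : V) :
    ∑ w ∈ univ.filter (s(u, ·) ∈ T),
        centeredIndicator (compFinset (graphOf (T.erase s(u, w))) u) v =
      centeredIndicator {u} v := by
  simp_rw [centeredIndicator_eq_sum]
  rw [sum_comm]
  refine sum_congr rfl fun z _ => ?_
  simp only [sum_sub_distrib, sum_boole, filter_filter, mem_compl, mem_compFinset,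
    hT.card_filter_separating, mem_singleton]
  split_ifs <;> simp

noncomputable def forestSum (G : SimpleGraph V) : Matrix V V ℝ :=
  Matrix.of fun a b => ∑ E ∈ univ.filter (IsSTwoForest G), forestTerm (graphOf E) a b

lemma forestSum_transpose : (forestSum G)ᵀ = forestSum G := by
  ext a b
  refine sum_congr rfl fun E hE => forestTerm_comm (mem_filter.mp hE).2.2.2 b a

lemma sum_forestSum_left (b : V) : ∑ a, forestSum G a b = 0 := by
  simp only [forestSum, of_apply]
  rw [sum_comm]
  exact sum_eq_zero fun E hE => sum_forestTerm_left (mem_filter.mp hE).2.2.2 b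

lemma lapMatrix_mul_forestSum_apply [DecidableRel G.Adj] (u v : V) :
    (G.lapMatrix ℝ * forestSum G) u v =
      Fintype.card V * treeCount G * centeredIndicator {u} v := by
  calc (G.lapMatrix ℝ * forestSum G) u v
      = ∑ E ∈ univ.filter (IsSTwoForest G),
          (G.lapMatrix ℝ *ᵥ centeredIndicator (compFinset (graphOf E) u)) u *
            centeredIndicator (compFinset (graphOf E) u) v := by
        simp only [mul_apply, forestSum, of_apply, mul_sum]
        rw [sum_comm]
        refine sum_congr rfl fun E hE => ?_
        simp only [forestTerm_eq (mem_filter.mp hE).2.2.2 u, mulVec, dotProduct, sum_mul, mul_assoc]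
    _ = Fintype.card V * ∑ T ∈ univ.filter (IsSTree G),
          ∑ w ∈ univ.filter (s(u, ·) ∈ T),
            centeredIndicator (compFinset (graphOf (T.erase s(u, w))) u) v := by
        rw [← sum_isSTwoForest_sum_crossing u
          fun E => centeredIndicator (compFinset (graphOf E) u) v, mul_sum]
        refine sum_congr rfl fun E _ => ?_
        rw [lapMatrix_mulVec_centeredIndicator_compFinset, sum_const, nsmul_eq_mul, mul_assoc]
        -- the two filters differ only in their `Decidable` instances
        congr!
    _ = Fintype.card V * treeCount G * centeredIndicator {u} v := by
        rw [sum_congr rfl fun T hT => (mem_filter.mp hT).2.sum_centeredIndicator_erase u v,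
          sum_const, nsmul_eq_mul, treeCount, mul_assoc]

end ForestSum

section Green

variable {V : Type*} [Fintype V] [DecidableEq V] {G : SimpleGraph V}

lemma forestSum_apply (u v : V) :
    forestSum G u v =
      (∑ E ∈ univ.filter (fun E => IsSTwoForest G E ∧ (graphOf E).Reachable u v),
          (#(univ.filter fun z => ¬ (graphOf E).Reachable z u) : ℝ) ^ 2) -
        ∑ E ∈ univ.filter (fun E => IsSTwoForest G E ∧ ¬ (graphOf E).Reachable u v),
          (#(univ.filter fun z => (graphOf E).Reachable z u) : ℝ) *
            #(univ.filter fun z => (graphOf E).Reachable z v) := by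
  rw [forestSum, of_apply, ← sum_filter_add_sum_filter_not _ fun E => (graphOf E).Reachable u v,
    filter_filter, filter_filter, sub_eq_add_neg, ← sum_neg_distrib]
  congr 1
  · refine sum_congr rfl fun E hE => ?_
    rw [forestTerm_of_reachable (mem_filter.mp hE).2.2, compFinset, compl_filter]
  · refine sum_congr rfl fun E hE => ?_
    obtain ⟨-, hE, huv⟩ := mem_filter.mp hE
    rw [forestTerm_of_not_reachable hE.2.2 huv, compFinset, compFinset]
    congr!

noncomputable def forestGreen (G : SimpleGraph V) : Matrix V V ℝ :=
  (1 / ((Fintype.card V : ℝ) ^ 2 * treeCount G)) • forestSum G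

lemma sum_lapMatrix_apply_left (G : SimpleGraph V) [DecidableRel G.Adj] (j : V) :
    ∑ i, G.lapMatrix ℝ i j = 0 := by
  have hrow := congrFun (G.lapMatrix_mulVec_const_eq_zero (R := ℝ)) j
  simp only [mulVec, dotProduct, mul_one, Pi.zero_apply] at hrow
  rw [← hrow]
  exact sum_congr rfl fun i _ => (G.isSymm_lapMatrix (R := ℝ)).apply j i

lemma isMoorePenrose_forestGreen [DecidableRel G.Adj] (hG : G.Connected) :
    IsMoorePenrose (G.lapMatrix ℝ) (forestGreen G) := by
  have : Nonempty V := hG.nonempty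
  have hn : (Fintype.card V : ℝ) ≠ 0 := by positivity
  have hτ : (treeCount G : ℝ) ≠ 0 := by exact_mod_cast (treeCount_pos hG).ne'
  refine isMoorePenrose_of_mul_eq_centering (G.isSymm_lapMatrix (R := ℝ)) ?_
    (sum_lapMatrix_apply_left G) (fun j => ?_) ?_
  · rw [forestGreen, transpose_smul, forestSum_transpose]
  · simp [forestGreen, ← mul_sum, sum_forestSum_left]
  · ext u v
    rw [forestGreen, Matrix.mul_smul, Matrix.smul_apply, lapMatrix_mul_forestSum_apply,
      centeredIndicator_singleton, centering]
    by_cases huv : u = v <;> simp [huv] <;> field_simp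

end Green

/-- **Forest formula for the combinatorial Green's function of a connected simple graph.**
`Gc` is the Moore–Penrose pseudoinverse of the combinatorial Laplacian `L = D - A`.
The first sum ranges over spanning 2-forests whose component `T₁` contains both `u`
and `v` (its square counts `|T₂|²`), the second over spanning 2-forests separating
`u` from `v` (counting `|T₁|·|T₂|`). -/
theorem combinatorial_green_forest_formula_simple
    {V : Type*} [Fintype V] [DecidableEq V]
    (G : SimpleGraph V) [DecidableRel G.Adj] (hconn : G.Connected)
    (Gc : Matrix V V ℝ) (hGc : IsMoorePenrose (G.lapMatrix ℝ) Gc) (u v : V) :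
    Gc u v = (1 / ((Fintype.card V : ℝ) ^ 2 * (treeCount G : ℝ))) *
      ((∑ E ∈ Finset.univ.filter (fun E : Finset (Sym2 V) =>
            IsSTwoForest G E ∧ (SimpleGraph.fromEdgeSet (E : Set (Sym2 V))).Reachable u v),
          ((Finset.univ.filter (fun z : V =>
              ¬ (SimpleGraph.fromEdgeSet (E : Set (Sym2 V))).Reachable z u)).card : ℝ) ^ 2)
       - (∑ E ∈ Finset.univ.filter (fun E : Finset (Sym2 V) =>
            IsSTwoForest G E ∧ ¬ (SimpleGraph.fromEdgeSet (E : Set (Sym2 V))).Reachable u v),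
          ((Finset.univ.filter (fun z : V =>
              (SimpleGraph.fromEdgeSet (E : Set (Sym2 V))).Reachable z u)).card : ℝ) *
          ((Finset.univ.filter (fun z : V =>
              (SimpleGraph.fromEdgeSet (E : Set (Sym2 V))).Reachable z v)).card : ℝ))) := by
  rw [hGc.unique (isMoorePenrose_forestGreen hconn), forestGreen, Matrix.smul_apply,
    forestSum_apply, smul_eq_mul]

end Paper
end

section
/- Let Γ be a strongly-connected weighted digraph with transition matrix P = D⁻¹A, unique stationary distribution π (π^*P = π^*, π_u > 0, Σ_u π_u = 1), Π = Diag[π_u], normalized Laplacian ℒ = Π^{1/2}(I − P)Π^{−1/2}, and normalized Green's function 𝒢 = the Moore–Penrose pseudoinverse of ℒ. Then for all vertices u, v: 𝒢(u,v) = (√(π_u π_v)/τ_v) · ( Σ_{T₁∪T₂ ∈ 𝔽₂*, u∈T₁, r(T₁)=v} π(T₂)·d_{r(T₂)}·ω(T₁∪T₂) − Σ_{T₁∪T₂ ∈ 𝔽₂*, u∈T₂, r(T₁)=v} π(T₁)·d_{r(T₂)}·ω(T₁∪T₂) ), where π(T) = Σ_{z∈T} π_z, 𝔽₂* is the set of rooted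 spanning 2-forests, ω(F) = Π_{e∈E(F)} ω(e), and τ_w is the total weight of spanning in-trees rooted at w. -/
open scoped Classical
open Finset Matrix

namespace Paper

variable {V : Type*} [Fintype V] [DecidableEq V]

set_option linter.unusedSectionVars false
section Dynamics
variable {α : Type*}

lemma reaches_refl (f : α → α) (x : α) : Reaches f x x := ⟨0, rfl⟩

lemma reaches_of_apply {f : α → α} {x y : α} (h : Reaches f (f x) y) : Reaches f x y := by
  obtain ⟨k, hk⟩ := h
  exact ⟨k + 1, by rw [Function.iterate_succ_apply]; exact hk⟩

lemma reaches_apply_of_ne {f : α → α} {x y : α} (h : Reaches f x y) (hxy : x ≠ y) :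
    Reaches f (f x) y := by
  obtain ⟨k, hk⟩ := h
  cases k with
  | zero => exact absurd hk hxy
  | succ n => exact ⟨n, by rwa [Function.iterate_succ_apply] at hk⟩

lemma reaches_trans_s3 {f : α → α} {x y z : α} (h1 : Reaches f x y) (h2 : Reaches f y z) :
    Reaches f x z := by
  obtain ⟨k, hk⟩ := h1; obtain ⟨m, hm⟩ := h2
  exact ⟨m + k, by rw [Function.iterate_add_apply, hk]; exact hm⟩

lemma reaches_iterate (f : α → α) (x : α) (k : ℕ) : Reaches f x (f^[k] x) := ⟨k, rfl⟩

lemma reaches_fix {f : α → α} {v u : α} (hv : f v = v) (h : Reaches f v u) : u = v := by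
  obtain ⟨k, hk⟩ := h; rw [Function.iterate_fixed hv] at hk; exact hk.symm

lemma reaches_order {f : α → α} {x a b : α} (ha : Reaches f x a) (hb : Reaches f x b) :
    Reaches f a b ∨ Reaches f b a := by
  obtain ⟨k, hk⟩ := ha; obtain ⟨m, hm⟩ := hb
  rcases le_total k m with h | h
  · left
    exact ⟨m - k, by rw [← hk, ← Function.iterate_add_apply, Nat.sub_add_cancel h]; exact hm⟩
  · right
    exact ⟨k - m, by rw [← hm, ← Function.iterate_add_apply, Nat.sub_add_cancel h]; exact hk⟩

lemma reaches_fix_unique {f : α → α} {x a b : α} (ha : f a = a) (hb : f b = b)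
    (hxa : Reaches f x a) (hxb : Reaches f x b) : a = b := by
  rcases reaches_order hxa hxb with h | h
  · exact (reaches_fix ha h).symm
  · exact reaches_fix hb h

lemma iterate_mul_periodic {f : α → α} {x : α} {t : ℕ} (ht : f^[t] x = x) (n : ℕ) :
    f^[t * n] x = x := by
  induction n with
  | zero => simp
  | succ m ih =>
      have : t * (m + 1) = t * m + t := by ring
      rw [this, Function.iterate_add_apply, ht, ih]

lemma iterate_mod {f : α → α} {x : α} {t : ℕ} (ht : f^[t] x = x) (k : ℕ) :
    f^[k] x = f^[k % t] x := by
  rcases Nat.eq_zero_or_pos t with h | h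
  · subst h; simp [Nat.mod_zero]
  · conv_lhs => rw [← Nat.mod_add_div k t, Function.iterate_add_apply,
      iterate_mul_periodic ht]

lemma periodic_fix {f : α → α} {x v : α} {t : ℕ} (ht : f^[t] x = x) (htpos : 0 < t)
    (hv : f v = v) (hr : Reaches f x v) : x = v := by
  obtain ⟨k, hk⟩ := hr
  have h1 : f^[t * k] x = x := iterate_mul_periodic ht k
  have h2 : k ≤ t * k := Nat.le_mul_of_pos_left k htpos
  have : f^[t * k] x = v := by
    rw [← Nat.sub_add_cancel h2, Function.iterate_add_apply, hk, Function.iterate_fixed hv]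
  rw [h1] at this; exact this

lemma periodic_pred {f : α → α} {u b : α} {t : ℕ} (ht : f^[t] u = u) (htpos : 0 < t)
    (hb : Reaches f u b) : Reaches f b u := by
  obtain ⟨k, hk⟩ := hb
  have hb' : b = f^[k % t] u := by rw [← hk, iterate_mod ht]
  refine ⟨t - k % t, ?_⟩
  rw [hb', ← Function.iterate_add_apply]
  have : t - k % t + k % t = t := Nat.sub_add_cancel (Nat.mod_lt _ htpos).le
  rw [this, ht]

end Dynamics
section Dynamics2
variable {α : Type*} [DecidableEq α]

open Function

lemma iterate_update_eq {g : α → α} {u w x : α} {k : ℕ}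
    (h : ∀ j, j < k → g^[j] x ≠ u) : ∀ j, j ≤ k → (Function.update g u w)^[j] x = g^[j] x := by
  intro j hj
  induction j with
  | zero => rfl
  | succ n ih =>
      rw [Function.iterate_succ_apply', Function.iterate_succ_apply',
        ih (Nat.le_of_succ_le hj), Function.update_of_ne (h n (Nat.lt_of_succ_le hj))]

lemma iterate_update_of_not_reaches {g : α → α} {u w x : α} (h : ¬ Reaches g x u) (k : ℕ) :
    (Function.update g u w)^[k] x = g^[k] x :=
  iterate_update_eq (fun j _ hj => h ⟨j, hj⟩) k le_rfl

lemma reaches_update_iff_of_not_reaches {g : α → α} {u w x y : α} (h : ¬ Reaches g x u) :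
    Reaches (Function.update g u w) x y ↔ Reaches g x y := by
  unfold Reaches
  exact exists_congr fun k => by rw [iterate_update_of_not_reaches h]

lemma reaches_update_self {g : α → α} {u x : α} (w : α) (h : Reaches g x u) :
    Reaches (Function.update g u w) x u := by
  classical
  obtain ⟨k, hk, hmin⟩ : ∃ k, g^[k] x = u ∧ ∀ j, j < k → g^[j] x ≠ u :=
    ⟨Nat.find h, Nat.find_spec h, fun j hj => Nat.find_min h hj⟩
  exact ⟨k, by rw [iterate_update_eq hmin k le_rfl]; exact hk⟩

lemma update_update_self (g : α → α) (u w : α) :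
    Function.update (Function.update g u w) u (g u) = g := by
  rw [Function.update_idem, Function.update_eq_self]

lemma reaches_update_self_iff {g : α → α} {u w x : α} :
    Reaches (Function.update g u w) x u ↔ Reaches g x u := by
  constructor
  · intro h
    have := reaches_update_self (g u) h
    rwa [update_update_self] at this
  · exact reaches_update_self w

lemma reaches_update_or {g : α → α} {u w x t : α} (h : Reaches g x t) :
    Reaches (Function.update g u w) x t ∨ Reaches (Function.update g u w) x u := by
  by_cases hu : Reaches g x u
  · exact Or.inr (reaches_update_self w hu)
  · exact Or.inl ((reaches_update_iff_of_not_reaches hu).mpr h)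

lemma reaches_of_update_or {g : α → α} {u w x t : α}
    (h : Reaches (Function.update g u w) x t) : Reaches g x t ∨ Reaches g x u := by
  have := reaches_update_or (u := u) (w := g u) h
  rwa [update_update_self] at this

noncomputable def htime (f : α → α) (x y : α) : ℕ :=
  if h : Reaches f x y then Nat.find h else 0

lemma htime_spec {f : α → α} {x y : α} (h : Reaches f x y) : f^[htime f x y] x = y := by
  rw [htime, dif_pos h]; exact Nat.find_spec h

lemma htime_min {f : α → α} {x y : α} (h : Reaches f x y) {j : ℕ} (hj : j < htime f x y) :
    f^[j] x ≠ y := by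
  rw [htime, dif_pos h] at hj; exact Nat.find_min h hj

lemma htime_le {f : α → α} {x y : α} (h : Reaches f x y) {k : ℕ} (hk : f^[k] x = y) :
    htime f x y ≤ k := by
  rw [htime, dif_pos h]; exact Nat.find_min' h hk

lemma htime_self (f : α → α) (x : α) : htime f x x = 0 :=
  Nat.le_zero.mp (htime_le (reaches_refl f x) rfl)

lemma htime_succ {f : α → α} {x y : α} (h : Reaches f x y) (hne : x ≠ y) :
    htime f x y = htime f (f x) y + 1 := by
  have h' : Reaches f (f x) y := reaches_apply_of_ne h hne
  apply le_antisymm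
  · exact htime_le h (by rw [Function.iterate_succ_apply]; exact htime_spec h')
  · rcases Nat.eq_zero_or_pos (htime f x y) with h0 | h0
    · exfalso
      have hs := htime_spec h
      rw [h0] at hs
      exact hne hs
    · obtain ⟨m, hm⟩ := Nat.exists_eq_add_of_lt h0
      rw [zero_add] at hm
      have h1 : f^[m + 1] x = y := by rw [← hm]; exact htime_spec h
      rw [Function.iterate_succ_apply] at h1
      have := htime_le h' h1
      omega

lemma htime_congr {f₁ f₂ : α → α} {x y : α} (heq : ∀ k, f₁^[k] x = f₂^[k] x) :
    htime f₁ x y = htime f₂ x y := by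
  have hr : Reaches f₁ x y ↔ Reaches f₂ x y := exists_congr fun k => by rw [heq]
  by_cases h : Reaches f₁ x y
  · apply le_antisymm
    · exact htime_le h (by rw [heq]; exact htime_spec (hr.mp h))
    · exact htime_le (hr.mp h) (by rw [← heq]; exact htime_spec h)
  · rw [htime, htime, dif_neg h, dif_neg (fun h' => h (hr.mpr h'))]

lemma htime_add {g : α → α} {v u w : α} (hv : g v = v) (huv : u ≠ v)
    (hwu : Reaches g w u) (huv' : Reaches g u v) :
    htime g w v = htime g w u + htime g u v := by
  have hwv : Reaches g w v := reaches_trans_s3 hwu huv'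
  set m := htime g w u with hm
  set h := htime g u v with hh
  apply le_antisymm
  · apply htime_le hwv
    rw [Nat.add_comm, Function.iterate_add_apply, htime_spec hwu, htime_spec huv']
  · set k := htime g w v with hk
    have hkv : g^[k] w = v := htime_spec hwv
    have hmk : m ≤ k := by
      by_contra hlt
      push_neg at hlt
      have : g^[m] w = v := by
        rw [← Nat.sub_add_cancel hlt.le, Function.iterate_add_apply, hkv,
          Function.iterate_fixed hv]
      exact huv (by rw [← htime_spec hwu, this])
    have : g^[k - m] u = v := by
      rw [← htime_spec hwu, ← Function.iterate_add_apply, Nat.sub_add_cancel hmk, hkv]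
    have := htime_le huv' this
    omega

lemma path_inj {g : α → α} {x y : α} {K : ℕ} (hK : g^[K] x = y)
    (hmin : ∀ j, j < K → g^[j] x ≠ y) :
    ∀ i j, i < j → j < K → g^[i] x ≠ g^[j] x := by
  intro i j hij hjK heq
  apply hmin (K - j + i) (by omega)
  have hKj : K - j + j = K := by omega
  rw [Function.iterate_add_apply, heq, ← Function.iterate_add_apply, hKj, hK]

lemma orbit_inj {f : α → α} {x : α} {T : ℕ} (hT : f^[T] x = x)
    (hmin : ∀ j, 0 < j → j < T → f^[j] x ≠ x) :
    ∀ i j, i < j → j < T → f^[i] x ≠ f^[j] x := by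
  intro i j hij hjT heq
  apply hmin (T - j + i) (by omega) (by omega)
  have hTj : T - j + j = T := by omega
  rw [Function.iterate_add_apply, heq, ← Function.iterate_add_apply, hTj, hT]

lemma orbit_card {f : α → α} {x : α} {T : ℕ} (hT : f^[T] x = x)
    (hmin : ∀ j, 0 < j → j < T → f^[j] x ≠ x) :
    ((Finset.range T).image (fun j => f^[j] x)).card = T := by
  rw [Finset.card_image_of_injOn, Finset.card_range]
  intro i hi j hj hij
  rcases lt_trichotomy i j with h | h | h
  · exact absurd hij (orbit_inj hT hmin i j h (Finset.mem_range.mp hj))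
  · exact h
  · exact absurd hij.symm (orbit_inj hT hmin j i h (Finset.mem_range.mp hi))

lemma reaches_mem_orbit {f : α → α} {x b : α} {T : ℕ} (hT : f^[T] x = x) (hTpos : 0 < T)
    (h : Reaches f x b) : b ∈ (Finset.range T).image (fun j => f^[j] x) := by
  obtain ⟨k, hk⟩ := h
  exact Finset.mem_image.mpr ⟨k % T, Finset.mem_range.mpr (Nat.mod_lt _ hTpos),
    by rw [← iterate_mod hT, hk]⟩

end Dynamics2
section Key
variable {V : Type*} [Fintype V] [DecidableEq V]

/-- `g` (with marked extra root `b`) encodes a 2-forest structure for roots `v, b`. -/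
def OKP (v b : V) (g : V → V) : Prop := g v = v ∧ ∀ y, Reaches g y v ∨ Reaches g y b

/-- `x` reaches `v` avoiding `b` (cut at `b`). -/
def AR (v b : V) (g : V → V) (x : V) : Prop := Reaches (Function.update g b b) x v

def istree (v : V) (g : V → V) : Prop := ∀ y, Reaches g y v

noncomputable def kap (v : V) (g : V → V) : ℕ :=
  ((Finset.univ.erase v).filter (fun b => OKP v b g)).card

noncomputable def cnt (v : V) (g : V → V) (x : V) : ℕ :=
  ((Finset.univ.erase v).filter (fun b => OKP v b g ∧ AR v b g x)).card

noncomputable def gam (v : V) (g : V → V) (u w : V) : ℝ :=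
  (cnt v g u : ℝ) - (cnt v g w : ℝ) + (if istree v g then 1 else 0)

lemma AR_self (v b : V) (g : V → V) : AR v b g v := reaches_refl _ v

lemma cnt_self {v : V} (g : V → V) : cnt v g v = kap v g := by
  unfold cnt kap
  congr 1
  apply Finset.filter_congr
  intro b _
  exact and_iff_left (AR_self v b g)

lemma OKP_of_tree {v b : V} {g : V → V} (hgv : g v = v) (ht : istree v g) : OKP v b g :=
  ⟨hgv, fun y => Or.inl (ht y)⟩

/-- In a tree, `AR v b g x` iff `b` is not on the path from `x` to `v`. -/
lemma AR_tree_iff {v b x : V} {g : V → V} (hgv : g v = v) (ht : istree v g) (hb : b ≠ v) :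
    AR v b g x ↔ b ∉ (Finset.range (htime g x v)).image (fun j => g^[j] x) := by
  constructor
  · intro har hmem
    obtain ⟨j, _, hj⟩ := Finset.mem_image.mp hmem
    have hxb : Reaches g x b := ⟨j, hj⟩
    have h1 : Reaches (Function.update g b b) x b := reaches_update_self b hxb
    have h2 : (Function.update g b b) b = b := Function.update_self _ _ _
    have h3 : (Function.update g b b) v = v := by
      rw [Function.update_of_ne (Ne.symm hb)]; exact hgv
    exact hb (reaches_fix_unique h2 h3 h1 har)
  · intro hmem
    refine ⟨htime g x v, ?_⟩
    rw [iterate_update_eq (fun j hj => ?_) _ le_rfl]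
    · exact htime_spec (ht x)
    · intro heq
      exact hmem (Finset.mem_image.mpr ⟨j, Finset.mem_range.mpr hj, heq⟩)

lemma cnt_tree {v x : V} {g : V → V} (hgv : g v = v) (ht : istree v g) :
    cnt v g x + htime g x v = (Finset.univ.erase v).card := by
  classical
  set P := (Finset.range (htime g x v)).image (fun j => g^[j] x) with hP
  have hPsub : P ⊆ Finset.univ.erase v := by
    intro b hbmem
    obtain ⟨j, hj, hjb⟩ := Finset.mem_image.mp hbmem
    refine Finset.mem_erase.mpr ⟨?_, Finset.mem_univ _⟩
    intro hbv
    exact htime_min (ht x) (Finset.mem_range.mp hj) (hjb.trans hbv)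
  have hPcard : P.card = htime g x v := by
    rw [hP, Finset.card_image_of_injOn, Finset.card_range]
    intro i hi j hj hij
    rcases lt_trichotomy i j with h | h | h
    · exact absurd hij (path_inj (htime_spec (ht x)) (fun j hj => htime_min (ht x) hj)
        i j h (Finset.mem_range.mp hj))
    · exact h
    · exact absurd hij.symm (path_inj (htime_spec (ht x)) (fun j hj => htime_min (ht x) hj)
        j i h (Finset.mem_range.mp hi))
  have hset : (Finset.univ.erase v).filter (fun b => OKP v b g ∧ AR v b g x)
      = (Finset.univ.erase v) \ P := by
    ext b
    simp only [Finset.mem_filter, Finset.mem_sdiff]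
    constructor
    · rintro ⟨hbe, -, har⟩
      exact ⟨hbe, (AR_tree_iff hgv ht (Finset.mem_erase.mp hbe).1).mp har⟩
    · rintro ⟨hbe, hnp⟩
      exact ⟨hbe, OKP_of_tree hgv ht,
        (AR_tree_iff hgv ht (Finset.mem_erase.mp hbe).1).mpr hnp⟩
  rw [cnt, hset, Finset.card_sdiff_of_subset hPsub, hPcard]
  have := Finset.card_le_card hPsub
  omega

lemma AR_nontree_iff {v b x : V} {g : V → V} (hgv : g v = v) (hnt : ¬ istree v g)
    (hb : b ≠ v) (hok : OKP v b g) : AR v b g x ↔ Reaches g x v := by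
  have hfixb : (Function.update g b b) b = b := Function.update_self _ _ _
  have hfixv : (Function.update g b b) v = v := by
    rw [Function.update_of_ne (Ne.symm hb)]; exact hgv
  have hnbv : ¬ Reaches g b v := by
    intro hbv
    apply hnt
    intro y
    rcases hok.2 y with h | h
    · exact h
    · exact reaches_trans_s3 h hbv
  constructor
  · intro har
    by_cases hxv : Reaches g x v
    · exact hxv
    · exfalso
      rcases hok.2 x with h | h
      · exact hxv h
      · exact hb (reaches_fix_unique hfixb hfixv (reaches_update_self b h) har)
  · intro hxv
    rcases reaches_update_or (u := b) (w := b) hxv with h | h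
    · exact h
    · exfalso
      have hxb : Reaches g x b := reaches_update_self_iff.mp h
      rcases reaches_order hxb hxv with h2 | h2
      · exact hnbv h2
      · exact hb (reaches_fix hgv h2)

lemma cnt_nontree {v x : V} {g : V → V} (hgv : g v = v) (hnt : ¬ istree v g) :
    cnt v g x = if Reaches g x v then kap v g else 0 := by
  by_cases hxv : Reaches g x v
  · rw [if_pos hxv, cnt, kap]
    congr 1
    apply Finset.filter_congr
    intro b hb
    have hbv := (Finset.mem_erase.mp hb).1
    constructor
    · rintro ⟨hok, -⟩; exact hok
    · intro hok; exact ⟨hok, (AR_nontree_iff hgv hnt hbv hok).mpr hxv⟩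
  · rw [if_neg hxv, cnt, Finset.card_eq_zero]
    apply Finset.filter_false_of_mem
    rintro b hb ⟨hok, har⟩
    exact hxv ((AR_nontree_iff hgv hnt (Finset.mem_erase.mp hb).1 hok).mp har)

end Key
section Key2
variable {V : Type*} [Fintype V] [DecidableEq V]

open Function

lemma update_fix_v {g : V → V} {v u : V} (hgv : g v = v) (huv : u ≠ v) (w : V) :
    (Function.update g u w) v = v := by
  rw [Function.update_of_ne (Ne.symm huv)]; exact hgv

lemma reaches_update_start {g : V → V} {u w t : V} (huv : u ≠ t)
    (h : Reaches (Function.update g u w) w t) : Reaches (Function.update g u w) u t :=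
  reaches_of_apply (by rwa [Function.update_self])

/-- κ is preserved by rerouting `u` (which reaches `v`) to `w` (which does not). -/
lemma kappa_eq {g : V → V} {v u w : V} (hgv : g v = v) (huv : u ≠ v)
    (hu : Reaches g u v) (hw : ¬ Reaches g w v) :
    kap v g = kap v (Function.update g u w) := by
  set g' := Function.update g u w with hg'
  have hwu : ¬ Reaches g w u := fun h => hw (reaches_trans_s3 h hu)
  have hg'v : g' v = v := update_fix_v hgv huv w
  unfold kap
  congr 1
  apply Finset.filter_congr
  intro b hb
  constructor
  · rintro ⟨-, hok⟩
    refine ⟨hg'v, fun y => ?_⟩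
    by_cases hyu : Reaches g y u
    · -- y reaches u, hence v in g; in g' it reaches v or u; from u it reaches b
      have hyv : Reaches g y v := reaches_trans_s3 hyu hu
      rcases reaches_update_or (u := u) (w := w) hyv with h | h
      · exact Or.inl h
      · right
        apply reaches_trans_s3 h
        apply reaches_update_start
        · intro hub
          rcases hok w with h2 | h2
          · exact hw h2
          · rw [← hub] at h2; exact hwu h2
        · rcases hok w with h2 | h2
          · exact absurd h2 hw
          · exact (reaches_update_iff_of_not_reaches hwu).mpr h2
    · rcases hok y with h | h
      · exact Or.inl ((reaches_update_iff_of_not_reaches hyu).mpr h)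
      · exact Or.inr ((reaches_update_iff_of_not_reaches hyu).mpr h)
  · rintro ⟨-, hok⟩
    refine ⟨hgv, fun y => ?_⟩
    by_cases hyu : Reaches g y u
    · exact Or.inl (reaches_trans_s3 hyu hu)
    · have hyu' : ¬ Reaches g' y u := fun h => hyu (reaches_update_self_iff.mp h)
      have hiter : ∀ t, Reaches g' y t ↔ Reaches g y t := by
        intro t
        rw [hg', reaches_update_iff_of_not_reaches hyu]
      rcases hok y with h | h
      · exact Or.inl ((hiter v).mp h)
      · exact Or.inr ((hiter b).mp h)

/-- If `u` is on a cycle avoiding `v` and some vertex avoids both `v` and `u`,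
then no vertex works as a second root: κ = 0. -/
lemma periodic_kappa_zero {g : V → V} {v u : V} {t : ℕ} (ht : g^[t] u = u)
    (htpos : 0 < t) (hunv : ¬ Reaches g u v) {y₀ : V} (hy₀v : ¬ Reaches g y₀ v)
    (hy₀u : ¬ Reaches g y₀ u) : kap v g = 0 := by
  rw [kap, Finset.card_eq_zero]
  apply Finset.filter_false_of_mem
  rintro b hb ⟨-, hok⟩
  have h1 : Reaches g y₀ b := (hok y₀).resolve_left hy₀v
  have h2 : Reaches g u b := (hok u).resolve_left hunv
  have h3 : Reaches g b u := periodic_pred ht htpos h2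
  exact hy₀u (reaches_trans_s3 h1 h3)

/-- Rerouting `u` to `w` where `w` reaches `u` creates a cycle through `u`. -/
lemma cycleform {g : V → V} {u w : V} (hwu : Reaches g w u) :
    (∀ j, j ≤ htime g w u → (Function.update g u w)^[j + 1] u = g^[j] w) ∧
      (Function.update g u w)^[htime g w u + 1] u = u := by
  have hstep : ∀ j, j ≤ htime g w u → (Function.update g u w)^[j + 1] u = g^[j] w := by
    intro j hj
    rw [Function.iterate_succ_apply, Function.update_self]
    apply iterate_update_eq (fun i hi => htime_min hwu (lt_of_lt_of_le hi hj)) j le_rfl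
  exact ⟨hstep, by rw [hstep _ le_rfl, htime_spec hwu]⟩

/-- In the tree case, rerouting `u` to a `w` in its subtree gives κ = cycle length. -/
lemma kap_cycle {g : V → V} {v u w : V} (hgv : g v = v) (huv : u ≠ v)
    (htree : istree v g) (hwu : Reaches g w u) :
    kap v (Function.update g u w) = htime g w u + 1 := by
  set g' := Function.update g u w with hg'
  set m := htime g w u with hm
  obtain ⟨hstep, hper⟩ := cycleform hwu
  have hTpos : 0 < m + 1 := Nat.succ_pos m
  have hminT : ∀ j, 0 < j → j < m + 1 → g'^[j] u ≠ u := by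
    intro j hj0 hjT
    obtain ⟨i, rfl⟩ := Nat.exists_eq_add_of_lt hj0
    rw [zero_add, hstep i (by rw [← hm]; omega)]
    exact htime_min hwu (by rw [← hm]; omega)
  have hunv' : ¬ Reaches g' u v := by
    intro h
    exact huv (periodic_fix hper hTpos (update_fix_v hgv huv w) h)
  have hset : (Finset.univ.erase v).filter (fun b => OKP v b g')
      = (Finset.range (m + 1)).image (fun j => g'^[j] u) := by
    ext b
    simp only [Finset.mem_filter]
    constructor
    · rintro ⟨hbe, hok⟩
      rcases hok.2 u with h | h
      · exact absurd h hunv'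
      · exact reaches_mem_orbit hper hTpos h
    · intro hbmem
      obtain ⟨j, hj, hjb⟩ := Finset.mem_image.mp hbmem
      have hbv : b ≠ v := by
        intro hbv
        rcases Nat.eq_zero_or_pos j with h0 | h0
        · rw [h0] at hjb; exact huv (hjb.trans hbv)
        · obtain ⟨i, rfl⟩ := Nat.exists_eq_add_of_lt h0
          have hile : i ≤ m := by
            have := Finset.mem_range.mp hj
            omega
          rw [zero_add, hstep i (by rw [← hm]; exact hile)] at hjb
          have : g^[m] w = v := by
            have hmi : m - i + i = m := by omega
            rw [← hmi, Function.iterate_add_apply, hjb, hbv, Function.iterate_fixed hgv]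
          exact huv (by rw [← htime_spec hwu, ← hm, this])
      refine ⟨Finset.mem_erase.mpr ⟨hbv, Finset.mem_univ _⟩,
        update_fix_v hgv huv w, fun y => ?_⟩
      rcases reaches_update_or (u := u) (w := w) (htree y) with h | h
      · exact Or.inl h
      · exact Or.inr (reaches_trans_s3 h ⟨j, hjb⟩)
  rw [kap, hset, orbit_card hper hminT]

/-- Case (a): both trees. -/
lemma key_tt {g : V → V} {v u w : V} (hgv : g v = v) (huv : u ≠ v)
    (h1 : istree v g) (h2 : istree v (Function.update g u w)) :
    gam v g u w + gam v (Function.update g u w) u (g u) = 0 := by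
  set g' := Function.update g u w with hg'
  have hg'v : g' v = v := update_fix_v hgv huv w
  have hnwu : ¬ Reaches g w u := by
    intro hwu
    obtain ⟨-, hper⟩ := cycleform hwu
    exact huv (periodic_fix hper (Nat.succ_pos _) hg'v (h2 u))
  have hnw'u : ¬ Reaches g (g u) u := by
    rintro ⟨k, hk⟩
    have hper : g^[k + 1] u = u := by rwa [Function.iterate_succ_apply]
    exact huv (periodic_fix hper (Nat.succ_pos _) hgv (h1 u))
  have e1 : cnt v g u + htime g u v = (Finset.univ.erase v).card := cnt_tree hgv h1
  have e2 : cnt v g w + htime g w v = (Finset.univ.erase v).card := cnt_tree hgv h1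
  have e3 : cnt v g' u + htime g' u v = (Finset.univ.erase v).card := cnt_tree hg'v h2
  have e4 : cnt v g' (g u) + htime g' (g u) v = (Finset.univ.erase v).card :=
    cnt_tree hg'v h2
  have hw : htime g' w v = htime g w v :=
    htime_congr (fun k => iterate_update_of_not_reaches hnwu k)
  have hw' : htime g' (g u) v = htime g (g u) v :=
    htime_congr (fun k => iterate_update_of_not_reaches hnw'u k)
  have hu' : htime g' u v = htime g' w v + 1 := by
    rw [htime_succ (h2 u) huv]
    congr 2
    exact Function.update_self _ _ _
  have hu2 : htime g u v = htime g (g u) v + 1 := htime_succ (h1 u) huv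
  have hnat : cnt v g u + cnt v g' u + 2 = cnt v g w + cnt v g' (g u) := by omega
  have hcast : (cnt v g u : ℝ) + cnt v g' u + 2 = cnt v g w + cnt v g' (g u) := by
    exact_mod_cast hnat
  rw [gam, gam, if_pos h1, if_pos h2]
  linarith

/-- Case (b): tree becomes non-tree. -/
lemma key_tn {g : V → V} {v u w : V} (hgv : g v = v) (huv : u ≠ v)
    (h1 : istree v g) (h2 : ¬ istree v (Function.update g u w)) :
    gam v g u w + gam v (Function.update g u w) u (g u) = 0 := by
  set g' := Function.update g u w with hg'
  have hg'v : g' v = v := update_fix_v hgv huv w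
  have hwu : Reaches g w u := by
    by_contra hnwu
    apply h2
    intro x
    rcases reaches_update_or (u := u) (w := w) (h1 x) with h | h
    · exact h
    · refine reaches_trans_s3 h (reaches_update_start huv ?_)
      rw [← hg', reaches_update_iff_of_not_reaches hnwu]
      exact h1 w
  obtain ⟨hstep, hper⟩ := cycleform hwu
  set m := htime g w u with hm
  have hnR'u : ¬ Reaches g' u v := fun h =>
    huv (periodic_fix hper (Nat.succ_pos _) hg'v h)
  have hnw'u : ¬ Reaches g (g u) u := by
    rintro ⟨k, hk⟩
    have hperg : g^[k + 1] u = u := by rwa [Function.iterate_succ_apply]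
    exact huv (periodic_fix hperg (Nat.succ_pos _) hgv (h1 u))
  have hR'w' : Reaches g' (g u) v := by
    rw [hg', reaches_update_iff_of_not_reaches hnw'u]
    exact h1 (g u)
  have e1 : cnt v g u + htime g u v = (Finset.univ.erase v).card := cnt_tree hgv h1
  have e2 : cnt v g w + htime g w v = (Finset.univ.erase v).card := cnt_tree hgv h1
  have hcnt1 : cnt v g' u = 0 := by
    rw [cnt_nontree hg'v h2, if_neg hnR'u]
  have hcnt2 : cnt v g' (g u) = kap v g' := by
    rw [cnt_nontree hg'v h2, if_pos hR'w']
  have hkap : kap v g' = m + 1 := kap_cycle hgv huv h1 hwu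
  have hadd : htime g w v = m + htime g u v := htime_add hgv huv hwu (h1 u)
  have hnat : cnt v g u = cnt v g w + m := by omega
  have hcast : (cnt v g u : ℝ) = cnt v g w + m := by exact_mod_cast hnat
  rw [gam, gam, if_pos h1, if_neg h2, hcnt1, hcnt2, hkap]
  push_cast
  linarith

/-- Case (d): both non-trees. -/
lemma key_nn {g : V → V} {v u w : V} (hgv : g v = v) (huv : u ≠ v)
    (h1 : ¬ istree v g) (h2 : ¬ istree v (Function.update g u w)) :
    gam v g u w + gam v (Function.update g u w) u (g u) = 0 := by
  set g' := Function.update g u w with hg'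
  have hg'v : g' v = v := update_fix_v hgv huv w
  have hguw : g' u = w := Function.update_self _ _ _
  have c1 : cnt v g u = if Reaches g u v then kap v g else 0 := cnt_nontree hgv h1
  have c2 : cnt v g w = if Reaches g w v then kap v g else 0 := cnt_nontree hgv h1
  have c3 : cnt v g' u = if Reaches g' u v then kap v g' else 0 := cnt_nontree hg'v h2
  have c4 : cnt v g' (g u) = if Reaches g' (g u) v then kap v g' else 0 :=
    cnt_nontree hg'v h2
  rw [gam, gam, if_neg h1, if_neg h2, c1, c2, c3, c4]
  by_cases hu : Reaches g u v
  · have hnw'u : ¬ Reaches g (g u) u := by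
      rintro ⟨k, hk⟩
      have hperg : g^[k + 1] u = u := by rwa [Function.iterate_succ_apply]
      exact huv (periodic_fix hperg (Nat.succ_pos _) hgv hu)
    have hR'w' : Reaches g' (g u) v := by
      rw [hg', reaches_update_iff_of_not_reaches hnw'u]
      exact reaches_apply_of_ne hu huv
    by_cases hwv : Reaches g w v
    · by_cases hwu : Reaches g w u
      · -- (d1a-i): cycle through u in g', κ' = 0
        obtain ⟨hstep, hper⟩ := cycleform hwu
        have hnR'u : ¬ Reaches g' u v := fun h =>
          huv (periodic_fix hper (Nat.succ_pos _) hg'v h)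
        obtain ⟨y₀, hy₀⟩ := not_forall.mp h1
        have hy₀u : ¬ Reaches g y₀ u := fun h => hy₀ (reaches_trans_s3 h hu)
        have hy₀v' : ¬ Reaches g' y₀ v := by
          rw [hg', reaches_update_iff_of_not_reaches hy₀u]; exact hy₀
        have hy₀u' : ¬ Reaches g' y₀ u := fun h => hy₀u (reaches_update_self_iff.mp h)
        have hk0 : kap v g' = 0 := periodic_kappa_zero hper (Nat.succ_pos _) hnR'u hy₀v' hy₀u'
        rw [if_pos hu, if_pos hwv, hk0]
        simp
      · -- (d1a-ii)
        have hR'w : Reaches g' w v := by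
          rw [hg', reaches_update_iff_of_not_reaches hwu]; exact hwv
        have hR'u : Reaches g' u v := reaches_update_start huv hR'w
        rw [if_pos hu, if_pos hwv, if_pos hR'u, if_pos hR'w']
        ring
    · -- (d1b)
      have hnwu : ¬ Reaches g w u := fun h => hwv (reaches_trans_s3 h hu)
      have hnR'w : ¬ Reaches g' w v := by
        rw [hg', reaches_update_iff_of_not_reaches hnwu]; exact hwv
      have hnR'u : ¬ Reaches g' u v := by
        intro h
        exact hnR'w (by rw [← hguw]; exact reaches_apply_of_ne h huv)
      have hkeq : kap v g = kap v g' := kappa_eq hgv huv hu hwv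
      rw [if_pos hu, if_neg hwv, if_neg hnR'u, if_pos hR'w', hkeq]
      ring
  · have hnw'v : ¬ Reaches g (g u) v := fun h => hu (reaches_of_apply h)
    by_cases hwv : Reaches g w v
    · -- (d2a)
      have hnwu : ¬ Reaches g w u := by
        intro hwu
        rcases reaches_order hwu hwv with h | h
        · exact hu h
        · exact huv (reaches_fix hgv h)
      have hR'w : Reaches g' w v := by
        rw [hg', reaches_update_iff_of_not_reaches hnwu]; exact hwv
      have hR'u : Reaches g' u v := reaches_update_start huv hR'w
      by_cases hw'u : Reaches g (g u) u
      · -- (d2a-i): u on a g-cycle, κ = 0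
        obtain ⟨k, hk⟩ := hw'u
        have hperg : g^[k + 1] u = u := by rwa [Function.iterate_succ_apply]
        obtain ⟨y₀, hy₀⟩ := not_forall.mp h2
        have hy₀u' : ¬ Reaches g' y₀ u := fun h => hy₀ (reaches_trans_s3 h hR'u)
        have hy₀u : ¬ Reaches g y₀ u := fun h => hy₀u' (reaches_update_self w h)
        have hy₀v : ¬ Reaches g y₀ v := by
          rw [← reaches_update_iff_of_not_reaches (w := w) hy₀u]
          exact hy₀
        have hk0 : kap v g = 0 := periodic_kappa_zero hperg (Nat.succ_pos _) hu hy₀v hy₀u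
        have hR'w'2 : Reaches g' (g u) v := by
          refine reaches_trans_s3 ?_ hR'u
          exact reaches_update_self_iff.mpr ⟨k, hk⟩
        rw [if_neg hu, if_pos hwv, if_pos hR'u, if_pos hR'w'2, hk0]
        simp
      · -- (d2a-ii)
        have hnR'w' : ¬ Reaches g' (g u) v := by
          rw [hg', reaches_update_iff_of_not_reaches hw'u]
          exact hnw'v
        have hkeq : kap v g' = kap v g := by
          have h5 := kappa_eq (g := g') (u := u) (w := g u) hg'v huv hR'u hnR'w'
          rw [hg', update_update_self] at h5
          exact h5
        rw [if_neg hu, if_pos hwv, if_pos hR'u, if_neg hnR'w', hkeq]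
        ring
    · -- (d2b)
      have hnR'u : ¬ Reaches g' u v := by
        intro h
        have hR'w : Reaches g' w v := by rw [← hguw]; exact reaches_apply_of_ne h huv
        by_cases hwu : Reaches g' w u
        · obtain ⟨k, hk⟩ := hwu
          have hper : g'^[k + 1] w = w := by
            rw [Function.iterate_succ_apply', hk, hguw]
          have hwv2 : w = v := periodic_fix hper (Nat.succ_pos _) hg'v hR'w
          exact hwv (hwv2 ▸ reaches_refl g v)
        · have : ¬ Reaches g w u := fun h' => hwu (reaches_update_self w h')
          rw [hg', reaches_update_iff_of_not_reaches this] at hR'w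
          exact hwv hR'w
      have hnR'w' : ¬ Reaches g' (g u) v := by
        intro h
        by_cases hw'u : Reaches g' (g u) u
        · rcases reaches_order h hw'u with h2 | h2
          · exact huv (reaches_fix hg'v h2)
          · exact hnR'u h2
        · have hnw : ¬ Reaches g (g u) u := fun h' => hw'u (reaches_update_self w h')
          rw [hg', reaches_update_iff_of_not_reaches hnw] at h
          exact hnw'v h
      rw [if_neg hu, if_neg hwv, if_neg hnR'u, if_neg hnR'w']
      ring

end Key2
section KeyFlip
variable {V : Type*} [Fintype V] [DecidableEq V]

lemma key_flip {g : V → V} {v u : V} (hgv : g v = v) (huv : u ≠ v) (w : V) :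
    gam v g u w + gam v (Function.update g u w) u (g u) = 0 := by
  by_cases h1 : istree v g <;> by_cases h2 : istree v (Function.update g u w)
  · exact key_tt hgv huv h1 h2
  · exact key_tn hgv huv h1 h2
  · have hg : Function.update (Function.update g u w) u (g u) = g := update_update_self g u w
    have h2' : ¬ istree v (Function.update (Function.update g u w) u (g u)) := by rwa [hg]
    have h3 := key_tn (update_fix_v hgv huv w) huv h2 h2'
    rw [hg, Function.update_self] at h3
    linarith
  · exact key_nn hgv huv h1 h2

end KeyFlip
section Sums
variable {V : Type*} [Fintype V] [DecidableEq V]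

noncomputable def ind (p : Prop) : ℝ := if p then 1 else 0

noncomputable def fullWeight (ω : V → V → ℝ) (m : V → V) : ℝ := ∏ z, ω z (m z)

noncomputable def tauR (ω : V → V → ℝ) (v : V) : ℝ :=
  ∑ g ∈ Finset.univ.filter (fun g : V → V => g v = v ∧ istree v g), treeWeight ω v g

noncomputable def phi (ω : V → V → ℝ) (v x : V) : ℝ :=
  ∑ g ∈ Finset.univ.filter (fun g : V → V => g v = v), treeWeight ω v g * (cnt v g x : ℝ)

noncomputable def CC (ω : V → V → ℝ) : ℝ := ∑ b, deg ω b * tauR ω b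

noncomputable def ecnt (m : V → V) : ℕ :=
  (Finset.univ.filter (fun b => ∀ y, Reaches m y b)).card

lemma sum_ind {p : V → Prop} : ∑ b, ind (p b) = ((Finset.univ.filter p).card : ℝ) := by
  rw [Finset.card_filter]
  push_cast
  apply Finset.sum_congr rfl
  intro b _
  rw [ind]

lemma update_self_of_fix {p : V → V} {r : V} (hpr : p r = r) : Function.update p r r = p := by
  funext x
  rcases eq_or_ne x r with rfl | hx
  · rw [Function.update_self, hpr]
  · rw [Function.update_of_ne hx]

/-- Reindex pairs (map fixing `r`, extra value `c`) as full maps via surgery at `r`. -/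
lemma sum_update_reindex' (r : V) (Q : (V → V) → Prop) [DecidablePred Q]
    (hQ : ∀ p, Q p → p r = r) (G : (V → V) → V → ℝ) :
    ∑ p ∈ Finset.univ.filter Q, ∑ c : V, G p c
      = ∑ m ∈ Finset.univ.filter (fun m : V → V => Q (Function.update m r r)),
          G (Function.update m r r) (m r) := by
  rw [← Finset.sum_product']
  apply Finset.sum_nbij' (fun x => Function.update x.1 r x.2)
    (fun m => (Function.update m r r, m r))
  · rintro ⟨p, c⟩ hpc
    rw [Finset.mem_product, Finset.mem_filter] at hpc
    obtain ⟨⟨-, hP⟩, -⟩ := hpc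
    simp only [Finset.mem_filter, Finset.mem_univ, true_and]
    rwa [Function.update_idem, update_self_of_fix (hQ p hP)]
  · intro m hm
    simp only [Finset.mem_filter, Finset.mem_univ, true_and] at hm
    simp [Finset.mem_product, Finset.mem_filter, Function.update_self, hm]
  · rintro ⟨p, c⟩ hpc
    rw [Finset.mem_product, Finset.mem_filter] at hpc
    obtain ⟨⟨-, hP⟩, -⟩ := hpc
    simp [Function.update_idem, update_self_of_fix (hQ p hP), Function.update_self]
  · intro m hm
    exact update_update_self m r r
  · rintro ⟨p, c⟩ hpc
    rw [Finset.mem_product, Finset.mem_filter] at hpc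
    obtain ⟨⟨-, hP⟩, -⟩ := hpc
    rw [Function.update_idem, update_self_of_fix (hQ p hP), Function.update_self]

lemma ind_congr {p q : Prop} (h : p ↔ q) : ind p = ind q := by
  by_cases hp : p
  · rw [ind, ind, if_pos hp, if_pos (h.mp hp)]
  · rw [ind, ind, if_neg hp, if_neg (fun hq => hp (h.mpr hq))]

lemma fullWeight_split (ω : V → V → ℝ) (m : V → V) (r : V) :
    fullWeight ω m = ω r (m r) * treeWeight ω r (Function.update m r r) := by
  rw [fullWeight, ← Finset.mul_prod_erase Finset.univ _ (Finset.mem_univ r), treeWeight]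
  congr 1
  apply Finset.prod_congr rfl
  intro z hz
  rw [Function.update_of_ne (Finset.mem_erase.mp hz).1]

lemma treeWeight_update (ω : V → V → ℝ) {v u : V} (huv : u ≠ v) (g : V → V) (w : V) :
    ω u w * treeWeight ω v g = ω u (g u) * treeWeight ω v (Function.update g u w) := by
  have hu : u ∈ Finset.univ.erase v := Finset.mem_erase.mpr ⟨huv, Finset.mem_univ _⟩
  rw [treeWeight, treeWeight, ← Finset.mul_prod_erase _ _ hu, ← Finset.mul_prod_erase _ _ hu,
    Function.update_self]
  rw [show ((Finset.univ.erase v).erase u).prod (fun z => ω z (Function.update g u w z))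
      = ((Finset.univ.erase v).erase u).prod (fun z => ω z (g z)) from
    Finset.prod_congr rfl fun z hz => by
      rw [Function.update_of_ne (Finset.mem_erase.mp hz).1]]
  ring

lemma tauR_eq (ω : V → V → ℝ) (v : V) :
    tauR ω v = ∑ g ∈ Finset.univ.filter (fun g : V → V => g v = v),
      treeWeight ω v g * ind (istree v g) := by
  rw [tauR, ← Finset.filter_filter, Finset.sum_filter]
  apply Finset.sum_congr rfl
  intro g _
  rw [ind, mul_ite, mul_one, mul_zero]

lemma row_integrand (ω : V → V → ℝ) (v u w : V) :
    phi ω v u + tauR ω v - phi ω v w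
      = ∑ g ∈ Finset.univ.filter (fun g : V → V => g v = v),
          treeWeight ω v g * gam v g u w := by
  rw [phi, phi, tauR_eq, ← Finset.sum_add_distrib, ← Finset.sum_sub_distrib]
  apply Finset.sum_congr rfl
  intro g _
  rw [gam, ind]
  ring

/-- Main row identity, off-diagonal case, via the involution `(w, g) ↦ (g u, g[u ↦ w])`. -/
lemma main_row_ne (ω : V → V → ℝ) {v u : V} (huv : u ≠ v) :
    ∑ w, ω u w * (phi ω v u + tauR ω v - phi ω v w) = 0 := by
  have hrw : ∀ w, ω u w * (phi ω v u + tauR ω v - phi ω v w)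
      = ∑ g ∈ Finset.univ.filter (fun g : V → V => g v = v),
          treeWeight ω v g * ω u w * gam v g u w := by
    intro w
    rw [row_integrand, Finset.mul_sum]
    apply Finset.sum_congr rfl
    intro g _
    ring
  simp only [hrw]
  rw [← Finset.sum_product']
  apply Finset.sum_involution
    (g := fun p _ => ((p.2 : V → V) u, Function.update p.2 u p.1))
  · rintro ⟨w, g⟩ hp
    have hgv : g v = v := by
      simpa [Finset.mem_product, Finset.mem_filter] using hp
    have hweq : treeWeight ω v g * ω u w
        = treeWeight ω v (Function.update g u w) * ω u (g u) := by
      have := treeWeight_update ω huv g w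
      linarith
    simp only
    rw [hweq]
    rw [← mul_add]
    rw [key_flip hgv huv w]
    ring
  · rintro ⟨w, g⟩ hp hF heq
    have hgv : g v = v := by
      simpa [Finset.mem_product, Finset.mem_filter] using hp
    have h1 : g u = w := congrArg Prod.fst heq
    have h2 : Function.update g u w = g := by
      rw [← h1, Function.update_eq_self]
    have hkey := key_flip hgv huv w
    rw [h2, h1] at hkey
    apply hF
    simp only
    have : gam v g u w = 0 := by linarith
    rw [this, mul_zero]
  · rintro ⟨w, g⟩ hp
    have hgv : g v = v := by
      simpa [Finset.mem_product, Finset.mem_filter] using hp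
    simp only [Finset.mem_product, Finset.mem_filter, Finset.mem_univ, true_and]
    rw [Function.update_of_ne (Ne.symm huv)]
    exact hgv
  · rintro ⟨w, g⟩ hp
    simp only
    rw [Function.update_self, update_update_self]

end Sums
section Sums2
variable {V : Type*} [Fintype V] [DecidableEq V]

lemma kap_tree {v : V} {g : V → V} (hgv : g v = v) (ht : istree v g) :
    kap v g = (Finset.univ.erase v).card := by
  rw [kap]
  congr 1
  apply Finset.filter_true_of_mem
  intro b _
  exact OKP_of_tree hgv ht

lemma ecnt_tree {m : V → V} {v : V} (htree : istree v (Function.update m v v)) :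
    ecnt m = htime (Function.update m v v) (m v) v + 1 := by
  set gm := Function.update m v v with hgm
  have hr : Reaches gm (m v) v := htree (m v)
  have hmeq : Function.update gm v (m v) = m := update_update_self m v v
  obtain ⟨hstep, hper⟩ := cycleform hr
  rw [hmeq] at hstep hper
  have hminT : ∀ j, 0 < j → j < htime gm (m v) v + 1 → m^[j] v ≠ v := by
    intro j hj0 hjT
    obtain ⟨i, rfl⟩ := Nat.exists_eq_add_of_lt hj0
    rw [zero_add, hstep i (by omega)]
    exact htime_min hr (by omega)
  have hset : Finset.univ.filter (fun b => ∀ y, Reaches m y b)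
      = (Finset.range (htime gm (m v) v + 1)).image (fun j => m^[j] v) := by
    ext b
    simp only [Finset.mem_filter, Finset.mem_univ, true_and]
    constructor
    · intro hb
      exact reaches_mem_orbit hper (Nat.succ_pos _) (hb v)
    · intro hbmem y
      have h1 : Reaches m y v := by
        have h2 := reaches_update_or (u := v) (w := m v) (htree y)
        rw [hmeq] at h2
        exact h2.elim id id
      obtain ⟨j, hj, hjb⟩ := Finset.mem_image.mp hbmem
      exact reaches_trans_s3 h1 ⟨j, hjb⟩
  rw [ecnt, hset, orbit_card hper hminT]

lemma ecnt_nontree_reach {m : V → V} {v : V} (hnt : ¬ istree v (Function.update m v v))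
    (hmv : Reaches (Function.update m v v) (m v) v) : ecnt m = 0 := by
  set gm := Function.update m v v with hgm
  have hmeq : Function.update gm v (m v) = m := update_update_self m v v
  obtain ⟨-, hper⟩ := cycleform hmv
  rw [hmeq] at hper
  obtain ⟨y₀, hy₀⟩ := not_forall.mp hnt
  rw [ecnt, Finset.card_eq_zero]
  apply Finset.filter_false_of_mem
  intro b hb hball
  have h1 : Reaches m v b := hball v
  have h2 : Reaches m b v := periodic_pred hper (Nat.succ_pos _) h1
  have h3 : Reaches m y₀ v := reaches_trans_s3 (hball y₀) h2
  have h4 := reaches_of_update_or (u := v) (w := m v) (x := y₀) (t := v)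
    (by rw [hmeq]; exact h3)
  exact hy₀ (h4.elim id id)

lemma ecnt_nontree_noreach {m : V → V} {v : V} (hnt : ¬ istree v (Function.update m v v))
    (hnmv : ¬ Reaches (Function.update m v v) (m v) v) :
    ecnt m = kap v (Function.update m v v) := by
  set gm := Function.update m v v with hgm
  have hgv : gm v = v := Function.update_self _ _ _
  have hmeq : Function.update gm v (m v) = m := update_update_self m v v
  obtain ⟨y₀, hy₀⟩ := not_forall.mp hnt
  have htrans : ∀ y t, ¬ Reaches gm y v → (Reaches m y t ↔ Reaches gm y t) := by
    intro y t hy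
    rw [← hmeq]
    exact reaches_update_iff_of_not_reaches hy
  have hforward : ∀ y, Reaches gm y v → Reaches m y v := by
    intro y hy
    have h2 := reaches_update_or (u := v) (w := m v) hy
    rw [hmeq] at h2
    exact h2.elim id id
  have hback : ∀ y, Reaches m y v → Reaches gm y v := by
    intro y hy
    have h2 := reaches_of_update_or (u := v) (w := m v) (by rw [hmeq]; exact hy)
    exact h2.elim id id
  have hset : Finset.univ.filter (fun b => ∀ y, Reaches m y b)
      = (Finset.univ.erase v).filter (fun b => OKP v b gm) := by
    ext b
    simp only [Finset.mem_filter, Finset.mem_univ, true_and, Finset.mem_erase]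
    constructor
    · intro hb
      have hbv : b ≠ v := by
        intro hbv
        exact hy₀ (hback y₀ (by rw [← hbv]; exact hb y₀))
      refine ⟨⟨hbv, trivial⟩, hgv, fun y => ?_⟩
      by_cases hyv : Reaches gm y v
      · exact Or.inl hyv
      · exact Or.inr ((htrans y b hyv).mp (hb y))
    · rintro ⟨⟨hbv, -⟩, -, hok⟩
      intro y
      have hmvz : Reaches m (m v) b := by
        have h5 : Reaches gm (m v) b := (hok (m v)).resolve_left hnmv
        exact (htrans _ b hnmv).mpr h5
      have hvb : Reaches m v b := reaches_of_apply hmvz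
      by_cases hyv : Reaches gm y v
      · exact reaches_trans_s3 (hforward y hyv) hvb
      · exact (htrans y b hyv).mpr ((hok y).resolve_left hyv)
  rw [ecnt, kap, hset]

lemma point_eq (v : V) (m : V → V) :
    gam v (Function.update m v v) v (m v) = (ecnt m : ℝ) := by
  set gm := Function.update m v v with hgm
  have hgv : gm v = v := Function.update_self _ _ _
  rw [gam, cnt_self]
  by_cases ht : istree v gm
  · rw [if_pos ht, kap_tree hgv ht, ecnt_tree (v := v) (by rw [← hgm]; exact ht)]
    have e2 : cnt v gm (m v) + htime gm (m v) v = (Finset.univ.erase v).card :=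
      cnt_tree hgv ht
    have e3 : (cnt v gm (m v) : ℝ) + htime gm (m v) v = (Finset.univ.erase v).card := by
      exact_mod_cast e2
    push_cast
    linarith
  · rw [if_neg ht, cnt_nontree hgv ht]
    by_cases hmv : Reaches gm (m v) v
    · rw [if_pos hmv, ecnt_nontree_reach (v := v) (by rw [← hgm]; exact ht)
        (by rw [← hgm]; exact hmv)]
      simp
    · rw [if_neg hmv, ecnt_nontree_noreach (v := v) (by rw [← hgm]; exact ht)
        (by rw [← hgm]; exact hmv)]
      rw [← hgm]
      simp

lemma degtau (ω : V → V → ℝ) (b : V) :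
    deg ω b * tauR ω b = ∑ m : V → V, fullWeight ω m * ind (∀ y, Reaches m y b) := by
  rw [mul_comm, tauR, Finset.sum_mul]
  simp only [deg, Finset.mul_sum]
  rw [sum_update_reindex' b (fun p => p b = b ∧ istree b p) (fun p h => h.1)
    (fun p c => treeWeight ω b p * ω b c)]
  rw [Finset.sum_filter]
  apply Finset.sum_congr rfl
  intro m _
  have hiff : ((Function.update m b b) b = b ∧ istree b (Function.update m b b))
      ↔ ∀ y, Reaches m y b := by
    constructor
    · rintro ⟨-, h⟩ y
      exact reaches_update_self_iff.mp (h y)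
    · intro h
      exact ⟨Function.update_self _ _ _, fun y => reaches_update_self_iff.mpr (h y)⟩
  rw [ind, fullWeight_split ω m b]
  by_cases h : ∀ y, Reaches m y b
  · rw [if_pos (hiff.mpr h), if_pos h, mul_one, mul_comm]
  · rw [if_neg (fun hh => h (hiff.mp hh)), if_neg h, mul_zero]

lemma CC_eq (ω : V → V → ℝ) : CC ω = ∑ m : V → V, fullWeight ω m * (ecnt m : ℝ) := by
  rw [CC]
  simp only [degtau]
  rw [Finset.sum_comm]
  apply Finset.sum_congr rfl
  intro m _
  rw [← Finset.mul_sum, sum_ind]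
  congr 1
  norm_cast
  rw [ecnt]
  congr!

lemma main_row_eq (ω : V → V → ℝ) (v : V) :
    ∑ w, ω v w * (phi ω v v + tauR ω v - phi ω v w) = CC ω := by
  have hrw : ∀ w, ω v w * (phi ω v v + tauR ω v - phi ω v w)
      = ∑ g ∈ Finset.univ.filter (fun g : V → V => g v = v),
          treeWeight ω v g * ω v w * gam v g v w := by
    intro w
    rw [row_integrand, Finset.mul_sum]
    apply Finset.sum_congr rfl
    intro g _
    ring
  simp only [hrw]
  rw [Finset.sum_comm]
  rw [sum_update_reindex' v (fun g : V → V => g v = v) (fun p h => h)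
    (fun g w => treeWeight ω v g * ω v w * gam v g v w)]
  rw [CC_eq]
  rw [show Finset.univ.filter (fun m : V → V => (Function.update m v v) v = v)
      = Finset.univ from Finset.filter_true_of_mem (fun m _ => Function.update_self _ _ _)]
  apply Finset.sum_congr rfl
  intro m _
  rw [point_eq v m, fullWeight_split ω m v]
  ring

lemma uniq_sum (m : V → V) (b : V) :
    ∑ u, ind (m u = b ∧ ∀ y, Reaches m y u) = ind (∀ y, Reaches m y b) := by
  by_cases hall : ∀ y, Reaches m y b
  · rw [ind, if_pos hall]
    obtain ⟨k, hk⟩ := hall (m b)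
    have hper : m^[k + 1] b = b := by rw [Function.iterate_succ_apply]; exact hk
    have hustar_m : m (m^[k] b) = b := by
      calc m (m^[k] b) = m^[k + 1] b := (Function.iterate_succ_apply' m k b).symm
        _ = b := hper
    have hustar_r : ∀ y, Reaches m y (m^[k] b) := fun y => reaches_trans_s3 (hall y) ⟨k, rfl⟩
    have hiff : ∀ u, (m u = b ∧ ∀ y, Reaches m y u) ↔ u = m^[k] b := by
      intro u
      constructor
      · rintro ⟨hmu, hru⟩
        obtain ⟨j, hj⟩ := hustar_r u
        obtain ⟨i, hi⟩ := hru (m^[k] b)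
        cases j with
        | zero => exact hj
        | succ j' =>
          cases i with
          | zero => exact hi.symm
          | succ i' =>
            rw [Function.iterate_succ_apply, hmu] at hj
            rw [Function.iterate_succ_apply, hustar_m] at hi
            have hj2 : m^[j' + 1] b = b := by
              rw [Function.iterate_succ_apply', hj, hustar_m]
            have hi2 : m^[i' + 1] b = b := by
              rw [Function.iterate_succ_apply', hi, hmu]
            have e1 : u = m^[i' + (j' + 1)] b := by
              rw [Function.iterate_add_apply, hj2, hi]
            have e2 : m^[k] b = m^[j' + (i' + 1)] b := by
              rw [Function.iterate_add_apply, hi2, hj]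
            rw [e1, e2, show i' + (j' + 1) = j' + (i' + 1) by omega]
      · rintro rfl
        exact ⟨hustar_m, hustar_r⟩
    calc ∑ u, ind (m u = b ∧ ∀ y, Reaches m y u) = ∑ u, ind (u = m^[k] b) :=
          Finset.sum_congr rfl fun u _ => ind_congr (hiff u)
      _ = ind ((m^[k] b : V) = m^[k] b)
          + ∑ u ∈ Finset.univ.erase (m^[k] b), ind (u = m^[k] b) :=
          (Finset.add_sum_erase _ _ (Finset.mem_univ _)).symm
      _ = 1 := by
          rw [ind, if_pos rfl, Finset.sum_eq_zero, add_zero]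
          intro u hu
          rw [ind, if_neg (Finset.mem_erase.mp hu).1]
  · rw [ind, if_neg hall]
    apply Finset.sum_eq_zero
    intro u _
    rw [ind, if_neg]
    rintro ⟨hmu, hru⟩
    exact hall fun y => reaches_trans_s3 (hru y) ⟨1, by simpa using hmu⟩

lemma tau_recurrence (ω : V → V → ℝ) (b : V) :
    ∑ u, ω u b * tauR ω u = deg ω b * tauR ω b := by
  have hstep : ∀ u, ω u b * tauR ω u
      = ∑ m ∈ Finset.univ.filter
          (fun m : V → V => m u = b ∧ istree u (Function.update m u u)), fullWeight ω m := by
    intro u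
    rw [tauR, Finset.mul_sum]
    apply Finset.sum_nbij' (i := fun p => Function.update p u b)
      (j := fun m => Function.update m u u)
    · intro p hp
      rw [Finset.mem_filter] at hp
      obtain ⟨-, hpu, hti⟩ := hp
      simp only [Finset.mem_filter, Finset.mem_univ, true_and]
      constructor
      · exact Function.update_self _ _ _
      · rwa [Function.update_idem, update_self_of_fix hpu]
    · intro m hm
      rw [Finset.mem_filter] at hm
      obtain ⟨-, hmu, hti⟩ := hm
      simp only [Finset.mem_filter, Finset.mem_univ, true_and]
      exact ⟨Function.update_self _ _ _, hti⟩
    · intro p hp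
      rw [Finset.mem_filter] at hp
      obtain ⟨-, hpu, -⟩ := hp
      rw [Function.update_idem, update_self_of_fix hpu]
    · intro m hm
      rw [Finset.mem_filter] at hm
      obtain ⟨-, hmu, -⟩ := hm
      rw [Function.update_idem, ← hmu, Function.update_eq_self]
    · intro p hp
      rw [Finset.mem_filter] at hp
      obtain ⟨-, hpu, -⟩ := hp
      rw [fullWeight_split ω (Function.update p u b) u, Function.update_self,
        Function.update_idem, update_self_of_fix hpu]
  simp only [hstep]
  simp only [Finset.sum_filter]
  rw [Finset.sum_comm]
  rw [degtau]
  apply Finset.sum_congr rfl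
  intro m _
  have hpoint : ∀ u, (if (m u = b ∧ istree u (Function.update m u u)) then fullWeight ω m else 0)
      = fullWeight ω m * ind (m u = b ∧ ∀ y, Reaches m y u) := by
    intro u
    have hiff : istree u (Function.update m u u) ↔ ∀ y, Reaches m y u :=
      forall_congr' fun y => reaches_update_self_iff
    rw [ind, mul_ite, mul_one, mul_zero]
    congr 1
    rw [eq_iff_iff]
    exact and_congr Iff.rfl hiff
  simp only [hpoint]
  rw [← Finset.mul_sum, uniq_sum m b]

end Sums2
section Graph
variable {V : Type*} [Fintype V] [DecidableEq V]

lemma trans_row_sum {ω : V → V → ℝ} {u : V} (hd : deg ω u ≠ 0) :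
    ∑ w, trans ω u w = 1 := by
  simp only [trans, Matrix.of_apply]
  rw [← Finset.sum_div, show ∑ w, ω u w = deg ω u from rfl, div_self hd]

lemma trans_row_sum_zero {ω : V → V → ℝ} {u : V} (hd : deg ω u = 0) :
    ∑ w, trans ω u w = 0 := by
  simp [trans, hd]

lemma deg_pos {ω : V → V → ℝ} (hnn : ∀ u v, 0 ≤ ω u v) {π : V → ℝ}
    (hπpos : ∀ v, 0 < π v) (hπsum : ∑ v, π v = 1)
    (hπstat : ∀ v, ∑ u, π u * trans ω u v = π v) (u₀ : V) : 0 < deg ω u₀ := by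
  rcases (Finset.sum_nonneg fun v _ => hnn u₀ v).lt_or_eq with h | h
  · exact h
  · exfalso
    have h1 : ∑ u, π u * ∑ v, trans ω u v = 1 := by
      calc ∑ u, π u * ∑ v, trans ω u v = ∑ u, ∑ v, π u * trans ω u v := by
            simp [Finset.mul_sum]
        _ = ∑ v, ∑ u, π u * trans ω u v := Finset.sum_comm
        _ = ∑ v, π v := Finset.sum_congr rfl fun v _ => hπstat v
        _ = 1 := hπsum
    have hs : ∀ u, ∑ v, trans ω u v ≤ 1 := by
      intro u
      by_cases hd : deg ω u = 0
      · rw [trans_row_sum_zero hd]; norm_num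
      · rw [trans_row_sum hd]
    have h2 : ∑ u, π u * (1 - ∑ v, trans ω u v) = 0 := by
      simp only [mul_sub, mul_one]
      rw [Finset.sum_sub_distrib, hπsum, h1, sub_self]
    have h3 : π u₀ * (1 - ∑ v, trans ω u₀ v) ≤ 0 := by
      calc π u₀ * (1 - ∑ v, trans ω u₀ v)
          ≤ ∑ u, π u * (1 - ∑ v, trans ω u v) :=
            Finset.single_le_sum (f := fun u => π u * (1 - ∑ v, trans ω u v))
              (fun u _ => mul_nonneg (hπpos u).le (by linarith [hs u])) (Finset.mem_univ u₀)
        _ = 0 := h2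
    rw [trans_row_sum_zero h.symm, sub_zero, mul_one] at h3
    exact absurd h3 (not_le.mpr (hπpos u₀))

lemma tau_eq_tauR {ω : V → V → ℝ} (hnn : ∀ u v, 0 ≤ ω u v) (v : V) :
    tau ω v = tauR ω v := by
  rw [tau, tauR]
  apply Finset.sum_subset
  · intro f hf
    rw [Finset.mem_filter] at hf ⊢
    obtain ⟨-, h1, h2, h3⟩ := hf
    exact ⟨Finset.mem_univ _, h1, h3⟩
  · intro f hf hnf
    rw [Finset.mem_filter] at hf
    obtain ⟨-, h1, h3⟩ := hf
    have : ¬ ∀ x, x ≠ v → 0 < ω x (f x) := by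
      intro hpos
      exact hnf (Finset.mem_filter.mpr ⟨Finset.mem_univ _, h1, hpos, h3⟩)
    push_neg at this
    obtain ⟨x, hxv, hxp⟩ := this
    have hx0 : ω x (f x) = 0 := le_antisymm hxp (hnn x (f x))
    exact Finset.prod_eq_zero (Finset.mem_erase.mpr ⟨hxv, Finset.mem_univ _⟩) hx0

/-- Invariant for growing a spanning in-tree. -/
def Inv (ω : V → V → ℝ) (v : V) (S : Finset V) (f : V → V) : Prop :=
  f v = v ∧ (∀ x ∉ S, f x = x) ∧ (∀ x ∈ S, x ≠ v → 0 < ω x (f x)) ∧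
    (∀ x ∈ S, Reaches f x v) ∧ (∀ x ∈ S, f x ∈ S)

lemma crossing {ω : V → V → ℝ} {S : Finset V} {z v : V}
    (h : Relation.ReflTransGen (fun a b => 0 < ω a b) z v) (hv : v ∈ S) (hz : z ∉ S) :
    ∃ x ∉ S, ∃ y ∈ S, 0 < ω x y := by
  induction h using Relation.ReflTransGen.head_induction_on with
  | refl => exact absurd hv hz
  | @head a c hab hbc ih =>
      by_cases hc : c ∈ S
      · exact ⟨a, hz, c, hc, hab⟩
      · exact ih hc

lemma inv_extend {ω : V → V → ℝ} {v : V} {S : Finset V} {f : V → V}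
    (hsc : StronglyConnected ω) (hv : v ∈ S) (hInv : Inv ω v S f) (hne : S ≠ Finset.univ) :
    ∃ S' f', S ⊆ S' ∧ S.card < S'.card ∧ v ∈ S' ∧ Inv ω v S' f' := by
  obtain ⟨hfv, hout, hpos, hreach, hclose⟩ := hInv
  have : ∃ z, z ∉ S := by
    by_contra hall
    push_neg at hall
    exact hne (Finset.eq_univ_of_forall hall)
  obtain ⟨z, hz⟩ := this
  obtain ⟨x₀, hx₀, y₀, hy₀, hpe⟩ := crossing (hsc z v) hv hz
  have horb : ∀ x ∈ S, ∀ k, f^[k] x ∈ S := by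
    intro x hx k
    induction k with
    | zero => exact hx
    | succ n ih => rw [Function.iterate_succ_apply']; exact hclose _ ih
  have hnreach : ∀ x ∈ S, ¬ Reaches f x x₀ := by
    rintro x hx ⟨k, hk⟩
    exact hx₀ (hk ▸ horb x hx k)
  refine ⟨insert x₀ S, Function.update f x₀ y₀, Finset.subset_insert _ _,
    Finset.card_lt_card (Finset.ssubset_insert hx₀), Finset.mem_insert_of_mem hv,
    ?_, ?_, ?_, ?_, ?_⟩
  · rw [Function.update_of_ne (fun h => hx₀ (by rw [← h]; exact hv))]
    exact hfv
  · intro x hx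
    rw [Finset.mem_insert, not_or] at hx
    rw [Function.update_of_ne hx.1]
    exact hout x hx.2
  · intro x hx hxv
    rcases Finset.mem_insert.mp hx with rfl | hxS
    · rwa [Function.update_self]
    · rw [Function.update_of_ne (fun h => hx₀ (by rw [← h]; exact hxS))]
      exact hpos x hxS hxv
  · intro x hx
    rcases Finset.mem_insert.mp hx with rfl | hxS
    · apply reaches_of_apply
      rw [Function.update_self]
      exact (reaches_update_iff_of_not_reaches (hnreach y₀ hy₀)).mpr (hreach y₀ hy₀)
    · exact (reaches_update_iff_of_not_reaches (hnreach x hxS)).mpr (hreach x hxS)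
  · intro x hx
    rcases Finset.mem_insert.mp hx with rfl | hxS
    · rw [Function.update_self]
      exact Finset.mem_insert_of_mem hy₀
    · rw [Function.update_of_ne (fun h => hx₀ (by rw [← h]; exact hxS))]
      exact Finset.mem_insert_of_mem (hclose x hxS)

lemma intree_exists {ω : V → V → ℝ} (hsc : StronglyConnected ω) (v : V) :
    ∃ f : V → V, f v = v ∧ istree v f ∧ ∀ x, x ≠ v → 0 < ω x (f x) := by
  have main : ∀ n (S : Finset V) (f : V → V), Fintype.card V - S.card ≤ n → v ∈ S →
      Inv ω v S f → ∃ g, g v = v ∧ istree v g ∧ ∀ x, x ≠ v → 0 < ω x (g x) := by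
    intro n
    induction n with
    | zero =>
        intro S f hc hv hInv
        have hSuniv : S = Finset.univ := by
          apply Finset.eq_univ_of_card
          have := Finset.card_le_card (Finset.subset_univ S)
          rw [Finset.card_univ] at this
          omega
        obtain ⟨hfv, -, hpos, hreach, -⟩ := hInv
        exact ⟨f, hfv, fun y => hreach y (hSuniv ▸ Finset.mem_univ y),
          fun x hx => hpos x (hSuniv ▸ Finset.mem_univ x) hx⟩
    | succ n ih =>
        intro S f hc hv hInv
        by_cases hne : S = Finset.univ
        · subst hne
          obtain ⟨hfv, -, hpos, hreach, -⟩ := hInv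
          exact ⟨f, hfv, fun y => hreach y (Finset.mem_univ y),
            fun x hx => hpos x (Finset.mem_univ x) hx⟩
        · obtain ⟨S', f', hsub, hcard, hv', hInv'⟩ := inv_extend hsc hv hInv hne
          apply ih S' f' ?_ hv' hInv'
          omega
  apply main (Fintype.card V) {v} id (by omega) (Finset.mem_singleton_self v)
  refine ⟨rfl, fun x _ => rfl, ?_, ?_, ?_⟩
  · intro x hx hxv
    exact absurd (Finset.mem_singleton.mp hx) hxv
  · intro x hx
    rw [Finset.mem_singleton.mp hx]
    exact reaches_refl _ _
  · intro x hx
    rw [Finset.mem_singleton.mp hx]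
    exact Finset.mem_singleton_self v

lemma tauR_pos {ω : V → V → ℝ} (hnn : ∀ u v, 0 ≤ ω u v) (hsc : StronglyConnected ω)
    (v : V) : 0 < tauR ω v := by
  obtain ⟨f, hfv, hft, hfp⟩ := intree_exists hsc v
  apply Finset.sum_pos'
  · intro g hg
    exact Finset.prod_nonneg fun z _ => hnn z (g z)
  · refine ⟨f, Finset.mem_filter.mpr ⟨Finset.mem_univ _, hfv, hft⟩, ?_⟩
    exact Finset.prod_pos fun z hz => hfp z (Finset.mem_erase.mp hz).1

lemma CC_pos {ω : V → V → ℝ} (hnn : ∀ u v, 0 ≤ ω u v) (hsc : StronglyConnected ω)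
    {π : V → ℝ} (hπpos : ∀ v, 0 < π v) (hπsum : ∑ v, π v = 1)
    (hπstat : ∀ v, ∑ u, π u * trans ω u v = π v) : 0 < CC ω := by
  have hne : (Finset.univ : Finset V).Nonempty := by
    by_contra h
    rw [Finset.not_nonempty_iff_eq_empty] at h
    rw [h, Finset.sum_empty] at hπsum
    norm_num at hπsum
  apply Finset.sum_pos
  · intro b _
    exact mul_pos (deg_pos hnn hπpos hπsum hπstat b) (tauR_pos hnn hsc b)
  · exact hne

/-- Markov chain tree theorem: the stationary distribution is `deg · τ / C`. -/
lemma pi_formula {ω : V → V → ℝ} (hnn : ∀ u v, 0 ≤ ω u v) (hsc : StronglyConnected ω)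
    {π : V → ℝ} (hπpos : ∀ v, 0 < π v) (hπsum : ∑ v, π v = 1)
    (hπstat : ∀ v, ∑ u, π u * trans ω u v = π v) (v : V) :
    π v = deg ω v * tauR ω v / CC ω := by
  have hC : 0 < CC ω := CC_pos hnn hsc hπpos hπsum hπstat
  set μ : V → ℝ := fun b => deg ω b * tauR ω b / CC ω with hμ
  have hμpos : ∀ b, 0 < μ b :=
    fun b => div_pos (mul_pos (deg_pos hnn hπpos hπsum hπstat b) (tauR_pos hnn hsc b)) hC
  have hμsum : ∑ b, μ b = 1 := by
    rw [hμ, ← Finset.sum_div, ← CC, div_self hC.ne']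
  have hμstat : ∀ b, ∑ u, μ u * trans ω u b = μ b := by
    intro b
    have : ∀ u, μ u * trans ω u b = ω u b * tauR ω u / CC ω := by
      intro u
      have hdu : deg ω u ≠ 0 := (deg_pos hnn hπpos hπsum hπstat u).ne'
      rw [hμ]
      simp only [trans, Matrix.of_apply]
      field_simp
    simp only [this]
    rw [← Finset.sum_div, tau_recurrence, hμ]
  -- uniqueness via minimum ratio
  obtain ⟨u₀, -, hu₀⟩ := Finset.exists_min_image Finset.univ (fun u => π u / μ u)
    ⟨v, Finset.mem_univ v⟩
  set t := π u₀ / μ u₀ with ht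
  set x : V → ℝ := fun u => π u - t * μ u with hx
  have hxnn : ∀ u, 0 ≤ x u := by
    intro u
    have h1 : t ≤ π u / μ u := hu₀ u (Finset.mem_univ u)
    rw [hx]
    simp only
    rw [sub_nonneg]
    calc t * μ u ≤ π u / μ u * μ u := by
          apply mul_le_mul_of_nonneg_right h1 (hμpos u).le
      _ = π u := div_mul_cancel₀ _ (hμpos u).ne'
  have hx0 : x u₀ = 0 := by
    rw [hx]
    simp only
    rw [ht, div_mul_cancel₀ _ (hμpos u₀).ne', sub_self]
  have hxstat : ∀ b, ∑ u, x u * trans ω u b = x b := by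
    intro b
    rw [hx]
    simp only [sub_mul, Finset.sum_sub_distrib, hπstat b]
    rw [show ∑ u, t * μ u * trans ω u b = t * ∑ u, μ u * trans ω u b by
      rw [Finset.mul_sum]; exact Finset.sum_congr rfl fun u _ => by ring]
    rw [hμstat b]
  have hzero : ∀ z, Relation.ReflTransGen (fun a b => 0 < ω a b) z u₀ → x z = 0 := by
    intro z hpath
    induction hpath using Relation.ReflTransGen.head_induction_on with
    | refl => exact hx0
    | @head a c hab hbc ih =>
        have hc : x c = 0 := ih
        have hsum : ∑ u, x u * trans ω u c = 0 := by rw [hxstat c, hc]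
        have hterm : x a * trans ω a c = 0 := by
          have := (Finset.sum_eq_zero_iff_of_nonneg
            (fun u _ => mul_nonneg (hxnn u) (by
              simp only [trans, Matrix.of_apply]
              exact div_nonneg (hnn u c) (deg_pos hnn hπpos hπsum hπstat u).le))).mp hsum
          exact this a (Finset.mem_univ a)
        have htpos : 0 < trans ω a c := by
          simp only [trans, Matrix.of_apply]
          exact div_pos hab (deg_pos hnn hπpos hπsum hπstat a)
        rcases mul_eq_zero.mp hterm with h | h
        · exact h
        · exact absurd h htpos.ne'
    
  have hxall : ∀ z, x z = 0 := fun z => hzero z (hsc z u₀)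
  have hπμ : ∀ u, π u = t * μ u := by
    intro u
    have := hxall u
    rw [hx] at this
    simp only at this
    linarith
  have ht1 : t = 1 := by
    have : ∑ u, π u = ∑ u, t * μ u := Finset.sum_congr rfl fun u _ => hπμ u
    rw [hπsum, ← Finset.mul_sum, hμsum, mul_one] at this
    exact this.symm
  rw [hπμ v, ht1, one_mul, hμ]

lemma harmonic_const {ω : V → V → ℝ} (hnn : ∀ u v, 0 ≤ ω u v) (hsc : StronglyConnected ω)
    (hdeg : ∀ u, 0 < deg ω u) {x : V → ℝ}
    (hx : ∀ u, x u = ∑ w, trans ω u w * x w) (a b : V) : x a = x b := by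
  have hne : (Finset.univ : Finset V).Nonempty := ⟨a, Finset.mem_univ a⟩
  obtain ⟨u₀, -, hu₀⟩ := Finset.exists_max_image Finset.univ x hne
  have hmax : ∀ z, Relation.ReflTransGen (fun a b => 0 < ω a b) u₀ z → x z = x u₀ := by
    intro z hpath
    induction hpath with
    | refl => rfl
    | @tail bb cc hab hbc ih =>
        have hb : x bb = x u₀ := ih
        have hrow : ∑ w, trans ω bb w = 1 := trans_row_sum (hdeg bb).ne'
        have hsum0 : ∑ w, trans ω bb w * (x u₀ - x w) = 0 := by
          simp only [mul_sub, Finset.sum_sub_distrib]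
          rw [← Finset.sum_mul, hrow, one_mul, ← hx bb, hb, sub_self]
        have hterm : trans ω bb cc * (x u₀ - x cc) = 0 := by
          have := (Finset.sum_eq_zero_iff_of_nonneg
            (fun w _ => mul_nonneg (by
              simp only [trans, Matrix.of_apply]
              exact div_nonneg (hnn bb w) (hdeg bb).le)
              (by linarith [hu₀ w (Finset.mem_univ w)]))).mp hsum0
          exact this cc (Finset.mem_univ cc)
        have htpos : 0 < trans ω bb cc := by
          simp only [trans, Matrix.of_apply]
          exact div_pos hbc (hdeg bb)
        rcases mul_eq_zero.mp hterm with h | h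
        · exact absurd h htpos.ne'
        · linarith
  rw [hmax a (hsc u₀ a), hmax b (hsc u₀ b)]

end Graph
section Bridge
variable {V : Type*} [Fintype V] [DecidableEq V]

def F2P (v b : V) (f : V → V) : Prop :=
  f v = v ∧ f b = b ∧ ∀ y, Reaches f y v ∨ Reaches f y b

noncomputable def PhiM (ω : V → V → ℝ) (v u : V) : ℝ :=
  ∑ b ∈ Finset.univ.erase v, ∑ f ∈ Finset.univ.filter (F2P v b),
    deg ω b * forestWeight ω v b f * ind (Reaches f u v)

noncomputable def betaF (ω : V → V → ℝ) (π : V → ℝ) (v : V) : ℝ :=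
  ∑ b ∈ Finset.univ.erase v, ∑ f ∈ Finset.univ.filter (F2P v b),
    deg ω b * forestWeight ω v b f * (∑ z, π z * ind (Reaches f z v))

noncomputable def Asum (ω : V → V → ℝ) (π : V → ℝ) (v u : V) : ℝ :=
  ∑ b : V, ∑ f ∈ Finset.univ.filter (fun f : V → V => IsForest2 ω v b f ∧ Reaches f u v),
    (∑ z ∈ comp f b, π z) * deg ω b * forestWeight ω v b f

noncomputable def Bsum (ω : V → V → ℝ) (π : V → ℝ) (v u : V) : ℝ :=
  ∑ b : V, ∑ f ∈ Finset.univ.filter (fun f : V → V => IsForest2 ω v b f ∧ Reaches f u b),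
    (∑ z ∈ comp f v, π z) * deg ω b * forestWeight ω v b f

lemma ind_not (p : Prop) : ind (¬ p) = 1 - ind p := by
  by_cases h : p
  · rw [ind, ind, if_pos h, if_neg (not_not_intro h)]; norm_num
  · rw [ind, ind, if_neg h, if_pos h]; norm_num

lemma reach_dichotomy {f : V → V} {v b : V} (hfv : f v = v) (hfb : f b = b) (hb : b ≠ v)
    (hall : ∀ y, Reaches f y v ∨ Reaches f y b) (z : V) :
    Reaches f z b ↔ ¬ Reaches f z v :=
  ⟨fun h h' => hb (reaches_fix_unique hfb hfv h h'), fun h => (hall z).resolve_left h⟩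

lemma comp_sum (π : V → ℝ) (f : V → V) (b : V) :
    ∑ z ∈ comp f b, π z = ∑ z, π z * ind (Reaches f z b) := by
  rw [comp, Finset.sum_filter]
  apply Finset.sum_congr rfl
  intro z _
  rw [ind, mul_ite, mul_one, mul_zero]

/-- Convert one inner sum of `Asum`/`Bsum` to the positivity-free filter with indicator. -/
lemma inner_convert (ω : V → V → ℝ) (hnn : ∀ u v, 0 ≤ ω u v) {v b : V} (hb : b ≠ v)
    (R : (V → V) → Prop) (X : (V → V) → ℝ) :
    ∑ f ∈ Finset.univ.filter (fun f : V → V => IsForest2 ω v b f ∧ R f),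
        X f * forestWeight ω v b f
      = ∑ f ∈ Finset.univ.filter (F2P v b), X f * forestWeight ω v b f * ind (R f) := by
  have h1 : ∑ f ∈ Finset.univ.filter (fun f : V → V => IsForest2 ω v b f ∧ R f),
      X f * forestWeight ω v b f
      = ∑ f ∈ Finset.univ.filter (fun f : V → V => F2P v b f ∧ R f),
          X f * forestWeight ω v b f := by
    apply Finset.sum_subset
    · intro f hf
      rw [Finset.mem_filter] at hf ⊢
      obtain ⟨-, ⟨hne, h1, h2, h3, h4⟩, hR⟩ := hf
      exact ⟨Finset.mem_univ _, ⟨h1, h2, h4⟩, hR⟩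
    · intro f hf hnf
      rw [Finset.mem_filter] at hf
      obtain ⟨-, ⟨h1, h2, h4⟩, hR⟩ := hf
      have hnpos : ¬ ∀ x, x ≠ v → x ≠ b → 0 < ω x (f x) := by
        intro hpos
        exact hnf (Finset.mem_filter.mpr
          ⟨Finset.mem_univ _, ⟨Ne.symm hb, h1, h2, hpos, h4⟩, hR⟩)
      push_neg at hnpos
      obtain ⟨x, hxv, hxb, hxp⟩ := hnpos
      have hx0 : ω x (f x) = 0 := le_antisymm hxp (hnn x (f x))
      rw [forestWeight, Finset.prod_eq_zero (i := x) _ hx0, mul_zero]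
      exact Finset.mem_erase.mpr ⟨hxb, Finset.mem_erase.mpr ⟨hxv, Finset.mem_univ _⟩⟩
  rw [h1, ← Finset.filter_filter, Finset.sum_filter]
  apply Finset.sum_congr rfl
  intro f _
  rw [ind, mul_ite, mul_one, mul_zero]

lemma AB_eq (ω : V → V → ℝ) (hnn : ∀ u v, 0 ≤ ω u v) (π : V → ℝ)
    (hπsum : ∑ v, π v = 1) (v u : V) :
    Asum ω π v u - Bsum ω π v u = PhiM ω v u - betaF ω π v := by
  have hA : Asum ω π v u = ∑ b ∈ Finset.univ.erase v,
      ∑ f ∈ Finset.univ.filter (F2P v b),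
        (1 - ∑ z, π z * ind (Reaches f z v)) * deg ω b * forestWeight ω v b f
          * ind (Reaches f u v) := by
    rw [Asum, ← Finset.sum_subset (Finset.subset_univ (Finset.univ.erase v))]
    · apply Finset.sum_congr rfl
      intro b hb
      have hbv : b ≠ v := (Finset.mem_erase.mp hb).1
      rw [inner_convert ω hnn hbv (fun f => Reaches f u v)
        (fun f => (∑ z ∈ comp f b, π z) * deg ω b)]
      apply Finset.sum_congr rfl
      intro f hf
      rw [Finset.mem_filter] at hf
      obtain ⟨-, h1, h2, h4⟩ := hf
      have hcomp : ∑ z ∈ comp f b, π z = 1 - ∑ z, π z * ind (Reaches f z v) := by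
        rw [comp_sum]
        simp only [show ∀ z, π z * ind (Reaches f z b) = π z * (1 - ind (Reaches f z v)) from
          fun z => by rw [← ind_not, ind_congr (reach_dichotomy h1 h2 hbv h4 z)]]
        simp only [mul_sub, mul_one, Finset.sum_sub_distrib, hπsum]
      rw [hcomp]
    · intro b _ hbne
      have hbv : b = v := by
        by_contra h
        exact hbne (Finset.mem_erase.mpr ⟨h, Finset.mem_univ _⟩)
      apply Finset.sum_eq_zero
      intro f hf
      rw [Finset.mem_filter] at hf
      exact absurd rfl (hbv ▸ hf.2.1.1)
  have hB : Bsum ω π v u = ∑ b ∈ Finset.univ.erase v,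
      ∑ f ∈ Finset.univ.filter (F2P v b),
        (∑ z, π z * ind (Reaches f z v)) * deg ω b * forestWeight ω v b f
          * (1 - ind (Reaches f u v)) := by
    rw [Bsum, ← Finset.sum_subset (Finset.subset_univ (Finset.univ.erase v))]
    · apply Finset.sum_congr rfl
      intro b hb
      have hbv : b ≠ v := (Finset.mem_erase.mp hb).1
      rw [inner_convert ω hnn hbv (fun f => Reaches f u b)
        (fun f => (∑ z ∈ comp f v, π z) * deg ω b)]
      apply Finset.sum_congr rfl
      intro f hf
      rw [Finset.mem_filter] at hf
      obtain ⟨-, h1, h2, h4⟩ := hf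
      have hcomp : ∑ z ∈ comp f v, π z = ∑ z, π z * ind (Reaches f z v) := comp_sum π f v
      rw [hcomp, ind_congr (reach_dichotomy h1 h2 hbv h4 u), ind_not]
    · intro b _ hbne
      have hbv : b = v := by
        by_contra h
        exact hbne (Finset.mem_erase.mpr ⟨h, Finset.mem_univ _⟩)
      apply Finset.sum_eq_zero
      intro f hf
      rw [Finset.mem_filter] at hf
      exact absurd rfl (hbv ▸ hf.2.1.1)
  rw [hA, hB, PhiM, betaF, ← Finset.sum_sub_distrib, ← Finset.sum_sub_distrib]
  apply Finset.sum_congr rfl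
  intro b _
  rw [← Finset.sum_sub_distrib, ← Finset.sum_sub_distrib]
  apply Finset.sum_congr rfl
  intro f _
  ring

lemma pi_PhiM (ω : V → V → ℝ) (π : V → ℝ) (v : V) :
    ∑ u, π u * PhiM ω v u = betaF ω π v := by
  rw [betaF]
  rw [show ∑ u, π u * PhiM ω v u = ∑ b ∈ Finset.univ.erase v,
      ∑ f ∈ Finset.univ.filter (F2P v b), ∑ u, π u *
        (deg ω b * forestWeight ω v b f * ind (Reaches f u v)) from by
    simp only [PhiM, Finset.mul_sum]
    rw [Finset.sum_comm]
    apply Finset.sum_congr rfl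
    intro b _
    rw [Finset.sum_comm]]
  apply Finset.sum_congr rfl
  intro b _
  apply Finset.sum_congr rfl
  intro f _
  rw [Finset.mul_sum]
  apply Finset.sum_congr rfl
  intro u _
  ring

lemma F2P_update_iff {v b : V} (hb : b ≠ v) (m : V → V) :
    F2P v b (Function.update m b b) ↔ OKP v b m := by
  constructor
  · rintro ⟨h1, -, h3⟩
    refine ⟨by rwa [Function.update_of_ne (Ne.symm hb)] at h1, fun y => ?_⟩
    rcases h3 y with h | h
    · rcases reaches_of_update_or h with h' | h'
      · exact Or.inl h'
      · exact Or.inr h'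
    · exact Or.inr (reaches_update_self_iff.mp h)
  · rintro ⟨h1, hok⟩
    refine ⟨by rwa [Function.update_of_ne (Ne.symm hb)], Function.update_self _ _ _,
      fun y => ?_⟩
    by_cases hyb : Reaches m y b
    · exact Or.inr (reaches_update_self b hyb)
    · exact Or.inl ((reaches_update_iff_of_not_reaches hyb).mpr ((hok y).resolve_right hyb))

lemma forest_tree_weight (ω : V → V → ℝ) {v b : V} (hb : b ≠ v) (m : V → V) :
    treeWeight ω v m = forestWeight ω v b (Function.update m b b) * ω b (m b) := by
  have hbmem : b ∈ Finset.univ.erase v := Finset.mem_erase.mpr ⟨hb, Finset.mem_univ _⟩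
  rw [treeWeight, ← Finset.mul_prod_erase _ _ hbmem, forestWeight]
  rw [show ((Finset.univ.erase v).erase b).prod (fun z => ω z (Function.update m b b z))
      = ((Finset.univ.erase v).erase b).prod (fun z => ω z (m z)) from
    Finset.prod_congr rfl fun z hz => by
      rw [Function.update_of_ne (Finset.mem_erase.mp hz).1]]
  ring

lemma cnt_cast (v : V) (m : V → V) (u : V) :
    ∑ b ∈ Finset.univ.erase v, ind (OKP v b m ∧ AR v b m u) = (cnt v m u : ℝ) := by
  rw [cnt, Finset.card_filter]
  push_cast
  apply Finset.sum_congr rfl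
  intro b _
  rw [ind]
  by_cases h : OKP v b m ∧ AR v b m u <;> simp [h]

lemma cnt_zero_of_not_fix {v : V} {m : V → V} (hmv : m v ≠ v) (u : V) : cnt v m u = 0 := by
  rw [cnt, Finset.card_eq_zero]
  apply Finset.filter_false_of_mem
  rintro b hb ⟨⟨h1, -⟩, -⟩
  exact hmv h1

lemma phi_univ (ω : V → V → ℝ) (v x : V) :
    phi ω v x = ∑ m : V → V, treeWeight ω v m * (cnt v m x : ℝ) := by
  rw [phi]
  apply Finset.sum_subset (Finset.subset_univ _)
  intro m _ hm
  have hmv : m v ≠ v := by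
    intro h
    exact hm (Finset.mem_filter.mpr ⟨Finset.mem_univ _, h⟩)
  rw [cnt_zero_of_not_fix hmv, Nat.cast_zero, mul_zero]

lemma PhiM_eq_phi (ω : V → V → ℝ) (v u : V) : PhiM ω v u = phi ω v u := by
  have hinner : ∀ b ∈ Finset.univ.erase v,
      ∑ f ∈ Finset.univ.filter (F2P v b),
        deg ω b * forestWeight ω v b f * ind (Reaches f u v)
      = ∑ m : V → V, treeWeight ω v m * ind (OKP v b m ∧ AR v b m u) := by
    intro b hb
    have hbv : b ≠ v := (Finset.mem_erase.mp hb).1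
    have hstep : ∀ f : V → V, deg ω b * forestWeight ω v b f * ind (Reaches f u v)
        = ∑ c, forestWeight ω v b f * ind (Reaches f u v) * ω b c := by
      intro f
      rw [← Finset.mul_sum, show ∑ c, ω b c = deg ω b from rfl]
      ring
    simp only [hstep]
    rw [sum_update_reindex' b (F2P v b) (fun p h => h.2.1)
      (fun f c => forestWeight ω v b f * ind (Reaches f u v) * ω b c)]
    rw [Finset.sum_filter]
    apply Finset.sum_congr rfl
    intro m _
    by_cases hP : F2P v b (Function.update m b b)
    · rw [if_pos hP]
      have hok : OKP v b m := (F2P_update_iff hbv m).mp hP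
      have har : ind (Reaches (Function.update m b b) u v) = ind (AR v b m u) := rfl
      rw [har, forest_tree_weight ω hbv m]
      by_cases hA : AR v b m u
      · rw [ind, ind, if_pos hA, if_pos ⟨hok, hA⟩]
        ring
      · rw [ind, ind, if_neg hA, if_neg (fun h => hA h.2)]
        ring
    · rw [if_neg hP]
      have hok : ¬ OKP v b m := fun h => hP ((F2P_update_iff hbv m).mpr h)
      rw [ind, if_neg (fun h => hok h.1), mul_zero]
  rw [PhiM, Finset.sum_congr rfl hinner, Finset.sum_comm, phi_univ]
  apply Finset.sum_congr rfl
  intro m _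
  rw [← Finset.mul_sum, cnt_cast]

end Bridge
section MP
variable {V : Type*} [Fintype V] [DecidableEq V]

lemma mp_unique {M G₁ G₂ : Matrix V V ℝ} (h1 : IsMoorePenrose M G₁)
    (h2 : IsMoorePenrose M G₂) : G₁ = G₂ := by
  obtain ⟨a1, b1, c1, d1⟩ := h1
  obtain ⟨a2, b2, c2, d2⟩ := h2
  have hMG : M * G₁ = M * G₂ := by
    calc M * G₁ = (M * G₁)ᵀ := c1.symm
      _ = G₁ᵀ * Mᵀ := Matrix.transpose_mul _ _
      _ = G₁ᵀ * (M * G₂ * M)ᵀ := by rw [a2]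
      _ = G₁ᵀ * (Mᵀ * (M * G₂)ᵀ) := by rw [Matrix.transpose_mul (M * G₂) M]
      _ = (G₁ᵀ * Mᵀ) * (M * G₂)ᵀ := by rw [Matrix.mul_assoc]
      _ = (M * G₁)ᵀ * (M * G₂)ᵀ := by rw [Matrix.transpose_mul M G₁]
      _ = (M * G₁) * (M * G₂) := by rw [c1, c2]
      _ = (M * G₁ * M) * G₂ := by rw [Matrix.mul_assoc (M * G₁) M G₂]
      _ = M * G₂ := by rw [a1]
  have hGM : G₁ * M = G₂ * M := by
    calc G₁ * M = (G₁ * M)ᵀ := d1.symm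
      _ = Mᵀ * G₁ᵀ := Matrix.transpose_mul _ _
      _ = (M * (G₂ * M))ᵀ * G₁ᵀ := by rw [← Matrix.mul_assoc, a2]
      _ = ((G₂ * M)ᵀ * Mᵀ) * G₁ᵀ := by rw [Matrix.transpose_mul M (G₂ * M)]
      _ = (G₂ * M)ᵀ * (Mᵀ * G₁ᵀ) := by rw [Matrix.mul_assoc]
      _ = (G₂ * M)ᵀ * (G₁ * M)ᵀ := by rw [Matrix.transpose_mul G₁ M]
      _ = (G₂ * M) * (G₁ * M) := by rw [d1, d2]
      _ = G₂ * (M * G₁ * M) := by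
          rw [Matrix.mul_assoc G₂ M (G₁ * M), Matrix.mul_assoc M G₁ M]
      _ = G₂ * M := by rw [a1]
  calc G₁ = G₁ * M * G₁ := b1.symm
    _ = G₂ * M * G₁ := by rw [hGM]
    _ = G₂ * (M * G₁) := Matrix.mul_assoc _ _ _
    _ = G₂ * (M * G₂) := by rw [hMG]
    _ = G₂ * M * G₂ := (Matrix.mul_assoc _ _ _).symm
    _ = G₂ := b2

end MP
/-- **Forest formula for the normalized Green's function of a digraph.**
`𝒢` is the Moore–Penrose pseudoinverse of the normalized Laplacian
`ℒ = Π^{1/2}(I - P)Π^{-1/2}`, where `P = D⁻¹A` and `π` is the stationary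
distribution.  `π(T)` denotes the stationary measure of the component `T`. -/
theorem normalized_green_forest_formula_digraph
    {V : Type*} [Fintype V] [DecidableEq V]
    (ω : V → V → ℝ) (hnn : ∀ u v, 0 ≤ ω u v) (hloop : ∀ v, ω v v = 0)
    (hsc : StronglyConnected ω)
    (π : V → ℝ) (hπpos : ∀ v, 0 < π v) (hπsum : ∑ v, π v = 1)
    (hπstat : ∀ v, ∑ u, π u * trans ω u v = π v)
    (𝒢 : Matrix V V ℝ)
    (h𝒢 : IsMoorePenrose
      (Matrix.diagonal (fun w => Real.sqrt (π w)) * (1 - trans ω) *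
        Matrix.diagonal (fun w => (Real.sqrt (π w))⁻¹)) 𝒢)
    (u v : V) :
    𝒢 u v = (Real.sqrt (π u * π v) / tau ω v) *
      ((∑ b : V, ∑ f ∈ Finset.univ.filter
          (fun f : V → V => IsForest2 ω v b f ∧ Reaches f u v),
          (∑ z ∈ comp f b, π z) * deg ω b * forestWeight ω v b f)
       - (∑ b : V, ∑ f ∈ Finset.univ.filter
          (fun f : V → V => IsForest2 ω v b f ∧ Reaches f u b),
          (∑ z ∈ comp f v, π z) * deg ω b * forestWeight ω v b f)) := by
  classical
  set Lmat : Matrix V V ℝ := Matrix.diagonal (fun w => Real.sqrt (π w)) * (1 - trans ω) *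
      Matrix.diagonal (fun w => (Real.sqrt (π w))⁻¹) with hLmat
  set sq : V → ℝ := fun w => Real.sqrt (π w) with hsq
  have hspos : ∀ w, 0 < sq w := fun w => Real.sqrt_pos.mpr (hπpos w)
  have hssq : ∀ w, sq w * sq w = π w := fun w => Real.mul_self_sqrt (hπpos w).le
  have hdeg : ∀ x, 0 < deg ω x := deg_pos hnn hπpos hπsum hπstat
  have hC : 0 < CC ω := CC_pos hnn hsc hπpos hπsum hπstat
  have htv : ∀ y, 0 < tauR ω y := tauR_pos hnn hsc
  set Smat : Matrix V V ℝ := Matrix.of (fun x y => sq x * sq y) with hSmat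
  set N : Matrix V V ℝ := Matrix.of (fun p q =>
      Real.sqrt (π p * π q) / tau ω q * (Asum ω π q p - Bsum ω π q p)) with hNmat
  have hLe : ∀ x z, Lmat x z
      = sq x * (((1 : Matrix V V ℝ) - trans ω) x z * (sq z)⁻¹) := by
    intro x z
    rw [hLmat, Matrix.mul_diagonal, Matrix.diagonal_mul, mul_assoc]
  have hNe : ∀ p q, N p q = sq p * sq q * ((phi ω q p - betaF ω π q) / tauR ω q) := by
    intro p q
    show Real.sqrt (π p * π q) / tau ω q * (Asum ω π q p - Bsum ω π q p) = _
    rw [Real.sqrt_mul (hπpos p).le, tau_eq_tauR hnn, AB_eq ω hnn π hπsum,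
      PhiM_eq_phi]
    ring
  have hSe : ∀ x y, Smat x y = sq x * sq y := fun x y => rfl
  -- row identity packaged
  have hrow : ∀ x y, ∑ w, ω x w * (phi ω y x + tauR ω y - phi ω y w)
      = (if x = y then CC ω else 0) := by
    intro x y
    by_cases hxy : x = y
    · subst hxy
      rw [if_pos rfl]
      exact main_row_eq ω x
    · rw [if_neg hxy]
      exact main_row_ne ω hxy
  -- L * N = 1 - Smat
  have hLN : Lmat * N = 1 - Smat := by
    ext x y
    rw [Matrix.mul_apply, Matrix.sub_apply, Matrix.one_apply]
    have hterm : ∀ z, Lmat x z * N z y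
        = sq x * sq y * (((1 : Matrix V V ℝ) - trans ω) x z *
            ((phi ω y z - betaF ω π y) / tauR ω y)) := by
      intro z
      rw [hLe, hNe]
      rw [show sq x * (((1 : Matrix V V ℝ) - trans ω) x z * (sq z)⁻¹) *
          (sq z * sq y * ((phi ω y z - betaF ω π y) / tauR ω y))
          = ((sq z)⁻¹ * sq z) * (sq x * sq y * (((1 : Matrix V V ℝ) - trans ω) x z *
            ((phi ω y z - betaF ω π y) / tauR ω y))) from by ring]
      rw [inv_mul_cancel₀ (hspos z).ne', one_mul]
    rw [Finset.sum_congr rfl fun z _ => hterm z, ← Finset.mul_sum]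
    have hdx : deg ω x ≠ 0 := (hdeg x).ne'
    have hty : tauR ω y ≠ 0 := (htv y).ne'
    have hexp : ∀ z, ((1 : Matrix V V ℝ) - trans ω) x z *
        ((phi ω y z - betaF ω π y) / tauR ω y)
        = (if x = z then ((phi ω y z - betaF ω π y) / tauR ω y) else 0)
          - (ω x z / deg ω x) * ((phi ω y z - betaF ω π y) / tauR ω y) := by
      intro z
      rw [Matrix.sub_apply, Matrix.one_apply]
      simp only [trans, Matrix.of_apply]
      by_cases hxz : x = z
      · rw [if_pos hxz, if_pos hxz]; ring
      · rw [if_neg hxz, if_neg hxz]; ring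
    rw [Finset.sum_congr rfl fun z _ => hexp z, Finset.sum_sub_distrib,
      Finset.sum_ite_eq, if_pos (Finset.mem_univ x)]
    have h2 : ∑ z, (ω x z / deg ω x) * ((phi ω y z - betaF ω π y) / tauR ω y)
        = (∑ z, ω x z * (phi ω y z - betaF ω π y)) / (deg ω x * tauR ω y) := by
      rw [Finset.sum_div]
      exact Finset.sum_congr rfl fun z _ => div_mul_div_comm _ _ _ _
    have hSdeg : ∑ w, ω x w = deg ω x := rfl
    have hS' : ∑ w, ω x w * phi ω y w
        = deg ω x * (phi ω y x + tauR ω y) - (if x = y then CC ω else 0) := by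
      have h := hrow x y
      simp only [mul_sub, mul_add, Finset.sum_sub_distrib, Finset.sum_add_distrib,
        ← Finset.sum_mul] at h
      rw [hSdeg] at h
      linarith
    have h3 : ∑ z, ω x z * (phi ω y z - betaF ω π y)
        = deg ω x * (phi ω y x + tauR ω y) - (if x = y then CC ω else 0)
          - deg ω x * betaF ω π y := by
      simp only [mul_sub, Finset.sum_sub_distrib]
      rw [hS', ← Finset.sum_mul, hSdeg]
    rw [h2, h3]
    by_cases hxy : x = y
    · subst hxy
      rw [if_pos rfl, if_pos rfl, hSe, hssq]
      have hπx : π x = deg ω x * tauR ω x / CC ω :=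
        pi_formula hnn hsc hπpos hπsum hπstat x
      rw [hπx]
      field_simp
      ring
    · rw [if_neg hxy, if_neg hxy, hSe]
      field_simp
      ring
  -- Smat * Lmat = 0
  have hSL : Smat * Lmat = 0 := by
    ext x y
    rw [Matrix.mul_apply, Matrix.zero_apply]
    have hterm : ∀ z, Smat x z * Lmat z y
        = sq x * (sq y)⁻¹ * (π z * ((1 : Matrix V V ℝ) - trans ω) z y) := by
      intro z
      rw [hSe, hLe, ← hssq z]
      ring
    rw [Finset.sum_congr rfl fun z _ => hterm z, ← Finset.mul_sum]
    have : ∑ z, π z * ((1 : Matrix V V ℝ) - trans ω) z y = 0 := by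
      have hexp : ∀ z, π z * ((1 : Matrix V V ℝ) - trans ω) z y
          = (if z = y then π z else 0) - π z * trans ω z y := by
        intro z
        rw [Matrix.sub_apply, Matrix.one_apply]
        by_cases hzy : z = y
        · rw [if_pos hzy, if_pos hzy]; ring
        · rw [if_neg hzy, if_neg hzy]; ring
      rw [Finset.sum_congr rfl fun z _ => hexp z, Finset.sum_sub_distrib,
        Finset.sum_ite_eq', if_pos (Finset.mem_univ y), hπstat y, sub_self]
    rw [this, mul_zero]
  -- Lmat * Smat = 0
  have hLS : Lmat * Smat = 0 := by
    ext x y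
    rw [Matrix.mul_apply, Matrix.zero_apply]
    have hterm : ∀ z, Lmat x z * Smat z y
        = sq x * sq y * ((1 : Matrix V V ℝ) - trans ω) x z := by
      intro z
      rw [hSe, hLe]
      rw [show sq x * (((1 : Matrix V V ℝ) - trans ω) x z * (sq z)⁻¹) * (sq z * sq y)
          = ((sq z)⁻¹ * sq z) * (sq x * sq y * ((1 : Matrix V V ℝ) - trans ω) x z)
          from by ring]
      rw [inv_mul_cancel₀ (hspos z).ne', one_mul]
    rw [Finset.sum_congr rfl fun z _ => hterm z, ← Finset.mul_sum]
    have : ∑ z, ((1 : Matrix V V ℝ) - trans ω) x z = 0 := by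
      have hexp : ∀ z, ((1 : Matrix V V ℝ) - trans ω) x z
          = (if x = z then 1 else 0) - trans ω x z := fun z => by
        rw [Matrix.sub_apply, Matrix.one_apply]
      rw [Finset.sum_congr rfl fun z _ => hexp z, Finset.sum_sub_distrib,
        Finset.sum_ite_eq, if_pos (Finset.mem_univ x), trans_row_sum (hdeg x).ne',
        sub_self]
    rw [this, mul_zero]
  -- Smat * N = 0
  have hSN : Smat * N = 0 := by
    ext x y
    rw [Matrix.mul_apply, Matrix.zero_apply]
    have hterm : ∀ z, Smat x z * N z y
        = sq x * sq y * (π z * (phi ω y z - betaF ω π y) / tauR ω y) := by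
      intro z
      rw [hSe, hNe, ← hssq z]
      ring
    rw [Finset.sum_congr rfl fun z _ => hterm z, ← Finset.mul_sum]
    have hpb : ∑ z, π z * phi ω y z = betaF ω π y := by
      have := pi_PhiM ω π y
      simp only [PhiM_eq_phi] at this
      exact this
    have : ∑ z, π z * (phi ω y z - betaF ω π y) / tauR ω y = 0 := by
      rw [← Finset.sum_div]
      simp only [mul_sub, Finset.sum_sub_distrib]
      rw [hpb, ← Finset.sum_mul, hπsum, one_mul, sub_self, zero_div]
    rw [this, mul_zero]
  -- Smat * Smat = Smat
  have hSS : Smat * Smat = Smat := by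
    ext x y
    rw [Matrix.mul_apply]
    have hterm : ∀ z, Smat x z * Smat z y = sq x * sq y * π z := by
      intro z
      rw [hSe, hSe, ← hssq z]
      ring
    rw [Finset.sum_congr rfl fun z _ => hterm z, ← Finset.mul_sum, hπsum, mul_one, hSe]
  -- N * Lmat = 1 - Smat via kernel argument
  have hLK : Lmat * (N * Lmat - 1 + Smat) = 0 := by
    rw [Matrix.mul_add, Matrix.mul_sub, Matrix.mul_one, ← Matrix.mul_assoc, hLN,
      Matrix.sub_mul, Matrix.one_mul, hLS, hSL]
    abel
  have hSK : Smat * (N * Lmat - 1 + Smat) = 0 := by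
    rw [Matrix.mul_add, Matrix.mul_sub, Matrix.mul_one, ← Matrix.mul_assoc, hSN,
      Matrix.zero_mul, hSS]
    abel
  have hK0 : N * Lmat - 1 + Smat = 0 := by
    set K2 : Matrix V V ℝ := N * Lmat - 1 + Smat with hK2
    ext p y
    rw [Matrix.zero_apply]
    have hharm : ∀ xx, (fun z => K2 z y * (sq z)⁻¹) xx
        = ∑ w, trans ω xx w * ((fun z => K2 z y * (sq z)⁻¹) w) := by
      intro xx
      have h0 : (Lmat * K2) xx y = 0 := by rw [hLK, Matrix.zero_apply]
      rw [Matrix.mul_apply] at h0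
      have hterm : ∀ z, Lmat xx z * K2 z y
          = sq xx * (((1 : Matrix V V ℝ) - trans ω) xx z * (K2 z y * (sq z)⁻¹)) := by
        intro z
        rw [hLe]
        ring
      rw [Finset.sum_congr rfl fun z _ => hterm z, ← Finset.mul_sum] at h0
      have h1 : ∑ z, ((1 : Matrix V V ℝ) - trans ω) xx z * (K2 z y * (sq z)⁻¹) = 0 := by
        rcases mul_eq_zero.mp h0 with h | h
        · exact absurd h (hspos xx).ne'
        · exact h
      have hexp : ∀ z, ((1 : Matrix V V ℝ) - trans ω) xx z * (K2 z y * (sq z)⁻¹)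
          = (if xx = z then (K2 z y * (sq z)⁻¹) else 0)
            - trans ω xx z * (K2 z y * (sq z)⁻¹) := by
        intro z
        rw [Matrix.sub_apply, Matrix.one_apply]
        by_cases hxz : xx = z
        · rw [if_pos hxz, if_pos hxz]; ring
        · rw [if_neg hxz, if_neg hxz]; ring
      rw [Finset.sum_congr rfl fun z _ => hexp z, Finset.sum_sub_distrib,
        Finset.sum_ite_eq, if_pos (Finset.mem_univ xx), sub_eq_zero] at h1
      exact h1
    have hz := harmonic_const hnn hsc hdeg hharm
    have hc0 : K2 p y * (sq p)⁻¹ = 0 := by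
      have h1 : (Smat * K2) p y = 0 := by rw [hSK, Matrix.zero_apply]
      rw [Matrix.mul_apply] at h1
      have hterm : ∀ w, Smat p w * K2 w y = sq p * (π w * (K2 p y * (sq p)⁻¹)) := by
        intro w
        rw [show K2 p y * (sq p)⁻¹ = K2 w y * (sq w)⁻¹ from hz p w, hSe, ← hssq w]
        have hsw : sq w ≠ 0 := (hspos w).ne'
        field_simp
      rw [Finset.sum_congr rfl fun w _ => hterm w, ← Finset.mul_sum] at h1
      have h2 : ∑ w, π w * (K2 p y * (sq p)⁻¹) = K2 p y * (sq p)⁻¹ := by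
        rw [← Finset.sum_mul, hπsum, one_mul]
      rw [h2] at h1
      rcases mul_eq_zero.mp h1 with h | h
      · exact absurd h (hspos p).ne'
      · exact h
    rcases mul_eq_zero.mp hc0 with h | h
    · exact h
    · exact absurd h (inv_ne_zero (hspos p).ne')
  have hNL : N * Lmat = 1 - Smat := by
    have h2 : N * Lmat - (1 - Smat) = N * Lmat - 1 + Smat := by abel
    rw [← sub_eq_zero, h2, hK0]
  -- transpose of Smat
  have hST : Smatᵀ = Smat := by
    ext x y
    rw [Matrix.transpose_apply, hSe, hSe]
    ring
  -- Moore-Penrose conditions for N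
  have hMPN : IsMoorePenrose Lmat N := by
    refine ⟨?_, ?_, ?_, ?_⟩
    · rw [hLN, Matrix.sub_mul, Matrix.one_mul, hSL, sub_zero]
    · rw [hNL, Matrix.sub_mul, Matrix.one_mul, hSN, sub_zero]
    · rw [hLN, Matrix.transpose_sub, Matrix.transpose_one, hST]
    · rw [hNL, Matrix.transpose_sub, Matrix.transpose_one, hST]
  have hGN : 𝒢 = N := mp_unique h𝒢 hMPN
  rw [hGN]
  rfl

end Paper
end
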